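/- arXiv:2209.04540 — 9 statements merged into one kernel-verified Lean document; each statement's English description precedes it below -/
import Mathlib

section
/- If A ⊂ ℝⁿ and B ⊂ ℝᵐ are bounded measurable sets, and A weakly tiles its complement in ℝⁿ (i.e., there is a positive locally finite Borel measure ν₁ with 𝟙_A ∗ ν₁ = 𝟙_{Aᶜ} a.e.) and B weakly tiles its complement in ℝᵐ, then the product Ω = A × B weakly tiles its complement in ℝⁿ⁺ᵐ by translations. -/
open MeasureTheory Set
open scoped ENNReal NNReal

noncomputable section

/-- A set `A` weakly tiles its complement by translations: there is a positive,
locally finite Borel measure `ν` with `𝟙_A ∗ ν = 𝟙_{Aᶜ}` a.e. -/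
def WeaklyTilesCompl {E : Type*} [MeasureSpace E] [TopologicalSpace E] [Sub E]
    (A : Set E) : Prop :=
  ∃ ν : Measure E, IsLocallyFiniteMeasure ν ∧
    ∀ᵐ x : E, (∫ t, Set.indicator A (fun _ => (1 : ℝ)) (x - t) ∂ν)
      = Set.indicator Aᶜ (fun _ => (1 : ℝ)) x

namespace ProdTileAux

/-- A locally finite measure on `Fin k → ℝ` is finite on bounded sets. -/
lemma measure_lt_top_of_isBounded {k : ℕ} (μ : Measure (Fin k → ℝ))
    [IsLocallyFiniteMeasure μ] {S : Set (Fin k → ℝ)} (hS : Bornology.IsBounded S) :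
    μ S < ⊤ :=
  lt_of_le_of_lt (measure_mono subset_closure) hS.isCompact_closure.measure_lt_top

/-- The preimage of a bounded set under `t ↦ x - t` is bounded. -/
lemma isBounded_preimage_sub {k : ℕ} {S : Set (Fin k → ℝ)} (hS : Bornology.IsBounded S)
    (x : Fin k → ℝ) : Bornology.IsBounded ((fun t => x - t) ⁻¹' S) := by
  obtain ⟨C, hC⟩ := isBounded_iff_forall_norm_le.1 hS
  refine isBounded_iff_forall_norm_le.2 ⟨‖x‖ + C, fun t ht => ?_⟩
  have h1 : ‖x - t‖ ≤ C := hC _ ht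
  calc ‖t‖ = ‖x - (x - t)‖ := by ring_nf
    _ ≤ ‖x‖ + ‖x - t‖ := norm_sub_le _ _
    _ ≤ ‖x‖ + C := by linarith

lemma integrable_shift {k : ℕ} (μ : Measure (Fin k → ℝ)) [IsLocallyFiniteMeasure μ]
    {S : Set (Fin k → ℝ)} (hSm : MeasurableSet S) (hSb : Bornology.IsBounded S)
    (x : Fin k → ℝ) :
    Integrable (fun t => S.indicator (fun _ => (1 : ℝ)) (x - t)) μ := by
  have hset : MeasurableSet ((fun t => x - t) ⁻¹' S) :=
    hSm.preimage (measurable_const.sub measurable_id)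
  have heq : (fun t => S.indicator (fun _ => (1 : ℝ)) (x - t))
      = ((fun t => x - t) ⁻¹' S).indicator (fun _ => (1 : ℝ)) := by
    ext t
    by_cases h : x - t ∈ S <;> simp [Set.indicator_apply, h]
  rw [heq, integrable_indicator_iff hset]
  refine integrableOn_const ?_
  exact (measure_lt_top_of_isBounded μ (isBounded_preimage_sub hSb x)).ne

end ProdTileAux

open ProdTileAux

theorem product_of_weak_tilings (n m : ℕ) (A : Set (Fin n → ℝ)) (B : Set (Fin m → ℝ))
    (hAb : Bornology.IsBounded A) (hAm : MeasurableSet A)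
    (hBb : Bornology.IsBounded B) (hBm : MeasurableSet B)
    (hA : WeaklyTilesCompl A) (hB : WeaklyTilesCompl B) :
    WeaklyTilesCompl (A ×ˢ B) := by
  classical
  obtain ⟨ν₁, hν₁fin, hν₁⟩ := hA
  obtain ⟨ν₂, hν₂fin, hν₂⟩ := hB
  haveI := hν₁fin
  haveI := hν₂fin
  have hBfin : volume B < ⊤ := measure_lt_top_of_isBounded volume hBb
  -- Step 1: `volume B > 0`.
  have hBpos : 0 < volume B := by
    by_contra h
    push_neg at h
    have hB0 : volume B = 0 := le_antisymm h zero_le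
    -- By Fubini, for a.e. `y`, `ν₂ {t | y - t ∈ B} = 0`.
    have hmeas : Measurable fun p : (Fin m → ℝ) × (Fin m → ℝ) =>
        B.indicator (fun _ => (1 : ℝ≥0∞)) (p.1 - p.2) :=
      (measurable_const.indicator hBm).comp (measurable_fst.sub measurable_snd)
    have hz : ∀ t : Fin m → ℝ, (∫⁻ y, B.indicator (fun _ => (1 : ℝ≥0∞)) (y - t) ∂volume) = 0 := by
      intro t
      rw [lintegral_sub_right_eq_self (fun y => B.indicator (fun _ => (1 : ℝ≥0∞)) y) t]
      have : (∫⁻ y, B.indicator (fun _ => (1 : ℝ≥0∞)) y ∂volume) = volume B :=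
        lintegral_indicator_one hBm
      rw [this, hB0]
    have hswap : (∫⁻ y, (∫⁻ t, B.indicator (fun _ => (1 : ℝ≥0∞)) (y - t) ∂ν₂) ∂volume) = 0 := by
      rw [lintegral_lintegral_swap hmeas.aemeasurable]
      simp [hz]
    have hmeas2 : Measurable fun y : Fin m → ℝ =>
        ∫⁻ t, B.indicator (fun _ => (1 : ℝ≥0∞)) (y - t) ∂ν₂ :=
      hmeas.lintegral_prod_right'
    have hae0 : ∀ᵐ y : Fin m → ℝ, (∫⁻ t, B.indicator (fun _ => (1 : ℝ≥0∞)) (y - t) ∂ν₂) = 0 :=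
      (lintegral_eq_zero_iff hmeas2).1 hswap
    have haeBc : ∀ᵐ y : Fin m → ℝ, y ∈ Bᶜ := by
      rw [ae_iff]
      simpa using hB0
    have hfalse : ∀ᵐ y : Fin m → ℝ, False := by
      filter_upwards [hae0, haeBc, hν₂] with y h0 hc heq
      -- the integrand is a.e. zero w.r.t. ν₂
      have hNmeas : MeasurableSet ((fun t => y - t) ⁻¹' B) :=
        hBm.preimage (measurable_const.sub measurable_id)
      have hind : ∀ t : Fin m → ℝ, B.indicator (fun _ => (1 : ℝ≥0∞)) (y - t)
          = ((fun t => y - t) ⁻¹' B).indicator (1 : (Fin m → ℝ) → ℝ≥0∞) t := by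
        intro t; by_cases h : y - t ∈ B <;> simp [Set.indicator_apply, h]
      have hN0 : ν₂ ((fun t => y - t) ⁻¹' B) = 0 := by
        have := h0
        simp_rw [hind] at this
        rwa [lintegral_indicator_one hNmeas] at this
      have hzero : (∫ t, B.indicator (fun _ => (1 : ℝ)) (y - t) ∂ν₂) = 0 := by
        have hev : ∀ᵐ t ∂ν₂, B.indicator (fun _ => (1 : ℝ)) (y - t) = 0 := by
          rw [ae_iff]
          refine measure_mono_null (fun t ht => ?_) hN0
          simp only [mem_setOf_eq] at ht
          by_contra hmem
          exact ht (Set.indicator_of_notMem (by exact hmem) _)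
        calc (∫ t, B.indicator (fun _ => (1 : ℝ)) (y - t) ∂ν₂)
            = ∫ _t, (0 : ℝ) ∂ν₂ := integral_congr_ae hev
          _ = 0 := integral_zero _ _
      rw [heq] at hzero
      rw [Set.indicator_of_mem hc] at hzero
      exact one_ne_zero hzero
    have hne : (volume : Measure (Fin m → ℝ)) ≠ 0 := by
      intro h0
      have h1 : (0 : ℝ≥0∞) < (volume : Measure (Fin m → ℝ)) univ :=
        isOpen_univ.measure_pos volume univ_nonempty
      rw [h0] at h1
      simp at h1
    haveI : (ae (volume : Measure (Fin m → ℝ))).NeBot := ae_neBot.2 hne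
    obtain ⟨y, hy⟩ := hfalse.exists
    exact hy
  -- Step 2: construct the measure.
  set c : ℝ≥0∞ := (volume B)⁻¹ with hc_def
  have hc : c ≠ ⊤ := ENNReal.inv_ne_top.2 hBpos.ne'
  set σ : Measure (Fin m → ℝ) := c • volume with hσ_def
  haveI hσfin : IsLocallyFiniteMeasure σ := by
    refine ⟨fun x => ⟨Metric.ball x 1, Metric.ball_mem_nhds x one_pos, ?_⟩⟩
    rw [hσ_def, Measure.smul_apply, smul_eq_mul]
    exact ENNReal.mul_lt_top hc.lt_top measure_ball_lt_top
  set ν : Measure ((Fin n → ℝ) × (Fin m → ℝ)) := ν₁.prod σ + (Measure.dirac (0 : Fin n → ℝ)).prod ν₂ with hν_def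
  have hνfin : IsLocallyFiniteMeasure ν := by
    refine ⟨fun p => ?_⟩
    obtain ⟨u, hu, huf⟩ := ν₁.finiteAt_nhds p.1
    obtain ⟨v, hv, hvf⟩ := ν₂.finiteAt_nhds p.2
    obtain ⟨w, hw, hwf⟩ := σ.finiteAt_nhds p.2
    refine ⟨u ×ˢ (w ∩ v), prod_mem_nhds hu (Filter.inter_mem hw hv), ?_⟩
    rw [hν_def, Measure.add_apply, Measure.prod_prod, Measure.prod_prod]
    have h1 : ν₁ u * σ (w ∩ v) < ⊤ :=
      ENNReal.mul_lt_top huf ((measure_mono inter_subset_left).trans_lt hwf)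
    have h2 : (Measure.dirac (0 : Fin n → ℝ)) u * ν₂ (w ∩ v) < ⊤ :=
      ENNReal.mul_lt_top (measure_lt_top _ _)
        ((measure_mono inter_subset_right).trans_lt hvf)
    exact ENNReal.add_lt_top.2 ⟨h1, h2⟩
  refine ⟨ν, hνfin, ?_⟩
  -- Step 3: the a.e. identity.
  rw [MeasureTheory.Measure.volume_eq_prod]
  have h1 : ∀ᵐ z : (Fin n → ℝ) × (Fin m → ℝ) ∂((volume : Measure (Fin n → ℝ)).prod volume),
      (∫ t, A.indicator (fun _ => (1 : ℝ)) (z.1 - t) ∂ν₁)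
        = Aᶜ.indicator (fun _ => (1 : ℝ)) z.1 := by
    rw [ae_iff] at hν₁ ⊢
    have heq : {z : (Fin n → ℝ) × (Fin m → ℝ) | ¬ (∫ t, A.indicator (fun _ => (1 : ℝ)) (z.1 - t) ∂ν₁)
        = Aᶜ.indicator (fun _ => (1 : ℝ)) z.1}
        = {x : Fin n → ℝ | ¬ (∫ t, A.indicator (fun _ => (1 : ℝ)) (x - t) ∂ν₁)
            = Aᶜ.indicator (fun _ => (1 : ℝ)) x} ×ˢ (univ : Set (Fin m → ℝ)) := by
      ext z; simp [Set.mem_prod]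
    rw [heq, Measure.prod_prod, hν₁, zero_mul]
  have h2 : ∀ᵐ z : (Fin n → ℝ) × (Fin m → ℝ) ∂((volume : Measure (Fin n → ℝ)).prod volume),
      (∫ t, B.indicator (fun _ => (1 : ℝ)) (z.2 - t) ∂ν₂)
        = Bᶜ.indicator (fun _ => (1 : ℝ)) z.2 := by
    rw [ae_iff] at hν₂ ⊢
    have heq : {z : (Fin n → ℝ) × (Fin m → ℝ) | ¬ (∫ t, B.indicator (fun _ => (1 : ℝ)) (z.2 - t) ∂ν₂)
        = Bᶜ.indicator (fun _ => (1 : ℝ)) z.2}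
        = (univ : Set (Fin n → ℝ)) ×ˢ {y : Fin m → ℝ | ¬ (∫ t, B.indicator (fun _ => (1 : ℝ)) (y - t) ∂ν₂)
            = Bᶜ.indicator (fun _ => (1 : ℝ)) y} := by
      ext z; simp [Set.mem_prod]
    rw [heq, Measure.prod_prod, hν₂, mul_zero]
  filter_upwards [h1, h2] with z hz1 hz2
  obtain ⟨x, y⟩ := z
  simp only at hz1 hz2
  set f : (Fin n → ℝ) → ℝ := fun s => A.indicator (fun _ => (1 : ℝ)) (x - s) with hf_def
  set g : (Fin m → ℝ) → ℝ := fun t => B.indicator (fun _ => (1 : ℝ)) (y - t) with hg_def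
  have hfg : ∀ p : (Fin n → ℝ) × (Fin m → ℝ), (A ×ˢ B).indicator (fun _ => (1 : ℝ)) ((x, y) - p)
      = f p.1 * g p.2 := by
    intro p
    have hsub : (x, y) - p = (x - p.1, y - p.2) := rfl
    rw [hsub, hf_def, hg_def]
    by_cases h1 : x - p.1 ∈ A <;> by_cases h2 : y - p.2 ∈ B <;>
      simp [Set.indicator_apply, Set.mem_prod, h1, h2]
  have hintf : Integrable f ν₁ := integrable_shift ν₁ hAm hAb x
  have hintg : Integrable g σ := integrable_shift σ hBm hBb y
  have hintf' : Integrable f (Measure.dirac (0 : Fin n → ℝ)) := integrable_shift _ hAm hAb x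
  have hintg' : Integrable g ν₂ := integrable_shift ν₂ hBm hBb y
  have hgσ : (∫ t, g t ∂σ) = 1 := by
    rw [hσ_def, integral_smul_measure, hg_def]
    have h1 : (∫ t, B.indicator (fun _ => (1 : ℝ)) (y - t) ∂(volume : Measure (Fin m → ℝ)))
        = ∫ t, B.indicator (fun _ => (1 : ℝ)) t ∂(volume : Measure (Fin m → ℝ)) :=
      integral_sub_left_eq_self _ _ y
    have h2 : (∫ t, B.indicator (fun _ => (1 : ℝ)) t ∂(volume : Measure (Fin m → ℝ)))
        = (volume B).toReal := integral_indicator_one hBm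
    rw [h1, h2, hc_def, smul_eq_mul, ENNReal.toReal_inv]
    exact inv_mul_cancel₀ (ENNReal.toReal_pos hBpos.ne' hBfin.ne).ne'
  calc (∫ p, (A ×ˢ B).indicator (fun _ => (1 : ℝ)) ((x, y) - p) ∂ν)
      = ∫ p : (Fin n → ℝ) × (Fin m → ℝ), f p.1 * g p.2 ∂ν := by simp_rw [hfg]
    _ = (∫ p : (Fin n → ℝ) × (Fin m → ℝ), f p.1 * g p.2 ∂(ν₁.prod σ))
        + ∫ p : (Fin n → ℝ) × (Fin m → ℝ), f p.1 * g p.2 ∂((Measure.dirac (0 : Fin n → ℝ)).prod ν₂) := by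
        rw [hν_def]
        exact integral_add_measure (hintf.mul_prod hintg) (hintf'.mul_prod hintg')
    _ = (∫ s, f s ∂ν₁) * (∫ t, g t ∂σ)
        + (∫ s, f s ∂(Measure.dirac (0 : Fin n → ℝ))) * ∫ t, g t ∂ν₂ := by
        rw [integral_prod_mul, integral_prod_mul]
    _ = Aᶜ.indicator (fun _ => (1 : ℝ)) x * 1
        + A.indicator (fun _ => (1 : ℝ)) x * Bᶜ.indicator (fun _ => (1 : ℝ)) y := by
        rw [hz1, hgσ, hz2, integral_dirac f 0, hf_def]
        simp
    _ = (A ×ˢ B)ᶜ.indicator (fun _ => (1 : ℝ)) (x, y) := by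
        by_cases hx : x ∈ A <;> by_cases hy : y ∈ B <;>
          simp [Set.indicator_apply, Set.mem_prod, hx, hy]
end
end

section
/- If A ⊂ ℝⁿ and B ⊂ ℝᵐ are bounded measurable sets and the product Ω = A × B weakly tiles its complement in ℝⁿ × ℝᵐ by translations, then A weakly tiles its complement in ℝⁿ and B weakly tiles its complement in ℝᵐ. -/
open MeasureTheory Set
open scoped ENNReal

noncomputable section

lemma aux_slice (n m : ℕ) (A : Set (Fin n → ℝ)) (B : Set (Fin m → ℝ))
    (hAm : MeasurableSet A) (hBm : MeasurableSet B) (hBb : Bornology.IsBounded B)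
    (ν : Measure ((Fin n → ℝ) × (Fin m → ℝ))) (hlf : IsLocallyFiniteMeasure ν)
    (hν : ∀ᵐ z : (Fin n → ℝ) × (Fin m → ℝ),
      (∫ t, Set.indicator (A ×ˢ B) (fun _ => (1 : ℝ)) (z - t) ∂ν)
        = Set.indicator (A ×ˢ B)ᶜ (fun _ => (1 : ℝ)) z) :
    WeaklyTilesCompl A := by
  haveI := hlf
  haveI : SigmaFinite ν := inferInstance
  have hΩm : MeasurableSet (A ×ˢ B) := hAm.prod hBm
  haveI hinv : (volume : Measure ((Fin n → ℝ) × (Fin m → ℝ))).IsAddRightInvariant := by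
    rw [Measure.volume_eq_prod]; infer_instance
  -- step 1 : volume B ≠ 0
  have hB0 : (volume B) ≠ 0 := by
    intro h0
    have hΩ0 : volume (A ×ˢ B) = 0 := by
      rw [Measure.volume_eq_prod]
      exact measure_mono_null (Set.prod_mono_left (Set.subset_univ A))
        (by rw [Measure.prod_prod, h0, mul_zero])
    have hmeas : Measurable fun p : ((Fin n → ℝ) × (Fin m → ℝ)) × ((Fin n → ℝ) × (Fin m → ℝ)) =>
        Set.indicator (A ×ˢ B) (fun _ => (1 : ℝ≥0∞)) (p.1 - p.2) :=
      (measurable_const.indicator hΩm).comp (measurable_fst.sub measurable_snd)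
    have hswap : ∫⁻ z, ∫⁻ t, Set.indicator (A ×ˢ B) (fun _ => (1 : ℝ≥0∞)) (z - t) ∂ν ∂volume
        = ∫⁻ t, ∫⁻ z, Set.indicator (A ×ˢ B) (fun _ => (1 : ℝ≥0∞)) (z - t) ∂volume ∂ν :=
      lintegral_lintegral_swap hmeas.aemeasurable
    have hzero : ∫⁻ z, ∫⁻ t, Set.indicator (A ×ˢ B) (fun _ => (1 : ℝ≥0∞)) (z - t) ∂ν ∂volume = 0 := by
      rw [hswap]
      have heq : ∀ t, ∫⁻ z, Set.indicator (A ×ˢ B) (fun _ => (1 : ℝ≥0∞)) (z - t) ∂volume = 0 := by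
        intro t
        have hSm : MeasurableSet ((fun z : (Fin n → ℝ) × (Fin m → ℝ) => z + -t) ⁻¹' (A ×ˢ B)) :=
          hΩm.preimage (measurable_id.add_const _)
        have h1 : ∀ z : (Fin n → ℝ) × (Fin m → ℝ),
            Set.indicator (A ×ˢ B) (fun _ => (1 : ℝ≥0∞)) (z - t)
              = Set.indicator ((fun z => z + -t) ⁻¹' (A ×ˢ B)) (fun _ => (1 : ℝ≥0∞)) z := fun z => by
          simp only [sub_eq_add_neg]; rfl
        simp_rw [h1]
        rw [lintegral_indicator_const hSm, measure_preimage_add_right, hΩ0, mul_zero]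
      simp [heq]
    have hae : ∀ᵐ z : (Fin n → ℝ) × (Fin m → ℝ),
        ∫⁻ t, Set.indicator (A ×ˢ B) (fun _ => (1 : ℝ≥0∞)) (z - t) ∂ν = 0 := by
      have hFm : Measurable fun z : (Fin n → ℝ) × (Fin m → ℝ) =>
          ∫⁻ t, Set.indicator (A ×ˢ B) (fun _ => (1 : ℝ≥0∞)) (z - t) ∂ν :=
        hmeas.lintegral_prod_right'
      filter_upwards [(lintegral_eq_zero_iff hFm).mp hzero] with z hz
      exact hz
    have hint0 : ∀ᵐ z : (Fin n → ℝ) × (Fin m → ℝ),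
        (∫ t, Set.indicator (A ×ˢ B) (fun _ => (1 : ℝ)) (z - t) ∂ν) = 0 := by
      filter_upwards [hae] with z hz
      have hgm : Measurable fun t : (Fin n → ℝ) × (Fin m → ℝ) =>
          Set.indicator (A ×ˢ B) (fun _ => (1 : ℝ≥0∞)) (z - t) := by
        exact (measurable_const.indicator hΩm).comp (measurable_const.sub measurable_id)
      have hz' : ∀ᵐ t ∂ν, Set.indicator (A ×ˢ B) (fun _ => (1 : ℝ≥0∞)) (z - t) = 0 :=
        (lintegral_eq_zero_iff hgm).mp hz
      have hz'' : ∀ᵐ t ∂ν, Set.indicator (A ×ˢ B) (fun _ => (1 : ℝ)) (z - t) = 0 := by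
        filter_upwards [hz'] with t ht
        by_cases h : z - t ∈ A ×ˢ B <;> simp [h] at ht ⊢
      rw [integral_congr_ae hz'', integral_zero]
    have hcompl : ∀ᵐ z : (Fin n → ℝ) × (Fin m → ℝ), z ∈ A ×ˢ B := by
      filter_upwards [hν, hint0] with z h1 h2
      by_contra h
      rw [h2] at h1
      simp [Set.indicator_apply, h] at h1
    have hc0 : volume ((A ×ˢ B)ᶜ) = 0 := ae_iff.mp hcompl
    have huniv : (volume : Measure ((Fin n → ℝ) × (Fin m → ℝ))) Set.univ = 0 := by
      have h2 := measure_union_le (μ := volume) (A ×ˢ B) (A ×ˢ B)ᶜ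
      rw [Set.union_compl_self] at h2
      simpa [hΩ0, hc0, nonpos_iff_eq_zero] using h2
    exact (isOpen_univ.measure_pos volume ⟨(0, 0), trivial⟩).ne' huniv
  -- step 2 : slice at a good point y₀ ∈ B
  have hν' : ∀ᵐ y : Fin m → ℝ, ∀ᵐ x : Fin n → ℝ,
      (∫ t, Set.indicator (A ×ˢ B) (fun _ => (1 : ℝ)) ((x, y) - t) ∂ν)
        = Set.indicator (A ×ˢ B)ᶜ (fun _ => (1 : ℝ)) (x, y) := by
    rw [Measure.volume_eq_prod] at hν
    set P : ((Fin n → ℝ) × (Fin m → ℝ)) → Prop := fun z =>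
      (∫ t, Set.indicator (A ×ˢ B) (fun _ => (1 : ℝ)) (z - t) ∂ν)
        = Set.indicator (A ×ˢ B)ᶜ (fun _ => (1 : ℝ)) z with hPdef
    have hswapped : ∀ᵐ w : (Fin m → ℝ) × (Fin n → ℝ) ∂(volume : Measure (Fin m → ℝ)).prod volume,
        P w.swap := by
      apply ae_of_ae_map (p := P) measurable_swap.aemeasurable
      rw [Measure.prod_swap]
      exact hν
    exact Measure.ae_ae_of_ae_prod hswapped
  obtain ⟨y₀, hy₀B, hP⟩ : ∃ y₀, y₀ ∈ B ∧ ∀ᵐ x : Fin n → ℝ,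
      (∫ t, Set.indicator (A ×ˢ B) (fun _ => (1 : ℝ)) ((x, y₀) - t) ∂ν)
        = Set.indicator (A ×ˢ B)ᶜ (fun _ => (1 : ℝ)) (x, y₀) := by
    set G := {y : Fin m → ℝ | ∀ᵐ x : Fin n → ℝ,
      (∫ t, Set.indicator (A ×ˢ B) (fun _ => (1 : ℝ)) ((x, y) - t) ∂ν)
        = Set.indicator (A ×ˢ B)ᶜ (fun _ => (1 : ℝ)) (x, y)} with hG
    have hdiff : volume (B \ G) = 0 :=
      measure_mono_null (fun y hy => hy.2) (ae_iff.mp hν')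
    have h1 : volume (B ∩ G) ≠ 0 := by
      intro h
      apply hB0
      have h3 := measure_le_inter_add_diff (μ := volume) B G
      rw [h, hdiff, add_zero] at h3
      exact le_antisymm h3 zero_le
    obtain ⟨y₀, hy₀⟩ := nonempty_of_measure_ne_zero h1
    exact ⟨y₀, hy₀.1, hy₀.2⟩
  -- step 3 : construct the measure on the first factor
  set S : Set ((Fin n → ℝ) × (Fin m → ℝ)) := {t | y₀ - t.2 ∈ B} with hS
  have hSm : MeasurableSet S := hBm.preimage (measurable_const.sub measurable_snd)
  obtain ⟨R, hR⟩ : ∃ R, B ⊆ Metric.closedBall 0 R := hBb.subset_closedBall 0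
  refine ⟨Measure.map Prod.fst (ν.restrict S), ?_, ?_⟩
  · constructor
    intro x
    refine ⟨Metric.closedBall x 1, Metric.closedBall_mem_nhds x one_pos, ?_⟩
    rw [Measure.map_apply measurable_fst measurableSet_closedBall,
      Measure.restrict_apply (measurable_fst measurableSet_closedBall)]
    have hsub : Prod.fst ⁻¹' Metric.closedBall x 1 ∩ S
        ⊆ Metric.closedBall x 1 ×ˢ Metric.closedBall y₀ R := by
      rintro t ⟨ht1, ht2⟩
      refine ⟨ht1, ?_⟩
      have h3 : y₀ - t.2 ∈ Metric.closedBall 0 R := hR ht2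
      rw [Metric.mem_closedBall] at h3 ⊢
      rw [dist_eq_norm] at h3 ⊢
      rwa [sub_zero, ← norm_neg, neg_sub] at h3
    exact lt_of_le_of_lt (measure_mono hsub)
      ((isCompact_closedBall x 1).prod (isCompact_closedBall y₀ R)).measure_lt_top
  · filter_upwards [hP] with x hx
    have hfa : Measurable fun s : Fin n → ℝ => Set.indicator A (fun _ => (1 : ℝ)) (x - s) := by
      exact (measurable_const.indicator hAm).comp (measurable_const.sub measurable_id)
    rw [integral_map measurable_fst.aemeasurable hfa.aestronglyMeasurable,
      ← integral_indicator hSm]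
    have hpt : ∀ t : (Fin n → ℝ) × (Fin m → ℝ),
        S.indicator (fun t => Set.indicator A (fun _ => (1 : ℝ)) (x - t.1)) t
          = Set.indicator (A ×ˢ B) (fun _ => (1 : ℝ)) ((x, y₀) - t) := by
      intro t
      have hmem : ((x, y₀) - t ∈ A ×ˢ B) ↔ (x - t.1 ∈ A ∧ y₀ - t.2 ∈ B) := Iff.rfl
      have hts : t ∈ S ↔ y₀ - t.2 ∈ B := Iff.rfl
      by_cases h1 : y₀ - t.2 ∈ B <;> by_cases h2 : x - t.1 ∈ A <;>
        simp [Set.indicator_apply, hmem, hts, h1, h2]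
    simp_rw [hpt]
    rw [hx]
    by_cases h : x ∈ A <;>
      simp [Set.indicator_apply, h, hy₀B, Set.mem_prod]

theorem factors_weakly_tile_of_product (n m : ℕ) (A : Set (Fin n → ℝ)) (B : Set (Fin m → ℝ))
    (hAb : Bornology.IsBounded A) (hAm : MeasurableSet A)
    (hBb : Bornology.IsBounded B) (hBm : MeasurableSet B)
    (hΩ : WeaklyTilesCompl (A ×ˢ B)) :
    WeaklyTilesCompl A ∧ WeaklyTilesCompl B := by
  obtain ⟨ν, hlf, hν⟩ := hΩ
  constructor
  · exact aux_slice n m A B hAm hBm hBb ν hlf hν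
  · -- transfer to the swapped product
    haveI := hlf
    set ν' : Measure ((Fin m → ℝ) × (Fin n → ℝ)) := Measure.map Prod.swap ν with hν'def
    have hlf' : IsLocallyFiniteMeasure ν' := by
      constructor
      intro w
      refine ⟨Metric.closedBall w 1, Metric.closedBall_mem_nhds w one_pos, ?_⟩
      rw [hν'def, Measure.map_apply measurable_swap measurableSet_closedBall]
      have hpre : Prod.swap ⁻¹' Metric.closedBall w 1 = Metric.closedBall w.swap 1 := by
        ext t
        simp [Metric.mem_closedBall, Prod.dist_eq, max_comm]
      rw [hpre]
      exact (isCompact_closedBall _ _).measure_lt_top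
    have hmeasBA : ∀ w : (Fin m → ℝ) × (Fin n → ℝ),
        Measurable fun t : (Fin m → ℝ) × (Fin n → ℝ) =>
          Set.indicator (B ×ˢ A) (fun _ => (1 : ℝ)) (w - t) := fun w => by
      exact (measurable_const.indicator (hBm.prod hAm)).comp
        (measurable_const.sub measurable_id)
    have key : ∀ w : (Fin m → ℝ) × (Fin n → ℝ),
        (∫ t, Set.indicator (B ×ˢ A) (fun _ => (1 : ℝ)) (w - t) ∂ν')
          = ∫ t, Set.indicator (A ×ˢ B) (fun _ => (1 : ℝ)) (w.swap - t) ∂ν := by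
      intro w
      rw [hν'def, integral_map measurable_swap.aemeasurable
        (hmeasBA w).aestronglyMeasurable]
      congr 1
      funext t
      have hiff : (w - Prod.swap t ∈ B ×ˢ A) ↔ (w.swap - t ∈ A ×ˢ B) :=
        ⟨fun h => ⟨h.2, h.1⟩, fun h => ⟨h.2, h.1⟩⟩
      by_cases h : w.swap - t ∈ A ×ˢ B <;> simp [Set.indicator_apply, hiff, h]
    set Q : ((Fin n → ℝ) × (Fin m → ℝ)) → Prop := fun z =>
      (∫ t, Set.indicator (A ×ˢ B) (fun _ => (1 : ℝ)) (z - t) ∂ν)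
        = Set.indicator (A ×ˢ B)ᶜ (fun _ => (1 : ℝ)) z with hQdef
    have hae2 : ∀ᵐ w : (Fin m → ℝ) × (Fin n → ℝ), Q (Prod.swap w) := by
      rw [Measure.volume_eq_prod] at hν ⊢
      apply ae_of_ae_map (p := Q) measurable_swap.aemeasurable
      rw [Measure.prod_swap]
      exact hν
    apply aux_slice m n B A hBm hAm hAb ν' hlf'
    filter_upwards [hae2] with w hw
    rw [key w, hw]
    have hiff2 : (w.swap ∈ A ×ˢ B) ↔ (w ∈ B ×ˢ A) :=
      ⟨fun h => ⟨h.2, h.1⟩, fun h => ⟨h.2, h.1⟩⟩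
    by_cases h : w ∈ B ×ˢ A <;> simp [Set.indicator_apply, hiff2, h]
end
end

section
/- Let E(ξ₁, ξ₂, …) be a symmetric Cantor set with measure at least 4/5. Then its essential difference set equals the open interval (−1, 1), i.e., Δ(E(ξ₁, ξ₂, …)) = Δ([0,1]) = (−1,1). -/
open MeasureTheory Set

noncomputable section

/-- `ξ₁ ⋯ ξ_k`, the common length of the `2^k` intervals of the `k`-th stage. -/
def cantorLen (ξ : ℕ → ℝ) (k : ℕ) : ℝ := ∏ j ∈ Finset.range k, ξ j

/-- `r_k = ξ₁ ⋯ ξ_{k-1} (1 - ξ_k)` (0-indexed). -/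
def cantorR (ξ : ℕ → ℝ) (k : ℕ) : ℝ := cantorLen ξ k * (1 - ξ k)

/-- The `k`-th stage set `E_k(ξ₁,…,ξ_k)` of the symmetric Cantor construction:
`2^k` closed intervals of common length `ξ₁ ⋯ ξ_k`. -/
def cantorStage (ξ : ℕ → ℝ) (k : ℕ) : Set ℝ :=
  {x | ∃ ε : Fin k → Bool, ∃ y ∈ Set.Icc (0 : ℝ) 1,
    x = (∑ j : Fin k, if ε j then cantorR ξ j else 0) + cantorLen ξ k * y}

/-- The symmetric Cantor set `E(ξ₁, ξ₂, …)` associated to the ratio sequence `ξ`. -/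
def symCantorSet (ξ : ℕ → ℝ) : Set ℝ := ⋂ k, cantorStage ξ k

/-- The essential difference set `Δ(A) = { t : m(A ∩ (A + t)) > 0 }`. -/
def essDiff {E : Type*} [MeasureSpace E] [Sub E] (A : Set E) : Set E :=
  {t | 0 < volume (A ∩ {x | x - t ∈ A})}

namespace SymCantor

variable {ξ : ℕ → ℝ}

/-- left endpoint of the interval of stage `k` indexed by `ε`. -/
def csum (ξ : ℕ → ℝ) {k : ℕ} (ε : Fin k → Bool) : ℝ :=
  ∑ j : Fin k, if ε j then cantorR ξ (j : ℕ) else 0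

lemma len_zero (ξ : ℕ → ℝ) : cantorLen ξ 0 = 1 := by simp [cantorLen]

lemma len_succ (ξ : ℕ → ℝ) (k : ℕ) : cantorLen ξ (k+1) = cantorLen ξ k * ξ k :=
  Finset.prod_range_succ _ _

lemma len_pos (hξ : ∀ k, 0 < ξ k ∧ ξ k < 1/2) (k : ℕ) : 0 < cantorLen ξ k :=
  Finset.prod_pos fun j _ => (hξ j).1

lemma r_eq (ξ : ℕ → ℝ) (k : ℕ) : cantorR ξ k = cantorLen ξ k - cantorLen ξ (k+1) := by
  rw [cantorR, len_succ]; ring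

lemma r_pos (hξ : ∀ k, 0 < ξ k ∧ ξ k < 1/2) (k : ℕ) : 0 < cantorR ξ k :=
  mul_pos (len_pos hξ k) (by linarith [(hξ k).2])

lemma len_succ_lt_r (hξ : ∀ k, 0 < ξ k ∧ ξ k < 1/2) (k : ℕ) :
    cantorLen ξ (k+1) < cantorR ξ k := by
  rw [len_succ, cantorR]
  have h1 := len_pos hξ k
  have h2 := (hξ k).2
  nlinarith

lemma sum_r_shift (ξ : ℕ → ℝ) (k n : ℕ) :
    ∑ j ∈ Finset.range n, cantorR ξ (k + j) = cantorLen ξ k - cantorLen ξ (k + n) := by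
  induction n with
  | zero => simp
  | succ n ih =>
    rw [Finset.sum_range_succ, ih, r_eq]
    ring_nf

lemma sum_r (ξ : ℕ → ℝ) (k : ℕ) :
    ∑ j ∈ Finset.range k, cantorR ξ j = 1 - cantorLen ξ k := by
  have h := sum_r_shift ξ 0 k
  simp only [len_zero, Nat.zero_add] at h
  simpa using h

lemma two_pow_len_le_one (hξ : ∀ k, 0 < ξ k ∧ ξ k < 1/2) (k : ℕ) :
    2 ^ k * cantorLen ξ k ≤ 1 := by
  induction k with
  | zero => simp [len_zero]
  | succ k ih =>
    rw [len_succ, pow_succ]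
    have h1 := (hξ k).1
    have h2 := (hξ k).2
    have h3 := len_pos hξ k
    have h4 : (0:ℝ) < 2 ^ k := by positivity
    nlinarith

lemma csum_nonneg (hξ : ∀ k, 0 < ξ k ∧ ξ k < 1/2) {k : ℕ} (ε : Fin k → Bool) :
    0 ≤ csum ξ ε := by
  apply Finset.sum_nonneg
  intro j _
  split
  · exact (r_pos hξ j).le
  · exact le_refl 0

lemma csum_le (hξ : ∀ k, 0 < ξ k ∧ ξ k < 1/2) {k : ℕ} (ε : Fin k → Bool) :
    csum ξ ε ≤ 1 - cantorLen ξ k := by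
  rw [← sum_r ξ k, ← Fin.sum_univ_eq_sum_range (fun j => cantorR ξ j) k]
  apply Finset.sum_le_sum
  intro j _
  split
  · exact le_refl _
  · exact (r_pos hξ j).le

/-- Stage sets as unions of closed intervals. -/
lemma stage_eq (hξ : ∀ k, 0 < ξ k ∧ ξ k < 1/2) (k : ℕ) :
    cantorStage ξ k = ⋃ ε : Fin k → Bool, Icc (csum ξ ε) (csum ξ ε + cantorLen ξ k) := by
  have hL := len_pos hξ k
  ext x
  simp only [cantorStage, mem_setOf_eq, mem_iUnion, mem_Icc, csum]
  constructor
  · rintro ⟨ε, y, ⟨hy0, hy1⟩, rfl⟩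
    exact ⟨ε, by nlinarith, by nlinarith⟩
  · rintro ⟨ε, h1, h2⟩
    refine ⟨ε, (x - ∑ j : Fin k, if ε j then cantorR ξ (j:ℕ) else 0) / cantorLen ξ k,
      ⟨div_nonneg (by linarith) hL.le, (div_le_one hL).2 (by linarith)⟩, ?_⟩
    field_simp
    ring

lemma stage_succ_subset (hξ : ∀ k, 0 < ξ k ∧ ξ k < 1/2) (k : ℕ) :
    cantorStage ξ (k+1) ⊆ cantorStage ξ k := by
  rintro x ⟨ε, y, ⟨hy0, hy1⟩, rfl⟩
  have hL := len_pos hξ k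
  have hL1 := len_pos hξ (k+1)
  have hr := r_pos hξ k
  have hre := r_eq ξ k
  set a : ℝ := (if ε (Fin.last k) then cantorR ξ k else 0) with ha
  have ha0 : 0 ≤ a := by rw [ha]; split <;> [exact hr.le; exact le_refl 0]
  have ha1 : a ≤ cantorR ξ k := by rw [ha]; split <;> [exact le_refl _; exact hr.le]
  refine ⟨fun j => ε j.castSucc, (a + cantorLen ξ (k+1) * y) / cantorLen ξ k,
    ⟨div_nonneg (by nlinarith) hL.le, (div_le_one hL).2 (by nlinarith)⟩, ?_⟩
  rw [Fin.sum_univ_castSucc]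
  have : cantorLen ξ k * ((a + cantorLen ξ (k+1) * y) / cantorLen ξ k)
      = a + cantorLen ξ (k+1) * y := by field_simp
  rw [this]
  simp only [Fin.coe_castSucc, Fin.val_last]
  ring

lemma stage_antitone (hξ : ∀ k, 0 < ξ k ∧ ξ k < 1/2) : Antitone (cantorStage ξ) :=
  antitone_nat_of_succ_le (fun k => stage_succ_subset hξ k)

lemma stage_measurable (hξ : ∀ k, 0 < ξ k ∧ ξ k < 1/2) (k : ℕ) :
    MeasurableSet (cantorStage ξ k) := by
  rw [stage_eq hξ]
  exact MeasurableSet.iUnion fun ε => measurableSet_Icc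

lemma E_measurable (hξ : ∀ k, 0 < ξ k ∧ ξ k < 1/2) :
    MeasurableSet (symCantorSet ξ) :=
  MeasurableSet.iInter fun k => stage_measurable hξ k

lemma E_subset_stage (k : ℕ) : symCantorSet ξ ⊆ cantorStage ξ k := iInter_subset _ k

lemma E_subset_unit (hξ : ∀ k, 0 < ξ k ∧ ξ k < 1/2) : symCantorSet ξ ⊆ Icc (0:ℝ) 1 := by
  refine (E_subset_stage 0).trans ?_
  rw [stage_eq hξ 0]
  refine iUnion_subset fun ε => ?_
  have : csum ξ ε = 0 := by simp [csum]
  rw [this, len_zero, zero_add]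

lemma csum_split (ξ : ℕ → ℝ) {k : ℕ} (ε : Fin (k+1) → Bool) :
    csum ξ ε = csum ξ (fun j : Fin k => ε j.castSucc)
      + (if ε (Fin.last k) then cantorR ξ k else 0) := by
  rw [csum, Fin.sum_univ_castSucc]
  simp [csum]

lemma disjoint_Icc (hξ : ∀ k, 0 < ξ k ∧ ξ k < 1/2) :
    ∀ {k : ℕ} {ε ε' : Fin k → Bool}, ε ≠ ε' →
      Disjoint (Icc (csum ξ ε) (csum ξ ε + cantorLen ξ k))
        (Icc (csum ξ ε') (csum ξ ε' + cantorLen ξ k)) := by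
  intro k
  induction k with
  | zero => intro ε ε' h; exact absurd (Subsingleton.elim ε ε') h
  | succ k ih =>
    intro ε ε' h
    have hsplit := csum_split ξ ε
    have hsplit' := csum_split ξ ε'
    have hr := r_pos hξ k
    have hlr := len_succ_lt_r hξ k
    have hre := r_eq ξ k
    by_cases hrho : (fun j : Fin k => ε j.castSucc) = (fun j : Fin k => ε' j.castSucc)
    · have hlast : ε (Fin.last k) ≠ ε' (Fin.last k) := by
        intro he
        apply h
        funext j
        induction j using Fin.lastCases with
        | last => exact he
        | cast i => exact congrFun hrho i
      rw [hrho] at hsplit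
      set c := csum ξ (fun j : Fin k => ε' j.castSucc) with hc
      cases hb : ε (Fin.last k) with
      | false =>
        have hb' : ε' (Fin.last k) = true := by
          cases hbe : ε' (Fin.last k)
          · exact absurd (hb.trans hbe.symm) hlast
          · rfl
        rw [hb] at hsplit; rw [hb'] at hsplit'
        simp only [Bool.false_eq_true, if_false, if_true, add_zero] at hsplit hsplit'
        rw [hsplit, hsplit', Set.disjoint_left]
        intro x hx hx'
        rw [mem_Icc] at hx hx'
        linarith [hx.2, hx'.1]
      | true =>
        have hb' : ε' (Fin.last k) = false := by
          cases hbe : ε' (Fin.last k)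
          · rfl
          · exact absurd (hb.trans hbe.symm) hlast
        rw [hb] at hsplit; rw [hb'] at hsplit'
        simp only [Bool.false_eq_true, if_false, if_true, add_zero] at hsplit hsplit'
        rw [hsplit, hsplit', Set.disjoint_left]
        intro x hx hx'
        rw [mem_Icc] at hx hx'
        linarith [hx.1, hx'.2]
    · have big := ih hrho
      have ha0 : (0:ℝ) ≤ (if ε (Fin.last k) then cantorR ξ k else 0) := by
        split <;> [exact hr.le; exact le_refl 0]
      have ha1 : (if ε (Fin.last k) then cantorR ξ k else 0) ≤ cantorR ξ k := by
        split <;> [exact le_refl _; exact hr.le]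
      have ha0' : (0:ℝ) ≤ (if ε' (Fin.last k) then cantorR ξ k else 0) := by
        split <;> [exact hr.le; exact le_refl 0]
      have ha1' : (if ε' (Fin.last k) then cantorR ξ k else 0) ≤ cantorR ξ k := by
        split <;> [exact le_refl _; exact hr.le]
      exact Disjoint.mono
        (Icc_subset_Icc (by rw [hsplit]; linarith) (by rw [hsplit]; linarith))
        (Icc_subset_Icc (by rw [hsplit']; linarith) (by rw [hsplit']; linarith))
        big

lemma csum_append (ξ : ℕ → ℝ) {k n : ℕ} (ε : Fin k → Bool) (σ : Fin n → Bool) :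
    csum ξ (Fin.append ε σ) = csum ξ ε
      + ∑ j : Fin n, (if σ j then cantorR ξ (k + (j:ℕ)) else 0) := by
  rw [csum, Fin.sum_univ_add]
  congr 1
  · apply Finset.sum_congr rfl
    intro i _
    rw [Fin.append_left]
    simp
  · apply Finset.sum_congr rfl
    intro i _
    rw [Fin.append_right]
    simp

lemma tail_nonneg (hξ : ∀ k, 0 < ξ k ∧ ξ k < 1/2) {k n : ℕ} (σ : Fin n → Bool) :
    0 ≤ ∑ j : Fin n, (if σ j then cantorR ξ (k + (j:ℕ)) else 0) := by
  apply Finset.sum_nonneg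
  intro j _
  split
  · exact (r_pos hξ _).le
  · exact le_refl 0

lemma tail_le (hξ : ∀ k, 0 < ξ k ∧ ξ k < 1/2) {k n : ℕ} (σ : Fin n → Bool) :
    ∑ j : Fin n, (if σ j then cantorR ξ (k + (j:ℕ)) else 0)
      ≤ cantorLen ξ k - cantorLen ξ (k + n) := by
  rw [← sum_r_shift ξ k n, ← Fin.sum_univ_eq_sum_range (fun j => cantorR ξ (k + j)) n]
  apply Finset.sum_le_sum
  intro j _
  split
  · exact le_refl _
  · exact (r_pos hξ _).le

lemma ofReal_two_pow_mul (m : ℕ) (x : ℝ) :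
    (2:ENNReal)^m * ENNReal.ofReal x = ENNReal.ofReal (2^m * x) := by
  rw [ENNReal.ofReal_mul (by positivity), ENNReal.ofReal_pow (by norm_num)]
  norm_num

lemma vol_stage_le (hξ : ∀ k, 0 < ξ k ∧ ξ k < 1/2) (k : ℕ) :
    volume (cantorStage ξ k) ≤ (2:ENNReal)^k * ENNReal.ofReal (cantorLen ξ k) := by
  rw [stage_eq hξ]
  refine le_trans (measure_iUnion_le _) ?_
  have h : ∀ ε : Fin k → Bool,
      volume (Icc (csum ξ ε) (csum ξ ε + cantorLen ξ k)) = ENNReal.ofReal (cantorLen ξ k) := by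
    intro ε
    rw [Real.volume_Icc]
    ring_nf
  rw [tsum_congr h, tsum_fintype, Finset.sum_const, Finset.card_univ]
  simp [Fintype.card_fun, nsmul_eq_mul]

lemma four_fifth_le (hξ : ∀ k, 0 < ξ k ∧ ξ k < 1/2)
    (hmeas : (4 / 5 : ENNReal) ≤ volume (symCantorSet ξ)) (k : ℕ) :
    (4/5 : ℝ) ≤ 2 ^ k * cantorLen ξ k := by
  have h1 : (4/5 : ENNReal) ≤ ENNReal.ofReal (2 ^ k * cantorLen ξ k) := by
    calc (4/5 : ENNReal) ≤ volume (symCantorSet ξ) := hmeas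
      _ ≤ volume (cantorStage ξ k) := measure_mono (E_subset_stage k)
      _ ≤ (2:ENNReal)^k * ENNReal.ofReal (cantorLen ξ k) := vol_stage_le hξ k
      _ = ENNReal.ofReal (2 ^ k * cantorLen ξ k) := ofReal_two_pow_mul k _
  have h2 : (4/5 : ENNReal) = ENNReal.ofReal ((4:ℝ)/5) := by
    rw [ENNReal.ofReal_div_of_pos (by norm_num)]
    norm_num
  rw [h2] at h1
  have hpos : (0:ℝ) ≤ 2 ^ k * cantorLen ξ k := by
    have := len_pos hξ k; positivity
  exact (ENNReal.ofReal_le_ofReal_iff hpos).1 h1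

lemma xi_ge (hξ : ∀ k, 0 < ξ k ∧ ξ k < 1/2)
    (hmeas : (4 / 5 : ENNReal) ≤ volume (symCantorSet ξ)) (k : ℕ) :
    (2/5 : ℝ) ≤ ξ k := by
  have h1 := four_fifth_le hξ hmeas (k+1)
  have h2 := two_pow_len_le_one hξ k
  have h3 := len_pos hξ k
  have h4 := (hξ k).1
  rw [len_succ, pow_succ] at h1
  have h5 : (0:ℝ) < 2 ^ k := by positivity
  nlinarith

lemma vol_stage_inter (hξ : ∀ k, 0 < ξ k ∧ ξ k < 1/2) (k n : ℕ) (ε : Fin k → Bool) :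
    (2:ENNReal)^n * ENNReal.ofReal (cantorLen ξ (k+n)) ≤
      volume (cantorStage ξ (k+n) ∩ Icc (csum ξ ε) (csum ξ ε + cantorLen ξ k)) := by
  set f : (Fin n → Bool) → Set ℝ := fun σ =>
    Icc (csum ξ (Fin.append ε σ)) (csum ξ (Fin.append ε σ) + cantorLen ξ (k+n)) with hf
  have hdisj : Pairwise (Function.onFun Disjoint f) := by
    intro σ σ' hne
    refine disjoint_Icc hξ ?_
    intro he
    apply hne
    funext j
    have h := congrFun he (Fin.natAdd k j)
    rwa [Fin.append_right, Fin.append_right] at h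
  have hmeasble : ∀ σ, MeasurableSet (f σ) := fun σ => measurableSet_Icc
  have hsub : (⋃ σ, f σ) ⊆ cantorStage ξ (k+n) ∩ Icc (csum ξ ε) (csum ξ ε + cantorLen ξ k) := by
    refine iUnion_subset fun σ => ?_
    intro x hx
    refine ⟨?_, ?_⟩
    · rw [stage_eq hξ]
      exact mem_iUnion.2 ⟨Fin.append ε σ, hx⟩
    · rw [hf] at hx
      simp only [mem_Icc] at hx ⊢
      have h1 := tail_nonneg hξ (k := k) σ
      have h2 := tail_le hξ (k := k) σ
      have h3 := csum_append ξ ε σ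
      constructor <;> [linarith [hx.1]; linarith [hx.2]]
  calc (2:ENNReal)^n * ENNReal.ofReal (cantorLen ξ (k+n))
      = volume (⋃ σ, f σ) := by
        rw [measure_iUnion hdisj hmeasble]
        have h : ∀ σ : Fin n → Bool, volume (f σ) = ENNReal.ofReal (cantorLen ξ (k+n)) := by
          intro σ
          rw [hf]
          simp only []
          rw [Real.volume_Icc]
          ring_nf
        rw [tsum_congr h, tsum_fintype, Finset.sum_const, Finset.card_univ]
        simp [Fintype.card_fun, nsmul_eq_mul]
    _ ≤ _ := measure_mono hsub

lemma vol_E_inter (hξ : ∀ k, 0 < ξ k ∧ ξ k < 1/2)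
    (hmeas : (4 / 5 : ENNReal) ≤ volume (symCantorSet ξ)) (k : ℕ) (ε : Fin k → Bool) :
    ENNReal.ofReal (4/5 * cantorLen ξ k) ≤
      volume (symCantorSet ξ ∩ Icc (csum ξ ε) (csum ξ ε + cantorLen ξ k)) := by
  set I := Icc (csum ξ ε) (csum ξ ε + cantorLen ξ k) with hI
  have hE : symCantorSet ξ ∩ I = ⋂ m, (cantorStage ξ m ∩ I) := by
    rw [symCantorSet, iInter_inter]
  rw [hE]
  have hanti : Antitone (fun m => cantorStage ξ m ∩ I) := by
    intro a b hab
    exact inter_subset_inter (stage_antitone hξ hab) (subset_refl I)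
  rw [hanti.measure_iInter (fun m => ((stage_measurable hξ m).inter measurableSet_Icc).nullMeasurableSet)
    ⟨0, by
      refine (lt_of_le_of_lt (measure_mono inter_subset_right) ?_).ne
      rw [hI, Real.volume_Icc]
      exact ENNReal.ofReal_lt_top⟩]
  rw [le_iInf_iff]
  intro m
  have hreal : 4/5 * cantorLen ξ k ≤ 2^m * cantorLen ξ (k+m) := by
    have h1 := four_fifth_le hξ hmeas (k+m)
    have h2 := two_pow_len_le_one hξ k
    have h3 := len_pos hξ k
    have h4 := len_pos hξ (k+m)
    have h5 : (0:ℝ) < 2 ^ k := by positivity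
    have h6 : (0:ℝ) < 2 ^ m := by positivity
    have hexp : (2:ℝ)^(k+m) = 2^k * 2^m := pow_add 2 k m
    nlinarith
  calc ENNReal.ofReal (4/5 * cantorLen ξ k)
      ≤ ENNReal.ofReal (2^m * cantorLen ξ (k+m)) := ENNReal.ofReal_le_ofReal hreal
    _ = (2:ENNReal)^m * ENNReal.ofReal (cantorLen ξ (k+m)) := (ofReal_two_pow_mul m _).symm
    _ ≤ volume (cantorStage ξ (k+m) ∩ I) := vol_stage_inter hξ k m ε
    _ ≤ volume (cantorStage ξ m ∩ I) :=
        measure_mono (inter_subset_inter (stage_antitone hξ (Nat.le_add_left m k)) (subset_refl I))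

lemma len_le_half_pow (hξ : ∀ k, 0 < ξ k ∧ ξ k < 1/2) (k : ℕ) :
    cantorLen ξ k ≤ (1/2) ^ k := by
  have h := two_pow_len_le_one hξ k
  have h2 : (0:ℝ) < 2 ^ k := by positivity
  rw [div_pow, one_pow, le_div_iff₀ h2]
  linarith [h, mul_comm (cantorLen ξ k) ((2:ℝ)^k)]

lemma exists_close (hξ : ∀ k, 0 < ξ k ∧ ξ k < 1/2)
    (hmeas : (4 / 5 : ENNReal) ≤ volume (symCantorSet ξ))
    {t : ℝ} (ht0 : 0 ≤ t) (ht1 : t < 1) :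
    ∃ k, ∃ ε ε' : Fin k → Bool,
      |t - (csum ξ ε - csum ξ ε')| < 3/5 * cantorLen ξ k := by
  by_contra hcon
  push_neg at hcon
  have hT : ∀ k : ℕ, csum ξ (fun _ : Fin k => true) = 1 - cantorLen ξ k := by
    intro k
    rw [csum]
    simp only [if_pos]
    rw [Fin.sum_univ_eq_sum_range (fun j => cantorR ξ j) k, sum_r]
  have hF : ∀ k : ℕ, csum ξ (fun _ : Fin k => false) = 0 := by
    intro k
    rw [csum]
    simp
  have hkey : ∀ k : ℕ, 3/5 * cantorLen ξ k ≤ t - 1 + cantorLen ξ k → True := fun _ _ => trivial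
  have claim : ∀ k : ℕ, 0 ≤ t - 1 + cantorLen ξ k := by
    intro k
    induction k with
    | zero => rw [len_zero]; linarith
    | succ k ih =>
      have h := hcon k (fun _ => true) (fun _ => false)
      rw [hT, hF, sub_zero] at h
      have habs : |t - (1 - cantorLen ξ k)| = t - 1 + cantorLen ξ k := by
        rw [abs_of_nonneg (by linarith)]
        ring
      rw [habs] at h
      have hx := xi_ge hξ hmeas k
      have hl := len_pos hξ k
      have hrk : cantorR ξ k ≤ 3/5 * cantorLen ξ k := by
        rw [cantorR]
        nlinarith
      have hre := r_eq ξ k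
      linarith
  have hfin : ∀ k : ℕ, 1 - t ≤ 2/5 * (1/2)^k := by
    intro k
    have h := hcon k (fun _ => true) (fun _ => false)
    rw [hT, hF, sub_zero] at h
    have habs : |t - (1 - cantorLen ξ k)| = t - 1 + cantorLen ξ k := by
      rw [abs_of_nonneg (by linarith [claim k])]
      ring
    rw [habs] at h
    have hle := len_le_half_pow hξ k
    linarith
  obtain ⟨k, hk⟩ := exists_pow_lt_of_lt_one (show (0:ℝ) < 1 - t by linarith)
    (show (1:ℝ)/2 < 1 by norm_num)
  have h1 := hfin k
  have h2 : (0:ℝ) < (1/2:ℝ)^k := by positivity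
  nlinarith

lemma pos_vol (hξ : ∀ k, 0 < ξ k ∧ ξ k < 1/2)
    (hmeas : (4 / 5 : ENNReal) ≤ volume (symCantorSet ξ))
    {t : ℝ} (ht0 : 0 ≤ t) (ht1 : t < 1) :
    0 < volume (symCantorSet ξ ∩ {x | x - t ∈ symCantorSet ξ}) := by
  obtain ⟨k, ε, ε', hs⟩ := exists_close hξ hmeas ht0 ht1
  set L := cantorLen ξ k with hLdef
  have hL : 0 < L := len_pos hξ k
  set a := csum ξ ε with hadef
  set b := csum ξ ε' with hbdef
  set s := t - (a - b) with hsdef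
  set A := symCantorSet ξ ∩ Icc a (a + L) with hA
  set B := symCantorSet ξ ∩ Icc b (b + L) with hB
  set B' := (fun x : ℝ => x + (-t)) ⁻¹' B with hB'
  have hBmeas : MeasurableSet B := (E_measurable hξ).inter measurableSet_Icc
  have hB'meas : MeasurableSet B' := hBmeas.preimage (measurable_add_const (-t))
  have hvolB' : volume B' = volume B := measure_preimage_add_right volume (-t) B
  have hsub : A ∩ B' ⊆ symCantorSet ξ ∩ {x | x - t ∈ symCantorSet ξ} := by
    rintro x ⟨hxA, hxB'⟩
    refine ⟨hxA.1, ?_⟩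
    have : x + (-t) ∈ B := hxB'
    have hxE : x + (-t) ∈ symCantorSet ξ := this.1
    simpa [sub_eq_add_neg] using hxE
  refine lt_of_lt_of_le ?_ (measure_mono hsub)
  by_contra hzero
  push_neg at hzero
  have hzero' : volume (A ∩ B') = 0 := le_antisymm hzero (zero_le)
  have hunion : volume (A ∪ B') = volume A + volume B' := by
    have := measure_union_add_inter (μ := volume) A hB'meas
    rw [hzero', add_zero] at this
    exact this
  have hAsub : A ⊆ Icc a (a + L) := inter_subset_right
  have hB'sub : B' ⊆ Icc (b + t) (b + t + L) := by
    intro x hx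
    have hx2 : x + (-t) ∈ Icc b (b + L) := hx.2
    rw [mem_Icc] at hx2 ⊢
    constructor <;> linarith [hx2.1, hx2.2]
  have hbig : A ∪ B' ⊆ Icc (min a (b + t)) (max a (b + t) + L) := by
    rintro x (hx | hx)
    · have := hAsub hx
      rw [mem_Icc] at this ⊢
      constructor
      · exact le_trans (min_le_left _ _) this.1
      · exact le_trans this.2 (by linarith [le_max_left a (b+t)])
    · have := hB'sub hx
      rw [mem_Icc] at this ⊢
      constructor
      · exact le_trans (min_le_right _ _) this.1
      · exact le_trans this.2 (by linarith [le_max_right a (b+t)])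
  have hdiff : max a (b + t) - min a (b + t) = |s| := by
    rw [max_sub_min_eq_abs]
    congr 1
    rw [hsdef]; ring
  have hvolbig : volume (A ∪ B') ≤ ENNReal.ofReal (|s| + L) := by
    refine le_trans (measure_mono hbig) ?_
    rw [Real.volume_Icc]
    apply ENNReal.ofReal_le_ofReal
    linarith [hdiff]
  have hvolA : ENNReal.ofReal (4/5 * L) ≤ volume A := vol_E_inter hξ hmeas k ε
  have hvolB : ENNReal.ofReal (4/5 * L) ≤ volume B := vol_E_inter hξ hmeas k ε'
  have hcontra : ENNReal.ofReal (8/5 * L) ≤ ENNReal.ofReal (|s| + L) := by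
    calc ENNReal.ofReal (8/5 * L) = ENNReal.ofReal (4/5 * L) + ENNReal.ofReal (4/5 * L) := by
          rw [← ENNReal.ofReal_add (by positivity) (by positivity)]
          ring_nf
      _ ≤ volume A + volume B' := by rw [hvolB']; exact add_le_add hvolA hvolB
      _ = volume (A ∪ B') := hunion.symm
      _ ≤ ENNReal.ofReal (|s| + L) := hvolbig
  have hreal : 8/5 * L ≤ |s| + L :=
    (ENNReal.ofReal_le_ofReal_iff (by positivity)).1 hcontra
  have : |s| < 3/5 * L := hs
  linarith

end SymCantor

open SymCantor

theorem essDiff_symCantorSet_of_large_measure (ξ : ℕ → ℝ)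
    (hξ : ∀ k, 0 < ξ k ∧ ξ k < 1 / 2)
    (hmeas : (4 / 5 : ENNReal) ≤ volume (symCantorSet ξ)) :
    essDiff (symCantorSet ξ) = Set.Ioo (-1 : ℝ) 1 := by
  have hunit := E_subset_unit hξ
  ext t
  simp only [essDiff, mem_setOf_eq, mem_Ioo]
  constructor
  · intro hpos
    by_contra hno
    push_neg at hno
    rcases le_or_gt 1 t with ht | ht
    · have hzero : volume (symCantorSet ξ ∩ {x | x - t ∈ symCantorSet ξ}) = 0 := by
        have hsub : symCantorSet ξ ∩ {x | x - t ∈ symCantorSet ξ} ⊆ Icc t 1 := by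
          rintro x ⟨hx1, hx2⟩
          have h1 := hunit hx1
          have h2 := hunit hx2
          rw [mem_Icc] at h1 h2 ⊢
          constructor <;> linarith [h1.2, h2.1]
        refine le_antisymm (le_trans (measure_mono hsub) ?_) (zero_le)
        rw [Real.volume_Icc]
        simp [ENNReal.ofReal_eq_zero]
        linarith
      rw [hzero] at hpos
      exact absurd hpos (lt_irrefl 0)
    · have ht' : t ≤ -1 := by
        rcases lt_or_ge t 1 with h | h
        · by_contra hcon
          push_neg at hcon
          exact absurd (hno hcon) (not_le.2 h)
        · linarith
      have hzero : volume (symCantorSet ξ ∩ {x | x - t ∈ symCantorSet ξ}) = 0 := by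
        have hsub : symCantorSet ξ ∩ {x | x - t ∈ symCantorSet ξ} ⊆ Icc 0 (1 + t) := by
          rintro x ⟨hx1, hx2⟩
          have h1 := hunit hx1
          have h2 := hunit hx2
          rw [mem_Icc] at h1 h2 ⊢
          constructor <;> linarith [h1.1, h2.2]
        refine le_antisymm (le_trans (measure_mono hsub) ?_) (zero_le)
        rw [Real.volume_Icc]
        simp [ENNReal.ofReal_eq_zero]
        linarith
      rw [hzero] at hpos
      exact absurd hpos (lt_irrefl 0)
  · rintro ⟨h1, h2⟩
    rcases le_or_gt 0 t with ht | ht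
    · exact pos_vol hξ hmeas ht h2
    · have hpos := pos_vol hξ hmeas (t := -t) (by linarith) (by linarith)
      have heq : symCantorSet ξ ∩ {x | x - t ∈ symCantorSet ξ}
          = (fun x : ℝ => x + (-t)) ⁻¹' (symCantorSet ξ ∩ {x | x - (-t) ∈ symCantorSet ξ}) := by
        ext x
        simp only [mem_inter_iff, mem_preimage, mem_setOf_eq, sub_neg_eq_add]
        constructor
        · rintro ⟨hx1, hx2⟩
          exact ⟨hx2, by simpa [sub_eq_add_neg] using hx1⟩
        · rintro ⟨hx1, hx2⟩
          refine ⟨by simpa [sub_eq_add_neg] using hx2, hx1⟩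
      rw [heq, measure_preimage_add_right]
      exact hpos
end
end

section
/- Let E(ξ₁, ξ₂, …) be a symmetric Cantor set of positive measure. Then there exists k such that Δ(E(ξ₁, ξ₂, …)) = Δ(E_k(ξ₁, …, ξ_k)), where E_k is the k-th stage set of the Cantor construction. In particular, Δ(E(ξ₁, ξ₂, …)) is a finite union of open intervals. -/
open MeasureTheory Set

noncomputable section

namespace CantorAux

variable (ξ : ℕ → ℝ)

def cpt (b : ℕ → Bool) (k : ℕ) : ℝ := ∑ j ∈ Finset.range k, if b j then cantorR ξ j else 0

def extb (k : ℕ) (ε : Fin k → Bool) : ℕ → Bool := fun j => if h : j < k then ε ⟨j, h⟩ else false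

def pseq (k : ℕ) : ℝ := 2 ^ k * cantorLen ξ k

def Pinf : ℝ := ⨅ k, pseq ξ k

def rho (n : ℕ) : ℝ := Pinf ξ / pseq ξ n

lemma rho_def (n : ℕ) : rho ξ n = Pinf ξ / pseq ξ n := rfl

variable {ξ}

section basic

variable (hξ : ∀ k, 0 < ξ k ∧ ξ k < 1 / 2)
include hξ

lemma len_pos (k : ℕ) : 0 < cantorLen ξ k :=
  Finset.prod_pos fun j _ => (hξ j).1

omit hξ in
lemma len_succ (k : ℕ) : cantorLen ξ (k + 1) = cantorLen ξ k * ξ k :=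
  Finset.prod_range_succ _ _

omit hξ in
lemma r_eq (k : ℕ) : cantorR ξ k = cantorLen ξ k - cantorLen ξ (k + 1) := by
  rw [cantorR, len_succ]; ring

lemma r_pos (k : ℕ) : 0 < cantorR ξ k := by
  have h1 := (hξ k).1; have h2 := (hξ k).2; have := len_pos hξ k
  rw [cantorR]; nlinarith

lemma two_len_succ_lt (k : ℕ) : 2 * cantorLen ξ (k + 1) < cantorLen ξ k := by
  have h2 := (hξ k).2; have := len_pos hξ k
  rw [len_succ]; nlinarith

lemma len_le {k n : ℕ} (h : k ≤ n) : cantorLen ξ n ≤ cantorLen ξ k := by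
  induction n, h using Nat.le_induction with
  | base => exact le_refl _
  | succ n hn ih =>
    refine le_trans ?_ ih
    have := two_len_succ_lt hξ n; have := len_pos hξ (n + 1); linarith

lemma len_le_pow (k : ℕ) : cantorLen ξ k ≤ (1 / 2) ^ k := by
  induction k with
  | zero => simp [cantorLen]
  | succ k ih =>
    have := two_len_succ_lt hξ k
    have h0 : (0:ℝ) < (1/2:ℝ)^k := by positivity
    have := len_pos hξ (k+1)
    calc cantorLen ξ (k+1) ≤ cantorLen ξ k / 2 := by linarith
    _ ≤ (1/2)^k / 2 := by linarith
    _ = (1/2)^(k+1) := by ring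

lemma len_tendsto : Filter.Tendsto (cantorLen ξ) Filter.atTop (nhds 0) := by
  have h1 : Filter.Tendsto (fun k : ℕ => ((1:ℝ)/2) ^ k) Filter.atTop (nhds 0) := by
    apply tendsto_pow_atTop_nhds_zero_of_lt_one <;> norm_num
  refine squeeze_zero (fun k => (len_pos hξ k).le) (fun k => len_le_pow hξ k) h1

omit hξ in
lemma sum_r {k n : ℕ} (h : k ≤ n) :
    ∑ j ∈ Finset.Ico k n, cantorR ξ j = cantorLen ξ k - cantorLen ξ n := by
  induction n, h using Nat.le_induction with
  | base => simp
  | succ n hn ih =>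
    rw [Finset.sum_Ico_succ_top hn, ih, r_eq]; ring

omit hξ in
lemma cpt_congr {b b' : ℕ → Bool} {k : ℕ} (h : ∀ j < k, b j = b' j) :
    cpt ξ b k = cpt ξ b' k := by
  refine Finset.sum_congr rfl fun j hj => ?_
  rw [h j (Finset.mem_range.mp hj)]

omit hξ in
lemma cpt_split (b : ℕ → Bool) {k n : ℕ} (h : k ≤ n) :
    cpt ξ b n = cpt ξ b k + ∑ j ∈ Finset.Ico k n, if b j then cantorR ξ j else 0 := by
  rw [cpt, cpt, Finset.range_eq_Ico, Finset.range_eq_Ico]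
  exact (Finset.sum_Ico_consecutive (fun j => if b j then cantorR ξ j else 0) (Nat.zero_le k) h).symm

lemma cpt_le_cpt (b : ℕ → Bool) {k n : ℕ} (h : k ≤ n) :
    cpt ξ b k ≤ cpt ξ b n := by
  rw [cpt_split b h]
  have : (0:ℝ) ≤ ∑ j ∈ Finset.Ico k n, if b j then cantorR ξ j else 0 := by
    refine Finset.sum_nonneg fun j _ => ?_
    split <;> [exact (r_pos hξ j).le; exact le_refl _]
  linarith

lemma cpt_add_len_le (b : ℕ → Bool) {k n : ℕ} (h : k ≤ n) :
    cpt ξ b n + cantorLen ξ n ≤ cpt ξ b k + cantorLen ξ k := by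
  rw [cpt_split b h]
  have h1 : ∑ j ∈ Finset.Ico k n, (if b j then cantorR ξ j else 0)
      ≤ ∑ j ∈ Finset.Ico k n, cantorR ξ j := by
    refine Finset.sum_le_sum fun j _ => ?_
    split <;> [exact le_refl _; exact (r_pos hξ j).le]
  rw [sum_r h] at h1; linarith

omit hξ in
lemma fin_sum_eq (k : ℕ) (ε : Fin k → Bool) :
    (∑ j : Fin k, if ε j then cantorR ξ j else 0) = cpt ξ (extb k ε) k := by
  rw [cpt, ← Fin.sum_univ_eq_sum_range (fun j => if extb k ε j then cantorR ξ j else 0) k]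
  refine Finset.sum_congr rfl fun j _ => ?_
  simp [extb, j.isLt]

lemma stage_eq (k : ℕ) :
    cantorStage ξ k = ⋃ ε : Fin k → Bool,
      Icc (cpt ξ (extb k ε) k) (cpt ξ (extb k ε) k + cantorLen ξ k) := by
  have hL := len_pos hξ k
  ext x
  simp only [cantorStage, mem_setOf_eq, mem_iUnion, mem_Icc]
  constructor
  · rintro ⟨ε, y, ⟨hy0, hy1⟩, rfl⟩
    rw [fin_sum_eq]
    exact ⟨ε, by nlinarith, by nlinarith⟩
  · rintro ⟨ε, h1, h2⟩
    refine ⟨ε, (x - cpt ξ (extb k ε) k) / cantorLen ξ k,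
      ⟨div_nonneg (by linarith) hL.le, by rw [div_le_one hL]; linarith⟩, ?_⟩
    rw [fin_sum_eq]; field_simp; ring

lemma stage_mem_iff {k : ℕ} {x : ℝ} :
    x ∈ cantorStage ξ k ↔ ∃ b : ℕ → Bool,
      x ∈ Icc (cpt ξ b k) (cpt ξ b k + cantorLen ξ k) := by
  rw [stage_eq hξ]
  simp only [mem_iUnion]
  constructor
  · rintro ⟨ε, hx⟩; exact ⟨extb k ε, hx⟩
  · rintro ⟨b, hx⟩
    refine ⟨fun j => b j, ?_⟩
    have : cpt ξ (extb k fun j : Fin k => b j.val) k = cpt ξ b k := by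
      refine cpt_congr fun j hj => ?_
      simp [extb, hj]
    rw [this]; exact hx

lemma sep {b b' : ℕ → Bool} {k : ℕ} (h : ∃ j, j < k ∧ b j ≠ b' j) :
    cantorLen ξ k < |cpt ξ b k - cpt ξ b' k| := by
  classical
  set j := Nat.find h with hj
  obtain ⟨hjk, hjne⟩ := Nat.find_spec h
  have hmin : ∀ i < j, b i = b' i := by
    intro i hi
    by_contra hne
    exact Nat.find_min h hi ⟨hi.trans hjk, hne⟩
  set d : ℕ → ℝ := fun i => (if b i then cantorR ξ i else 0) - (if b' i then cantorR ξ i else 0) with hd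
  have hsum : cpt ξ b k - cpt ξ b' k = ∑ i ∈ Finset.range k, d i := by
    rw [cpt, cpt, ← Finset.sum_sub_distrib]
  have hsplit : ∑ i ∈ Finset.range k, d i = d j + ∑ i ∈ Finset.Ico (j+1) k, d i := by
    rw [Finset.range_eq_Ico, ← Finset.sum_Ico_consecutive _ (Nat.zero_le j) hjk.le]
    have h0 : ∑ i ∈ Finset.Ico 0 j, d i = 0 := by
      refine Finset.sum_eq_zero fun i hi => ?_
      have := hmin i (Finset.mem_Ico.mp hi).2
      simp [hd, this]
    rw [h0, zero_add, ← Finset.sum_Ico_consecutive _ (Nat.le_succ j) hjk]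
    have h1 : ∑ i ∈ Finset.Ico j (j+1), d i = d j := by simp
    rw [h1]
  have hdj : |d j| = cantorR ξ j := by
    cases hb : b j <;> cases hb' : b' j
    · rw [hb, hb'] at hjne; exact absurd rfl hjne
    · have hv : d j = -(cantorR ξ j) := by simp [hd, hb, hb']
      rw [hv, abs_neg, abs_of_pos (r_pos hξ j)]
    · have hv : d j = cantorR ξ j := by simp [hd, hb, hb']
      rw [hv, abs_of_pos (r_pos hξ j)]
    · rw [hb, hb'] at hjne; exact absurd rfl hjne
  have htail : |∑ i ∈ Finset.Ico (j+1) k, d i| ≤ cantorLen ξ (j+1) - cantorLen ξ k := by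
    calc |∑ i ∈ Finset.Ico (j+1) k, d i| ≤ ∑ i ∈ Finset.Ico (j+1) k, |d i| :=
          Finset.abs_sum_le_sum_abs _ _
    _ ≤ ∑ i ∈ Finset.Ico (j+1) k, cantorR ξ i := by
        refine Finset.sum_le_sum fun i _ => ?_
        rcases Bool.eq_false_or_eq_true (b i) with hb | hb <;>
          rcases Bool.eq_false_or_eq_true (b' i) with hb' | hb' <;>
          simp [hd, hb, hb', abs_of_nonneg (r_pos hξ i).le, (r_pos hξ i).le, abs_of_nonpos]
    _ = cantorLen ξ (j+1) - cantorLen ξ k := sum_r hjk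
  have h2 := two_len_succ_lt hξ j
  have hrj : cantorR ξ j = cantorLen ξ j - cantorLen ξ (j+1) := r_eq j
  calc cantorLen ξ k < cantorR ξ j - (cantorLen ξ (j+1) - cantorLen ξ k) := by linarith
  _ ≤ |d j| - |∑ i ∈ Finset.Ico (j+1) k, d i| := by rw [hdj]; linarith
  _ ≤ |d j + ∑ i ∈ Finset.Ico (j+1) k, d i| := by
      have := abs_add_le (d j + ∑ i ∈ Finset.Ico (j+1) k, d i) (-(∑ i ∈ Finset.Ico (j+1) k, d i))
      simp only [add_neg_cancel_right, abs_neg] at this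
      linarith
  _ = |cpt ξ b k - cpt ξ b' k| := by rw [hsum, hsplit]

omit hξ in
lemma disjoint_Icc_of_far {x y L : ℝ} (h : L < |x - y|) :
    Disjoint (Icc x (x + L)) (Icc y (y + L)) := by
  rw [Set.disjoint_left]
  rintro z ⟨hz1, hz2⟩ ⟨hz3, hz4⟩
  have : |x - y| ≤ L := abs_sub_le_iff.mpr ⟨by linarith, by linarith⟩
  linarith

end basic


section measure_part

variable (hξ : ∀ k, 0 < ξ k ∧ ξ k < 1 / 2)
include hξ

lemma measurable_stage (k : ℕ) : MeasurableSet (cantorStage ξ k) := by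
  rw [stage_eq hξ]
  exact MeasurableSet.iUnion fun ε => measurableSet_Icc

lemma measurable_E : MeasurableSet (symCantorSet ξ) :=
  MeasurableSet.iInter fun k => measurable_stage hξ k

omit hξ in
lemma E_subset_stage (k : ℕ) : symCantorSet ξ ⊆ cantorStage ξ k :=
  Set.iInter_subset _ k

lemma stage_antitone : Antitone (cantorStage ξ) := by
  refine antitone_nat_of_succ_le fun n => ?_
  intro x hx
  obtain ⟨b, hb⟩ := (stage_mem_iff hξ).mp hx
  refine (stage_mem_iff hξ).mpr ⟨b, ?_⟩
  obtain ⟨h1, h2⟩ := hb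
  exact ⟨le_trans (cpt_le_cpt hξ b (Nat.le_succ n)) h1,
    le_trans h2 (cpt_add_len_le hξ b (Nat.le_succ n))⟩

lemma pairwise_disjoint_stage (k : ℕ) :
    Pairwise (Function.onFun Disjoint fun ε : Fin k → Bool =>
      Icc (cpt ξ (extb k ε) k) (cpt ξ (extb k ε) k + cantorLen ξ k)) := by
  intro ε ε' hne
  obtain ⟨j, hj⟩ := Function.ne_iff.mp hne
  refine disjoint_Icc_of_far (sep hξ ⟨j.val, j.isLt, ?_⟩)
  simpa [extb, j.isLt] using hj

lemma volume_stage (k : ℕ) :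
    volume (cantorStage ξ k) = ENNReal.ofReal (pseq ξ k) := by
  rw [stage_eq hξ, measure_iUnion (pairwise_disjoint_stage hξ k) fun ε => measurableSet_Icc]
  have : ∀ ε : Fin k → Bool,
      volume (Icc (cpt ξ (extb k ε) k) (cpt ξ (extb k ε) k + cantorLen ξ k))
        = ENNReal.ofReal (cantorLen ξ k) := by
    intro ε; rw [Real.volume_Icc]; congr 1; ring
  simp_rw [this]
  rw [tsum_fintype, Finset.sum_const, Finset.card_univ, Fintype.card_fun]
  simp only [Fintype.card_bool, Fintype.card_fin, nsmul_eq_mul]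
  rw [pseq, ENNReal.ofReal_mul (by positivity)]
  congr 1
  · rw [Nat.cast_pow]
    rw [show ((2:ℕ) : ENNReal) = ENNReal.ofReal 2 by simp]
    rw [← ENNReal.ofReal_pow (by norm_num)]

omit hξ in
lemma pseq_zero : pseq ξ 0 = 1 := by simp [pseq, cantorLen]

lemma pseq_pos (k : ℕ) : 0 < pseq ξ k := by
  have := len_pos hξ k; rw [pseq]; positivity

omit hξ in
lemma pseq_succ (k : ℕ) : pseq ξ (k + 1) = pseq ξ k * (2 * ξ k) := by
  rw [pseq, pseq, len_succ]; ring

lemma pseq_antitone : Antitone (pseq ξ) := by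
  refine antitone_nat_of_succ_le fun n => ?_
  rw [pseq_succ]
  have h1 := (hξ n).1; have h2 := (hξ n).2; have := pseq_pos hξ n
  nlinarith

lemma pseq_tendsto : Filter.Tendsto (pseq ξ) Filter.atTop (nhds (Pinf ξ)) :=
  tendsto_atTop_ciInf (pseq_antitone hξ)
    ⟨0, fun x ⟨k, hk⟩ => hk ▸ (pseq_pos hξ k).le⟩

lemma Pinf_le (n : ℕ) : Pinf ξ ≤ pseq ξ n :=
  ciInf_le ⟨0, fun x ⟨k, hk⟩ => hk ▸ (pseq_pos hξ k).le⟩ n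

lemma Pinf_nonneg : 0 ≤ Pinf ξ :=
  le_ciInf fun k => (pseq_pos hξ k).le

lemma volume_E : volume (symCantorSet ξ) = ENNReal.ofReal (Pinf ξ) := by
  have h1 : Filter.Tendsto (fun k => volume (cantorStage ξ k)) Filter.atTop
      (nhds (volume (symCantorSet ξ))) := by
    exact tendsto_measure_iInter_atTop
      (fun n => (measurable_stage hξ n).nullMeasurableSet) (stage_antitone hξ)
      ⟨0, by rw [volume_stage hξ]; exact ENNReal.ofReal_ne_top⟩
  have h2 : Filter.Tendsto (fun k => volume (cantorStage ξ k)) Filter.atTop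
      (nhds (ENNReal.ofReal (Pinf ξ))) := by
    simp_rw [volume_stage hξ]
    exact (ENNReal.continuous_ofReal.tendsto _).comp (pseq_tendsto hξ)
  exact tendsto_nhds_unique h1 h2

end measure_part

section comp

variable (hξ : ∀ k, 0 < ξ k ∧ ξ k < 1 / 2) (hP : 0 < Pinf ξ)
include hξ hP

lemma xi_tendsto : Filter.Tendsto ξ Filter.atTop (nhds (1 / 2)) := by
  have hfun : ∀ k, ξ k = pseq ξ (k + 1) / (2 * pseq ξ k) := by
    intro k
    have hp : pseq ξ k ≠ 0 := (pseq_pos hξ k).ne'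
    rw [pseq_succ]; field_simp
  have h1 : Filter.Tendsto (fun k => pseq ξ (k + 1) / (2 * pseq ξ k)) Filter.atTop
      (nhds (Pinf ξ / (2 * Pinf ξ))) := by
    refine Filter.Tendsto.div ?_ (Filter.Tendsto.const_mul _ (pseq_tendsto hξ)) ?_
    · exact (pseq_tendsto hξ).comp (Filter.tendsto_add_atTop_nat 1)
    · positivity
  have h2 : Pinf ξ / (2 * Pinf ξ) = 1 / 2 := by
    rw [div_eq_div_iff (by positivity) (by norm_num)]; ring
  rw [h2] at h1
  exact h1.congr fun k => (hfun k).symm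

lemma rho_pos (n : ℕ) : 0 < rho ξ n := div_pos hP (pseq_pos hξ n)

lemma rho_le_one (n : ℕ) : rho ξ n ≤ 1 :=
  div_le_one_of_le₀ (Pinf_le hξ n) (pseq_pos hξ n).le

lemma rho_tendsto : Filter.Tendsto (rho ξ) Filter.atTop (nhds 1) := by
  have h1 : Filter.Tendsto (rho ξ) Filter.atTop (nhds (Pinf ξ / Pinf ξ)) :=
    Filter.Tendsto.div tendsto_const_nhds (pseq_tendsto hξ) hP.ne'
  rwa [div_self hP.ne'] at h1

lemma rho_mul_len (n : ℕ) : rho ξ n * cantorLen ξ n = Pinf ξ / 2 ^ n := by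
  have hL := len_pos hξ n
  rw [rho_def, pseq, div_mul_eq_mul_div, div_eq_div_iff (by positivity) (by positivity)]
  ring

end comp

def glue (b : ℕ → Bool) (n m : ℕ) (τ : Fin (m - n) → Bool) : ℕ → Bool :=
  fun j => if j < n then b j else if h : j - n < m - n then τ ⟨j - n, h⟩ else false

section comp2

variable (hξ : ∀ k, 0 < ξ k ∧ ξ k < 1 / 2)
include hξ

lemma stage_inter_comp_subset {n m : ℕ} (h : n ≤ m) (b : ℕ → Bool) :
    cantorStage ξ m ∩ Icc (cpt ξ b n) (cpt ξ b n + cantorLen ξ n) ⊆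
      ⋃ τ : Fin (m - n) → Bool,
        Icc (cpt ξ (glue b n m τ) m) (cpt ξ (glue b n m τ) m + cantorLen ξ m) := by
  rintro x ⟨hx1, hx2⟩
  obtain ⟨b', hb'⟩ := (stage_mem_iff hξ).mp hx1
  have hxn : x ∈ Icc (cpt ξ b' n) (cpt ξ b' n + cantorLen ξ n) :=
    ⟨le_trans (cpt_le_cpt hξ b' h) hb'.1, le_trans hb'.2 (cpt_add_len_le hξ b' h)⟩
  have hagree : ∀ j < n, b' j = b j := by
    by_contra hc
    push_neg at hc
    obtain ⟨j, hj, hne⟩ := hc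
    have hdisj := disjoint_Icc_of_far (sep hξ (b := b') (b' := b) ⟨j, hj, hne⟩)
    exact (Set.disjoint_left.mp hdisj) hxn hx2
  refine mem_iUnion.mpr ⟨fun i => b' (n + i.val), ?_⟩
  have hcg : cpt ξ (glue b n m (fun i => b' (n + i.val))) m = cpt ξ b' m := by
    refine cpt_congr fun j hj => ?_
    by_cases hjn : j < n
    · simp [glue, hjn, hagree j hjn]
    · have h1 : j - n < m - n := by omega
      have h2 : n + (j - n) = j := by omega
      simp [glue, hjn, h1, h2]
  rw [hcg]
  exact hb'

lemma volume_stage_inter_comp_le {n m : ℕ} (h : n ≤ m) (b : ℕ → Bool) :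
    volume (cantorStage ξ m ∩ Icc (cpt ξ b n) (cpt ξ b n + cantorLen ξ n)) ≤
      ENNReal.ofReal (pseq ξ m / 2 ^ n) := by
  refine le_trans (measure_mono (stage_inter_comp_subset hξ h b)) ?_
  refine le_trans (measure_iUnion_le _) ?_
  have hv : ∀ τ : Fin (m - n) → Bool,
      volume (Icc (cpt ξ (glue b n m τ) m) (cpt ξ (glue b n m τ) m + cantorLen ξ m))
        = ENNReal.ofReal (cantorLen ξ m) := by
    intro τ; rw [Real.volume_Icc]; congr 1; ring
  simp_rw [hv]
  rw [tsum_fintype, Finset.sum_const, Finset.card_univ, Fintype.card_fun]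
  simp only [Fintype.card_bool, Fintype.card_fin, nsmul_eq_mul]
  have heq : pseq ξ m / 2 ^ n = 2 ^ (m - n) * cantorLen ξ m := by
    have h2 : (2:ℝ) ^ (m - n) * 2 ^ n = 2 ^ m := by rw [← pow_add]; congr 1; omega
    rw [pseq, div_eq_iff (by positivity : ((2:ℝ) ^ n) ≠ 0), mul_right_comm, h2]
  rw [heq, ENNReal.ofReal_mul (by positivity)]
  gcongr
  rw [Nat.cast_pow]
  rw [show ((2:ℕ) : ENNReal) = ENNReal.ofReal 2 by simp]
  rw [← ENNReal.ofReal_pow (by norm_num)]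

lemma volume_E_comp (hP : 0 < Pinf ξ) (n : ℕ) (b : ℕ → Bool) :
    volume (symCantorSet ξ ∩ Icc (cpt ξ b n) (cpt ξ b n + cantorLen ξ n)) =
      ENNReal.ofReal (Pinf ξ / 2 ^ n) := by
  -- upper bound, for every b
  have hub : ∀ b' : ℕ → Bool,
      volume (symCantorSet ξ ∩ Icc (cpt ξ b' n) (cpt ξ b' n + cantorLen ξ n)) ≤
        ENNReal.ofReal (Pinf ξ / 2 ^ n) := by
    intro b'
    have htend : Filter.Tendsto (fun m => ENNReal.ofReal (pseq ξ m / 2 ^ n)) Filter.atTop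
        (nhds (ENNReal.ofReal (Pinf ξ / 2 ^ n))) := by
      refine (ENNReal.continuous_ofReal.tendsto _).comp ?_
      exact (pseq_tendsto hξ).div_const _
    refine ge_of_tendsto htend ?_
    refine Filter.eventually_atTop.mpr ⟨n, fun m hm => ?_⟩
    refine le_trans (measure_mono ?_) (volume_stage_inter_comp_le hξ hm b')
    exact Set.inter_subset_inter_left _ (E_subset_stage m)
  -- decomposition
  have hdecomp : volume (symCantorSet ξ) = ∑ ε : Fin n → Bool,
      volume (symCantorSet ξ ∩
        Icc (cpt ξ (extb n ε) n) (cpt ξ (extb n ε) n + cantorLen ξ n)) := by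
    have hEeq : symCantorSet ξ = ⋃ ε : Fin n → Bool, (symCantorSet ξ ∩
        Icc (cpt ξ (extb n ε) n) (cpt ξ (extb n ε) n + cantorLen ξ n)) := by
      apply Set.Subset.antisymm
      · intro x hx
        have := E_subset_stage (ξ := ξ) n hx
        rw [stage_eq hξ] at this
        obtain ⟨ε, hε⟩ := mem_iUnion.mp this
        exact mem_iUnion.mpr ⟨ε, hx, hε⟩
      · exact Set.iUnion_subset fun ε => Set.inter_subset_left
    have hpair : Pairwise (Function.onFun Disjoint fun ε : Fin n → Bool =>
        symCantorSet ξ ∩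
          Icc (cpt ξ (extb n ε) n) (cpt ξ (extb n ε) n + cantorLen ξ n)) := by
      intro ε ε' hne
      exact Disjoint.mono Set.inter_subset_right Set.inter_subset_right
        (pairwise_disjoint_stage hξ n hne)
    conv_lhs => rw [hEeq]
    rw [measure_iUnion hpair fun ε => (measurable_E hξ).inter measurableSet_Icc, tsum_fintype]
  -- reduce b to an ε
  have hbe : cpt ξ b n = cpt ξ (extb n (fun j : Fin n => b j.val)) n := by
    refine cpt_congr fun j hj => ?_
    simp [extb, hj]
  set ε₀ : Fin n → Bool := fun j : Fin n => b j.val with hε₀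
  rw [hbe]
  -- real-valued bookkeeping
  set w : (Fin n → Bool) → ℝ := fun ε => (volume (symCantorSet ξ ∩
    Icc (cpt ξ (extb n ε) n) (cpt ξ (extb n ε) n + cantorLen ξ n))).toReal with hw
  have hfin : ∀ ε : Fin n → Bool, volume (symCantorSet ξ ∩
      Icc (cpt ξ (extb n ε) n) (cpt ξ (extb n ε) n + cantorLen ξ n)) ≠ ⊤ := by
    intro ε
    refine ne_top_of_le_ne_top ?_ (measure_mono Set.inter_subset_right)
    rw [Real.volume_Icc]
    exact ENNReal.ofReal_ne_top
  have hwub : ∀ ε : Fin n → Bool, w ε ≤ Pinf ξ / 2 ^ n := by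
    intro ε
    refine ENNReal.toReal_le_of_le_ofReal (by positivity) (hub _)
  have hwsum : ∑ ε : Fin n → Bool, w ε = Pinf ξ := by
    have h1 := congrArg ENNReal.toReal hdecomp
    rw [volume_E hξ, ENNReal.toReal_ofReal (Pinf_nonneg hξ)] at h1
    have hts : (∑ ε : Fin n → Bool, volume (symCantorSet ξ ∩
        Icc (cpt ξ (extb n ε) n) (cpt ξ (extb n ε) n + cantorLen ξ n))).toReal
        = ∑ ε : Fin n → Bool, w ε := ENNReal.toReal_sum fun ε _ => hfin ε
    rw [← hts]; exact h1.symm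
  have hcard : (Fintype.card (Fin n → Bool) : ℝ) = 2 ^ n := by
    rw [Fintype.card_fun]; simp
  have hkey : w ε₀ = Pinf ξ / 2 ^ n := by
    refine le_antisymm (hwub ε₀) ?_
    have hsum_erase : ∑ ε ∈ Finset.univ.erase ε₀, w ε ≤
        (Finset.univ.erase ε₀).card * (Pinf ξ / 2 ^ n) := by
      refine le_trans (Finset.sum_le_sum fun ε _ => hwub ε) ?_
      rw [Finset.sum_const, nsmul_eq_mul]
    have hsplit : w ε₀ + ∑ ε ∈ Finset.univ.erase ε₀, w ε = Pinf ξ := by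
      rw [Finset.add_sum_erase _ _ (Finset.mem_univ ε₀)]
      exact hwsum
    have hc : ((Finset.univ.erase ε₀).card : ℝ) = 2 ^ n - 1 := by
      rw [Finset.card_erase_of_mem (Finset.mem_univ ε₀), Finset.card_univ]
      have h1 : (1:ℕ) ≤ Fintype.card (Fin n → Bool) := Fintype.card_pos
      rw [Nat.cast_sub h1, hcard]
      simp
    rw [hc] at hsum_erase
    have h2n : (0:ℝ) < 2 ^ n := by positivity
    have : Pinf ξ ≤ w ε₀ + (2 ^ n - 1) * (Pinf ξ / 2 ^ n) := by linarith
    have hdiv : (2 ^ n - 1) * (Pinf ξ / 2 ^ n) = Pinf ξ - Pinf ξ / 2 ^ n := by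
      field_simp
    rw [hdiv] at this
    linarith
  have hkey' : (volume (symCantorSet ξ ∩
      Icc (cpt ξ (extb n ε₀) n) (cpt ξ (extb n ε₀) n + cantorLen ξ n))).toReal
      = Pinf ξ / 2 ^ n := hkey
  rw [← ENNReal.ofReal_toReal (hfin ε₀), hkey']

end comp2


section steinhaus

lemma diff_window (u v Ln : ℝ) (hLn : 0 ≤ Ln) :
    volume (Icc u (u + Ln) \ Icc (max u v) (min (u + Ln) (v + Ln))) ≤
      ENNReal.ofReal |u - v| := by
  rcases le_total u v with huv | huv
  · have hsub : Icc u (u + Ln) \ Icc (max u v) (min (u + Ln) (v + Ln)) ⊆ Icc u v := by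
      rintro x ⟨⟨hx1, hx2⟩, hx3⟩
      simp only [mem_Icc, not_and, not_le] at hx3
      refine ⟨hx1, ?_⟩
      by_contra hxv
      push_neg at hxv
      have h1 : max u v ≤ x := max_le hx1 hxv.le
      have h2 := hx3 h1
      have h3 : min (u + Ln) (v + Ln) ≤ u + Ln := min_le_left _ _
      have h4 : x ≤ min (u + Ln) (v + Ln) := le_min hx2 (by linarith)
      linarith
    refine le_trans (measure_mono hsub) ?_
    rw [Real.volume_Icc]
    exact ENNReal.ofReal_le_ofReal (by rw [abs_sub_comm, abs_of_nonneg (by linarith)])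
  · have hsub : Icc u (u + Ln) \ Icc (max u v) (min (u + Ln) (v + Ln)) ⊆
        Icc (v + Ln) (u + Ln) := by
      rintro x ⟨⟨hx1, hx2⟩, hx3⟩
      simp only [mem_Icc, not_and, not_le] at hx3
      refine ⟨?_, hx2⟩
      by_contra hxv
      push_neg at hxv
      have h1 : max u v ≤ x := by rw [max_eq_left huv]; exact hx1
      have h2 := hx3 h1
      have h4 : x ≤ min (u + Ln) (v + Ln) := le_min hx2 hxv.le
      linarith
    refine le_trans (measure_mono hsub) ?_
    rw [Real.volume_Icc]
    exact ENNReal.ofReal_le_ofReal (by rw [abs_of_nonneg (by linarith)]; linarith)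

lemma steinhaus_window {A B : Set ℝ} {a b t Ln ρ : ℝ} (hLn : 0 < Ln) (hρ1 : ρ ≤ 1)
    (hA : A ⊆ Icc a (a + Ln)) (hB : B ⊆ Icc b (b + Ln))
    (hAm : MeasurableSet A) (hBm : MeasurableSet B)
    (hvA : ENNReal.ofReal (ρ * Ln) ≤ volume A) (hvB : ENNReal.ofReal (ρ * Ln) ≤ volume B)
    (hs : |a - (b + t)| < (2 * ρ - 1) * Ln) :
    0 < volume (A ∩ {x | x - t ∈ B}) := by
  set c := b + t with hc
  have hρhalf : 1 / 2 < ρ := by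
    have h0 : 0 ≤ |a - c| := abs_nonneg _
    nlinarith
  have hslt : |a - c| < Ln := lt_of_lt_of_le hs (by nlinarith)
  set W : Set ℝ := Icc (max a c) (min (a + Ln) (c + Ln)) with hW
  set W' : Set ℝ := Icc (max b (a - t)) (min (b + Ln) (a - t + Ln)) with hW'
  have hWmeas : MeasurableSet W := measurableSet_Icc
  have hTb : {x : ℝ | x - t ∈ B} = (fun x => x + -t) ⁻¹' B := by
    ext x; simp [sub_eq_add_neg]
  have hvolW : volume W = ENNReal.ofReal (Ln - |a - c|) := by
    rw [hW, Real.volume_Icc]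
    congr 1
    rcases le_total a c with h | h
    · rw [max_eq_right h, min_eq_left (by linarith), abs_of_nonpos (by linarith)]; ring
    · rw [max_eq_left h, min_eq_right (by linarith), abs_of_nonneg (by linarith)]; ring
  -- measure of Y := {x | x - t ∈ B} ∩ W equals measure of B ∩ W'
  have hWW : ∀ x : ℝ, x ∈ W ↔ x + -t ∈ W' := by
    intro x
    simp only [hW, hW', mem_Icc, sup_le_iff, le_inf_iff]
    constructor <;> rintro ⟨⟨h1, h2⟩, h3, h4⟩ <;>
      exact ⟨⟨by linarith, by linarith⟩, by linarith, by linarith⟩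
  have hYeq : {x : ℝ | x - t ∈ B} ∩ W = (fun x => x + -t) ⁻¹' (B ∩ W') := by
    rw [hTb]
    ext x
    simp only [mem_inter_iff, mem_preimage]
    rw [← hWW x]
  have hvolY : volume ({x : ℝ | x - t ∈ B} ∩ W) = volume (B ∩ W') := by
    rw [hYeq, measure_preimage_add_right]
  -- lower bounds
  have hXlow : ENNReal.ofReal (ρ * Ln) ≤ volume (A ∩ W) + ENNReal.ofReal |a - c| := by
    refine le_trans hvA ?_
    have h1 : volume A = volume (A ∩ W) + volume (A \ W) :=
      (measure_inter_add_diff A hWmeas).symm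
    rw [h1]
    gcongr
    refine le_trans (measure_mono (diff_subset_diff_left hA)) ?_
    exact diff_window a c Ln hLn.le
  have hYlow : ENNReal.ofReal (ρ * Ln) ≤ volume (B ∩ W') + ENNReal.ofReal |a - c| := by
    refine le_trans hvB ?_
    have h1 : volume B = volume (B ∩ W') + volume (B \ W') :=
      (measure_inter_add_diff B measurableSet_Icc).symm
    rw [h1]
    gcongr
    have h2 := diff_window b (a - t) Ln hLn.le
    have h3 : |b - (a - t)| = |a - c| := by rw [hc, abs_sub_comm]; congr 1; ring
    rw [h3] at h2
    exact le_trans (measure_mono (diff_subset_diff_left hB)) h2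
  -- conclude
  rw [pos_iff_ne_zero]
  intro h0
  have hXY0 : volume ((A ∩ W) ∩ ({x : ℝ | x - t ∈ B} ∩ W)) = 0 := by
    refine measure_mono_null ?_ h0
    intro x ⟨⟨hx1, _⟩, hx2, _⟩
    exact ⟨hx1, hx2⟩
  have hunion : volume (A ∩ W) + volume ({x : ℝ | x - t ∈ B} ∩ W) ≤
      ENNReal.ofReal (Ln - |a - c|) := by
    have hYm : MeasurableSet ({x : ℝ | x - t ∈ B} ∩ W) := by
      rw [hTb]; exact (hBm.preimage (measurable_add_const (-t))).inter hWmeas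
    have h1 := measure_union_add_inter (μ := volume) (A ∩ W) hYm
    rw [hXY0, add_zero] at h1
    rw [← h1, ← hvolW]
    refine measure_mono ?_
    rintro x (⟨_, hx⟩ | ⟨_, hx⟩) <;> exact hx
  have hsum : ENNReal.ofReal (ρ * Ln) + ENNReal.ofReal (ρ * Ln) ≤
      ENNReal.ofReal (Ln - |a - c|) + (ENNReal.ofReal |a - c| + ENNReal.ofReal |a - c|) := by
    calc ENNReal.ofReal (ρ * Ln) + ENNReal.ofReal (ρ * Ln)
        ≤ (volume (A ∩ W) + ENNReal.ofReal |a - c|) +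
          (volume ({x : ℝ | x - t ∈ B} ∩ W) + ENNReal.ofReal |a - c|) := by
          refine add_le_add hXlow ?_
          rw [hvolY]; exact hYlow
    _ = (volume (A ∩ W) + volume ({x : ℝ | x - t ∈ B} ∩ W)) +
          (ENNReal.ofReal |a - c| + ENNReal.ofReal |a - c|) := by ring
    _ ≤ _ := by gcongr
  have hρLn : 0 ≤ ρ * Ln := by nlinarith
  have habs : 0 ≤ |a - c| := abs_nonneg _
  rw [← ENNReal.ofReal_add hρLn hρLn, ← ENNReal.ofReal_add habs habs,
    ← ENNReal.ofReal_add (by linarith) (by linarith)] at hsum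
  rw [ENNReal.ofReal_le_ofReal_iff (by linarith)] at hsum
  nlinarith

end steinhaus


section greedy

lemma sigma_insert (δ : ℤ) (σ' : ℕ → ℤ) {i n : ℕ} (h : i < n) :
    ∑ j ∈ Finset.Ico i n, (((if j = i then δ else σ' j) : ℤ) : ℝ) * cantorR ξ j
      = (δ : ℝ) * cantorR ξ i + ∑ j ∈ Finset.Ico (i+1) n, ((σ' j : ℤ) : ℝ) * cantorR ξ j := by
  rw [Finset.sum_eq_sum_Ico_succ_bot h]
  simp only [if_pos rfl]
  congr 1
  refine Finset.sum_congr rfl fun j hj => ?_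
  have hji : ¬ (j = i) := by have := (Finset.mem_Ico.mp hj).1; omega
  rw [if_neg hji]

variable (hξ : ∀ k, 0 < ξ k ∧ ξ k < 1 / 2) {k₀ : ℕ} (h45 : ∀ j, k₀ ≤ j → 2/5 ≤ ξ j)
include hξ h45

lemma r_le_32 {j : ℕ} (hj : k₀ ≤ j) : cantorR ξ j ≤ 3/2 * cantorLen ξ (j+1) := by
  have h1 := h45 j hj
  have h2 := len_pos hξ j
  have h3 := r_eq (ξ := ξ) j
  have h4 := len_succ (ξ := ξ) j
  nlinarith

lemma regime : ∀ (d i : ℕ) (s : ℝ), k₀ ≤ i → |s| ≤ 3/4 * cantorLen ξ i →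
    ∃ σ : ℕ → ℤ, (∀ j, σ j = -1 ∨ σ j = 0 ∨ σ j = 1) ∧
      |s - ∑ j ∈ Finset.Ico i (i + d), ((σ j : ℤ) : ℝ) * cantorR ξ j|
        ≤ 3/4 * cantorLen ξ (i + d) := by
  intro d
  induction d with
  | zero => intro i s _ hs; exact ⟨fun _ => 0, fun j => Or.inr (Or.inl rfl), by simpa using hs⟩
  | succ d ih =>
    intro i s hi hs
    have hLi := len_pos hξ i
    have hLi1 := len_pos hξ (i+1)
    have hle := len_le hξ (Nat.le_succ i)
    have hr := r_eq (ξ := ξ) i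
    have hr32 := r_le_32 hξ h45 hi
    have hstep : ∃ δ : ℤ, (δ = -1 ∨ δ = 0 ∨ δ = 1) ∧
        |s - (δ : ℝ) * cantorR ξ i| ≤ 3/4 * cantorLen ξ (i+1) := by
      rcases le_or_gt (|s|) (3/4 * cantorLen ξ (i+1)) with h1 | h1
      · exact ⟨0, Or.inr (Or.inl rfl), by simpa using h1⟩
      · rcases le_total 0 s with h2 | h2
        · refine ⟨1, Or.inr (Or.inr rfl), ?_⟩
          rw [abs_of_nonneg h2] at h1 hs
          rw [abs_le]
          constructor <;> push_cast <;> linarith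
        · refine ⟨-1, Or.inl rfl, ?_⟩
          rw [abs_of_nonpos h2] at h1 hs
          rw [abs_le]
          constructor <;> push_cast <;> linarith
    obtain ⟨δ, hδ, hs'⟩ := hstep
    obtain ⟨σ', hσ', hb⟩ := ih (i+1) (s - (δ : ℝ) * cantorR ξ i) (hi.trans (Nat.le_succ i)) hs'
    refine ⟨fun j => if j = i then δ else σ' j, ?_, ?_⟩
    · intro j; by_cases hj : j = i <;> simp [hj, hδ, hσ' j]
    · rw [show i + (d + 1) = (i + 1) + d by omega] at *
      rw [sigma_insert δ σ' (by omega : i < (i+1) + d)]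
      have heq : s - ((δ : ℝ) * cantorR ξ i +
          ∑ j ∈ Finset.Ico (i+1) ((i+1) + d), ((σ' j : ℤ) : ℝ) * cantorR ξ j)
          = (s - (δ : ℝ) * cantorR ξ i) -
          ∑ j ∈ Finset.Ico (i+1) ((i+1) + d), ((σ' j : ℤ) : ℝ) * cantorR ξ j := by ring
      rw [heq]
      exact hb

lemma approxB : ∀ (d i : ℕ) (s : ℝ), k₀ ≤ i → |s| < cantorLen ξ i →
    |s| ≤ (cantorLen ξ i - cantorLen ξ (i + d)) + 3/4 * cantorLen ξ (i + d) →
    ∃ σ : ℕ → ℤ, (∀ j, σ j = -1 ∨ σ j = 0 ∨ σ j = 1) ∧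
      |s - ∑ j ∈ Finset.Ico i (i + d), ((σ j : ℤ) : ℝ) * cantorR ξ j|
        ≤ 3/4 * cantorLen ξ (i + d) := by
  intro d
  induction d with
  | zero =>
    intro i s hi _ hs2
    refine regime hξ h45 0 i s hi ?_
    simpa using hs2
  | succ d ih =>
    intro i s hi hs1 hs2
    have hLi := len_pos hξ i
    have hLi1 := len_pos hξ (i+1)
    have hLm := len_pos hξ (i + (d+1))
    have hle := len_le hξ (Nat.le_succ i)
    have hlem : cantorLen ξ (i + (d+1)) ≤ cantorLen ξ (i+1) := len_le hξ (by omega)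
    have hr := r_eq (ξ := ξ) i
    have hr32 := r_le_32 hξ h45 hi
    rcases le_or_gt (|s|) (3/4 * cantorLen ξ (i+1)) with h1 | h1
    · exact regime hξ h45 (d+1) i s hi (le_trans h1 (by linarith))
    · have hstep : ∃ δ : ℤ, (δ = -1 ∨ δ = 0 ∨ δ = 1) ∧
          |s - (δ : ℝ) * cantorR ξ i| < cantorLen ξ (i+1) ∧
          |s - (δ : ℝ) * cantorR ξ i| ≤
            (cantorLen ξ (i+1) - cantorLen ξ ((i+1) + d)) + 3/4 * cantorLen ξ ((i+1) + d) := by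
        have hmm : (i+1) + d = i + (d+1) := by omega
        rcases le_total 0 s with h2 | h2
        · refine ⟨1, Or.inr (Or.inr rfl), ?_, ?_⟩
          · rw [abs_of_nonneg h2] at h1 hs1
            rw [abs_lt]
            constructor <;> push_cast <;> linarith
          · rw [abs_of_nonneg h2] at h1 hs1 hs2
            rw [hmm, abs_le]
            constructor <;> push_cast <;> linarith
        · refine ⟨-1, Or.inl rfl, ?_, ?_⟩
          · rw [abs_of_nonpos h2] at h1 hs1
            rw [abs_lt]
            constructor <;> push_cast <;> linarith
          · rw [abs_of_nonpos h2] at h1 hs1 hs2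
            rw [hmm, abs_le]
            constructor <;> push_cast <;> linarith
      obtain ⟨δ, hδ, hs1', hs2'⟩ := hstep
      obtain ⟨σ', hσ', hb⟩ := ih (i+1) (s - (δ : ℝ) * cantorR ξ i) (by omega) hs1' hs2'
      refine ⟨fun j => if j = i then δ else σ' j, ?_, ?_⟩
      · intro j; by_cases hj : j = i <;> simp [hj, hδ, hσ' j]
      · rw [show i + (d + 1) = (i + 1) + d by omega] at *
        rw [sigma_insert δ σ' (by omega : i < (i+1) + d)]
        have heq : s - ((δ : ℝ) * cantorR ξ i +
            ∑ j ∈ Finset.Ico (i+1) ((i+1) + d), ((σ' j : ℤ) : ℝ) * cantorR ξ j)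
            = (s - (δ : ℝ) * cantorR ξ i) -
            ∑ j ∈ Finset.Ico (i+1) ((i+1) + d), ((σ' j : ℤ) : ℝ) * cantorR ξ j := by ring
        rw [heq]
        exact hb

lemma approx_main {s : ℝ} (hs : |s| < cantorLen ξ k₀) (N : ℕ) :
    ∃ n, N ≤ n ∧ k₀ ≤ n ∧ ∃ σ : ℕ → ℤ, (∀ j, σ j = -1 ∨ σ j = 0 ∨ σ j = 1) ∧
      |s - ∑ j ∈ Finset.Ico k₀ n, ((σ j : ℤ) : ℝ) * cantorR ξ j|
        ≤ 3/4 * cantorLen ξ n := by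
  have htend : Filter.Tendsto (fun d => cantorLen ξ k₀ - (1/4) * cantorLen ξ (k₀ + d))
      Filter.atTop (nhds (cantorLen ξ k₀ - (1/4) * 0)) := by
    refine Filter.Tendsto.sub tendsto_const_nhds (Filter.Tendsto.const_mul _ ?_)
    have haux : Filter.Tendsto (fun d : ℕ => k₀ + d) Filter.atTop Filter.atTop := by
      simpa [add_comm] using Filter.tendsto_add_atTop_nat k₀
    exact (len_tendsto hξ).comp haux
  rw [mul_zero, sub_zero] at htend
  obtain ⟨d₀, hd₀⟩ := (htend.eventually (eventually_gt_nhds hs)).exists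
  set d := max d₀ (N - k₀) with hd
  have hmono : cantorLen ξ (k₀ + d) ≤ cantorLen ξ (k₀ + d₀) := len_le hξ (by omega)
  have hbound : |s| ≤ (cantorLen ξ k₀ - cantorLen ξ (k₀ + d)) + 3/4 * cantorLen ξ (k₀ + d) := by
    linarith
  obtain ⟨σ, hσ, hb⟩ := approxB hξ h45 d k₀ s le_rfl hs hbound
  exact ⟨k₀ + d, by omega, by omega, σ, hσ, hb⟩

end greedy

end CantorAux


open CantorAux in
theorem essDiff_symCantorSet_eq_stage (ξ : ℕ → ℝ)
    (hξ : ∀ k, 0 < ξ k ∧ ξ k < 1 / 2)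
    (hpos : 0 < volume (symCantorSet ξ)) :
    (∃ k, essDiff (symCantorSet ξ) = essDiff (cantorStage ξ k)) ∧
      ∃ s : Finset (ℝ × ℝ), essDiff (symCantorSet ξ) = ⋃ p ∈ s, Set.Ioo p.1 p.2 := by
  classical
  have hP0 : 0 < Pinf ξ := by
    rw [volume_E hξ] at hpos
    exact ENNReal.ofReal_pos.mp hpos
  obtain ⟨k₀, h45⟩ : ∃ k₀, ∀ j, k₀ ≤ j → 2/5 ≤ ξ j :=
    Filter.eventually_atTop.mp ((xi_tendsto hξ hP0).eventually
      (eventually_ge_nhds (by norm_num : (2/5 : ℝ) < 1/2)))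
  set Lk := cantorLen ξ k₀ with hLk
  set g : (Fin k₀ → Bool) → ℝ := fun ε => cpt ξ (extb k₀ ε) k₀ with hg
  have hLkpos : 0 < Lk := len_pos hξ k₀
  -- key 1 : extraction from essDiff of the stage
  have key_lt : ∀ t, t ∈ essDiff (cantorStage ξ k₀) →
      ∃ ε ε' : Fin k₀ → Bool, |t - (g ε - g ε')| < Lk := by
    intro t ht
    simp only [essDiff, mem_setOf_eq] at ht
    rw [stage_eq hξ k₀] at ht
    by_contra hc
    push_neg at hc
    have hnull : ∀ ε ε' : Fin k₀ → Bool,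
        volume (Icc (g ε) (g ε + Lk) ∩ {x | x - t ∈ Icc (g ε') (g ε' + Lk)}) = 0 := by
      intro ε ε'
      have hset : {x : ℝ | x - t ∈ Icc (g ε') (g ε' + Lk)} =
          Icc (g ε' + t) (g ε' + Lk + t) := by
        ext x
        simp only [mem_setOf_eq, mem_Icc]
        constructor <;> rintro ⟨h1, h2⟩ <;> constructor <;> linarith
      rw [hset, Set.Icc_inter_Icc, Real.volume_Icc]
      rw [ENNReal.ofReal_eq_zero]
      have habs := hc ε ε'
      rcases abs_cases (t - (g ε - g ε')) with ⟨heq, _⟩ | ⟨heq, _⟩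
      · rw [heq] at habs
        calc (g ε + Lk) ⊓ (g ε' + Lk + t) - (g ε) ⊔ (g ε' + t)
            ≤ (g ε + Lk) - (g ε' + t) := by
              refine sub_le_sub (inf_le_left) (le_sup_right)
        _ ≤ 0 := by linarith
      · rw [heq] at habs
        calc (g ε + Lk) ⊓ (g ε' + Lk + t) - (g ε) ⊔ (g ε' + t)
            ≤ (g ε' + Lk + t) - g ε := by
              refine sub_le_sub (inf_le_right) (le_sup_left)
        _ ≤ 0 := by linarith
    have hzero : volume ((⋃ ε : Fin k₀ → Bool, Icc (g ε) (g ε + Lk)) ∩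
        {x | x - t ∈ ⋃ ε' : Fin k₀ → Bool, Icc (g ε') (g ε' + Lk)}) = 0 := by
      refine measure_mono_null ?_
        (measure_iUnion_null fun ε => measure_iUnion_null fun ε' => hnull ε ε')
      rintro x ⟨hx1, hx2⟩
      obtain ⟨ε, hε⟩ := mem_iUnion.mp hx1
      obtain ⟨ε', hε'⟩ := mem_iUnion.mp (mem_setOf_eq ▸ hx2)
      exact mem_iUnion.mpr ⟨ε, mem_iUnion.mpr ⟨ε', hε, hε'⟩⟩
    rw [hzero] at ht
    exact lt_irrefl 0 ht
  -- key 2 : membership in essDiff of the Cantor set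
  have key_mem : ∀ (t : ℝ) (ε ε' : Fin k₀ → Bool), |t - (g ε - g ε')| < Lk →
      t ∈ essDiff (symCantorSet ξ) := by
    intro t ε ε' hlt
    obtain ⟨N, hN⟩ := Filter.eventually_atTop.mp ((rho_tendsto hξ hP0).eventually
      (eventually_gt_nhds (by norm_num : (7/8 : ℝ) < 1)))
    obtain ⟨n, hNn, hk₀n, σ, hσ, hb⟩ := approx_main hξ h45 hlt N
    set bA : ℕ → Bool := fun j => if j < k₀ then extb k₀ ε j else
      if j < n then decide (σ j = 1) else false with hbA
    set bB : ℕ → Bool := fun j => if j < k₀ then extb k₀ ε' j else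
      if j < n then decide (σ j = -1) else false with hbB
    set cA := cpt ξ bA n with hcA
    set cB := cpt ξ bB n with hcB
    have hLnpos := len_pos hξ n
    have hcAeq : cA = g ε + ∑ j ∈ Finset.Ico k₀ n,
        (if σ j = 1 then cantorR ξ j else 0) := by
      rw [hcA, cpt_split bA hk₀n]
      congr 1
      · refine cpt_congr fun j hj => ?_
        simp [hbA, hj]
      · refine Finset.sum_congr rfl fun j hj => ?_
        obtain ⟨hj1, hj2⟩ := Finset.mem_Ico.mp hj
        have hj1' : ¬ (j < k₀) := by omega
        simp [hbA, hj1', hj2]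
    have hcBeq : cB = g ε' + ∑ j ∈ Finset.Ico k₀ n,
        (if σ j = -1 then cantorR ξ j else 0) := by
      rw [hcB, cpt_split bB hk₀n]
      congr 1
      · refine cpt_congr fun j hj => ?_
        simp [hbB, hj]
      · refine Finset.sum_congr rfl fun j hj => ?_
        obtain ⟨hj1, hj2⟩ := Finset.mem_Ico.mp hj
        have hj1' : ¬ (j < k₀) := by omega
        simp [hbB, hj1', hj2]
    have hsumeq : (∑ j ∈ Finset.Ico k₀ n, (if σ j = 1 then cantorR ξ j else 0)) -
        (∑ j ∈ Finset.Ico k₀ n, (if σ j = -1 then cantorR ξ j else 0)) =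
        ∑ j ∈ Finset.Ico k₀ n, ((σ j : ℤ) : ℝ) * cantorR ξ j := by
      rw [← Finset.sum_sub_distrib]
      refine Finset.sum_congr rfl fun j _ => ?_
      rcases hσ j with h | h | h <;> rw [h] <;> norm_num
    have hwin : |cA - (cB + t)| < (2 * rho ξ n - 1) * cantorLen ξ n := by
      have hdiff : cA - (cB + t) = -((t - (g ε - g ε')) -
          ∑ j ∈ Finset.Ico k₀ n, ((σ j : ℤ) : ℝ) * cantorR ξ j) := by
        rw [hcAeq, hcBeq, ← hsumeq]; ring
      rw [hdiff, abs_neg]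
      have hρn := hN n hNn
      calc |t - (g ε - g ε') - ∑ j ∈ Finset.Ico k₀ n, ((σ j : ℤ) : ℝ) * cantorR ξ j|
          ≤ 3/4 * cantorLen ξ n := hb
      _ < (2 * rho ξ n - 1) * cantorLen ξ n := by nlinarith
    have hst := steinhaus_window (A := symCantorSet ξ ∩ Icc cA (cA + cantorLen ξ n))
      (B := symCantorSet ξ ∩ Icc cB (cB + cantorLen ξ n))
      (a := cA) (b := cB) (t := t) (Ln := cantorLen ξ n) (ρ := rho ξ n)
      hLnpos (rho_le_one hξ hP0 n) Set.inter_subset_right Set.inter_subset_right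
      ((measurable_E hξ).inter measurableSet_Icc)
      ((measurable_E hξ).inter measurableSet_Icc)
      (by rw [rho_mul_len hξ hP0 n, volume_E_comp hξ hP0 n bA])
      (by rw [rho_mul_len hξ hP0 n, volume_E_comp hξ hP0 n bB])
      hwin
    simp only [essDiff, mem_setOf_eq]
    refine lt_of_lt_of_le hst (measure_mono ?_)
    rintro x ⟨⟨hx1, _⟩, hx2⟩
    exact ⟨hx1, (mem_setOf_eq ▸ hx2).1⟩
  -- key 3 : monotonicity
  have key_mono : essDiff (symCantorSet ξ) ⊆ essDiff (cantorStage ξ k₀) := by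
    intro t ht
    simp only [essDiff, mem_setOf_eq] at ht ⊢
    refine lt_of_lt_of_le ht (measure_mono ?_)
    rintro x ⟨hx1, hx2⟩
    exact ⟨E_subset_stage k₀ hx1, E_subset_stage k₀ (mem_setOf_eq ▸ hx2)⟩
  constructor
  · refine ⟨k₀, Set.Subset.antisymm key_mono fun t ht => ?_⟩
    obtain ⟨ε, ε', hlt⟩ := key_lt t ht
    exact key_mem t ε ε' hlt
  · refine ⟨Finset.image (fun q : (Fin k₀ → Bool) × (Fin k₀ → Bool) =>
      (g q.1 - g q.2 - Lk, g q.1 - g q.2 + Lk)) Finset.univ, ?_⟩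
    ext t
    simp only [Set.mem_iUnion, Finset.mem_image, Finset.mem_univ, true_and, Set.mem_Ioo,
      exists_exists_eq_and]
    constructor
    · intro ht
      obtain ⟨ε, ε', hlt⟩ := key_lt t (key_mono ht)
      rcases abs_lt.mp hlt with ⟨h1, h2⟩
      exact ⟨(g ε - g ε' - Lk, g ε - g ε' + Lk), ⟨(ε, ε'), rfl⟩,
        by show g ε - g ε' - Lk < t; linarith, by show t < g ε - g ε' + Lk; linarith⟩
    · rintro ⟨i, ⟨⟨ε, ε'⟩, rfl⟩, h1, h2⟩
      dsimp only at h1 h2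
      exact key_mem t ε ε' (abs_lt.mpr ⟨by linarith, by linarith⟩)
end
end

section
/- Every symmetric Cantor set E ⊂ ℝ of positive measure admits a packing region D with D ⊇ E and m(D) > m(E); namely, the k-th stage set E_k of the Cantor construction, for suitable k, is a packing region for E. -/
open MeasureTheory Set

noncomputable section

namespace SymCantorAux

/-- partial sums of chosen offsets -/
def cS (ξ : ℕ → ℝ) (ε : ℕ → Bool) (n : ℕ) : ℝ :=
  ∑ j ∈ Finset.range n, if ε j then cantorR ξ j else 0

variable {ξ : ℕ → ℝ}

section basic
variable (hξ : ∀ k, 0 < ξ k ∧ ξ k < 1/2)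
include hξ

lemma L_pos (n : ℕ) : 0 < cantorLen ξ n :=
  Finset.prod_pos fun j _ => (hξ j).1

omit hξ in
lemma L_succ (n : ℕ) : cantorLen ξ (n+1) = cantorLen ξ n * ξ n :=
  Finset.prod_range_succ _ _

omit hξ in
lemma r_eq (n : ℕ) : cantorR ξ n = cantorLen ξ n - cantorLen ξ (n+1) := by
  rw [cantorR, L_succ]; ring

lemma L_succ_lt_r (n : ℕ) : cantorLen ξ (n+1) < cantorR ξ n := by
  rw [L_succ, cantorR]
  have h1 := (hξ n).1; have h2 := (hξ n).2; have h3 := L_pos hξ n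
  nlinarith

lemma r_pos (n : ℕ) : 0 < cantorR ξ n := by
  have := L_succ_lt_r hξ n; have := L_pos hξ (n+1); linarith

lemma L_anti {m n : ℕ} (h : m ≤ n) : cantorLen ξ n ≤ cantorLen ξ m := by
  induction n, h using Nat.le_induction with
  | base => exact le_refl _
  | succ n hmn ih =>
      rw [L_succ]
      have h1 := (hξ n).1; have h2 := (hξ n).2; have h3 := L_pos hξ n
      nlinarith

lemma L_lt_r {j n : ℕ} (h : j < n) : cantorLen ξ n < cantorR ξ j :=
  lt_of_le_of_lt (L_anti hξ h) (L_succ_lt_r hξ j)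

end basic

lemma cS_nonneg (hξ : ∀ k, 0 < ξ k ∧ ξ k < 1/2) (ε : ℕ → Bool) (n : ℕ) : 0 ≤ cS ξ ε n := by
  apply Finset.sum_nonneg
  intro j _
  split
  · exact (r_pos hξ j).le
  · exact le_refl _

lemma cS_succ (ε : ℕ → Bool) (n : ℕ) :
    cS ξ ε (n+1) = cS ξ ε n + (if ε n then cantorR ξ n else 0) :=
  Finset.sum_range_succ _ _

lemma cS_congr {ε ε' : ℕ → Bool} {n : ℕ} (h : ∀ j < n, ε j = ε' j) :
    cS ξ ε n = cS ξ ε' n := by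
  apply Finset.sum_congr rfl
  intro j hj
  rw [h j (Finset.mem_range.mp hj)]

lemma cS_zero_of_false {ε : ℕ → Bool} {n : ℕ} (h : ∀ j < n, ε j = false) :
    cS ξ ε n = 0 := by
  apply Finset.sum_eq_zero
  intro j hj
  rw [h j (Finset.mem_range.mp hj)]
  simp

variable (hξ : ∀ k, 0 < ξ k ∧ ξ k < 1/2)
include hξ

/-- tail sums stay within the level-`n` interval -/
lemma cS_tail_le {ε : ℕ → Bool} {n N : ℕ} (h : n ≤ N) (h0 : ∀ j < n, ε j = false) :
    cS ξ ε N + cantorLen ξ N ≤ cantorLen ξ n := by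
  induction N, h using Nat.le_induction with
  | base => rw [cS_zero_of_false h0]; simp
  | succ N hnN ih =>
      rw [cS_succ]
      have hr : (if ε N then cantorR ξ N else 0) ≤ cantorR ξ N := by
        split
        · exact le_refl _
        · exact (r_pos hξ N).le
      have := r_eq (ξ := ξ) N
      linarith

lemma cS_ge_r {ε : ℕ → Bool} {n j : ℕ} (h : j < n) (h1 : ε j = true) :
    cantorR ξ j ≤ cS ξ ε n := by
  have : cantorR ξ j = (if ε j then cantorR ξ j else 0) := by rw [h1]; simp
  rw [this]
  apply Finset.single_le_sum (f := fun j => if ε j then cantorR ξ j else 0)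
  · intro i _
    split
    · exact (r_pos hξ i).le
    · exact le_refl _
  · exact Finset.mem_range.mpr h

/-- membership in a stage set, via ℕ-indexed sign sequences -/
lemma mem_stage_iff {x : ℝ} {n : ℕ} :
    x ∈ cantorStage ξ n ↔ ∃ ε : ℕ → Bool,
      x ∈ Icc (cS ξ ε n) (cS ξ ε n + cantorLen ξ n) := by
  constructor
  · rintro ⟨ε, y, ⟨hy0, hy1⟩, rfl⟩
    refine ⟨fun m => if h : m < n then ε ⟨m, h⟩ else false, ?_⟩
    have hsum : (∑ j : Fin n, if ε j then cantorR ξ j else 0) =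
        cS ξ (fun m => if h : m < n then ε ⟨m, h⟩ else false) n := by
      rw [cS, ← Fin.sum_univ_eq_sum_range
        (fun m => if (if h : m < n then ε ⟨m, h⟩ else false) then cantorR ξ m else 0) n]
      apply Finset.sum_congr rfl
      intro j _
      simp [j.isLt]
    rw [hsum]
    have hL := L_pos hξ n
    constructor
    · nlinarith
    · nlinarith
  · rintro ⟨ε, hx0, hx1⟩
    refine ⟨fun j => ε j, (x - cS ξ ε n) / cantorLen ξ n, ⟨?_, ?_⟩, ?_⟩
    · apply div_nonneg (by linarith) (L_pos hξ n).le
    · rw [div_le_one (L_pos hξ n)]; linarith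
    · have hsum : (∑ j : Fin n, if ε ↑j then cantorR ξ ↑j else 0) = cS ξ ε n :=
        Fin.sum_univ_eq_sum_range (fun m => if ε m then cantorR ξ m else 0) n
      rw [hsum]
      rw [mul_div_cancel₀ _ (L_pos hξ n).ne']
      ring

/-- the stage-`N` interval of `ε` is inside its stage-`n` interval, `n ≤ N` -/
lemma Icc_nested (ε : ℕ → Bool) {n N : ℕ} (h : n ≤ N) :
    Icc (cS ξ ε N) (cS ξ ε N + cantorLen ξ N) ⊆
      Icc (cS ξ ε n) (cS ξ ε n + cantorLen ξ n) := by
  induction N, h using Nat.le_induction with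
  | base => exact subset_rfl
  | succ N hnN ih =>
      refine subset_trans (Icc_subset_Icc ?_ ?_) ih
      · rw [cS_succ]
        have : (0:ℝ) ≤ (if ε N then cantorR ξ N else 0) := by
          split
          · exact (r_pos hξ N).le
          · exact le_refl _
        linarith
      · rw [cS_succ]
        have hr : (if ε N then cantorR ξ N else 0) ≤ cantorR ξ N := by
          split
          · exact le_refl _
          · exact (r_pos hξ N).le
        have := r_eq (ξ := ξ) N
        linarith

lemma stage_antitone : Antitone (cantorStage ξ) := by
  apply antitone_nat_of_succ_le
  intro n x hx
  rw [mem_stage_iff hξ] at hx ⊢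
  obtain ⟨ε, hx⟩ := hx
  exact ⟨ε, Icc_nested hξ ε (Nat.le_succ n) hx⟩

lemma disjoint_Icc {n : ℕ} {ε ε' : ℕ → Bool} (h : ∃ j < n, ε j ≠ ε' j) :
    Disjoint (Icc (cS ξ ε n) (cS ξ ε n + cantorLen ξ n))
      (Icc (cS ξ ε' n) (cS ξ ε' n + cantorLen ξ n)) := by
  induction n with
  | zero => obtain ⟨j, hj, _⟩ := h; exact absurd hj (Nat.not_lt_zero j)
  | succ n ih =>
      by_cases hagree : ∀ i < n, ε i = ε' i
      · obtain ⟨j, hj, hne⟩ := h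
        have hjn : j = n := by
          rcases Nat.lt_succ_iff_lt_or_eq.mp hj with h | h
          · exact absurd (hagree j h) hne
          · exact h
        rw [hjn] at hne
        have hc : cS ξ ε n = cS ξ ε' n := cS_congr hagree
        have hLr := L_succ_lt_r hξ n
        have hL := L_pos hξ (n+1)
        rw [Set.disjoint_left]
        intro x hx hx'
        rw [cS_succ] at hx'
        rw [cS_succ, hc] at hx
        rcases hx with ⟨hx1, hx2⟩
        rcases hx' with ⟨hx3, hx4⟩
        cases hε : ε n <;> cases hε' : ε' n
        · rw [hε, hε'] at hne; exact hne rfl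
        · rw [hε] at hx1 hx2; rw [hε'] at hx3 hx4
          simp only [if_true, if_false, Bool.false_eq_true] at hx1 hx2 hx3 hx4
          linarith
        · rw [hε] at hx1 hx2; rw [hε'] at hx3 hx4
          simp only [if_true, if_false, Bool.false_eq_true] at hx1 hx2 hx3 hx4
          linarith
        · rw [hε, hε'] at hne; exact hne rfl
      · push_neg at hagree
        obtain ⟨i, hi, hnei⟩ := hagree
        exact Set.disjoint_of_subset (Icc_nested hξ ε (Nat.le_succ n))
          (Icc_nested hξ ε' (Nat.le_succ n)) (ih ⟨i, hi, hnei⟩)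

/-- extend a finitely-indexed sign sequence by `false` -/
def extb (n : ℕ) (ε : Fin n → Bool) : ℕ → Bool :=
  fun m => if h : m < n then ε ⟨m, h⟩ else false

/-- kill a sign sequence below `n` -/
def tailb (n : ℕ) (ε : ℕ → Bool) : ℕ → Bool :=
  fun j => if j < n then false else ε j

omit hξ in
lemma cS_split (ε : ℕ → Bool) {n N : ℕ} (h : n ≤ N) :
    cS ξ ε N = cS ξ ε n + cS ξ (tailb n ε) N := by
  have hsplit : ∀ g : ℕ → ℝ, (∑ j ∈ Finset.range N, g j)
      = (∑ j ∈ Finset.range n, g j) + ∑ j ∈ Finset.Ico n N, g j := by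
    intro g
    rw [Finset.range_eq_Ico, Finset.range_eq_Ico]
    exact (Finset.sum_Ico_consecutive g (Nat.zero_le n) h).symm
  unfold cS
  rw [hsplit, hsplit]
  have h1 : ∑ j ∈ Finset.range n, (if tailb n ε j then cantorR ξ j else 0) = 0 := by
    apply Finset.sum_eq_zero
    intro j hj
    have : j < n := Finset.mem_range.mp hj
    simp [tailb, this]
  have h2 : ∑ j ∈ Finset.Ico n N, (if tailb n ε j then cantorR ξ j else 0)
      = ∑ j ∈ Finset.Ico n N, (if ε j then cantorR ξ j else 0) := by
    apply Finset.sum_congr rfl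
    intro j hj
    have : ¬ j < n := not_lt.mpr (Finset.mem_Ico.mp hj).1
    simp [tailb, this]
  rw [h1, h2]
  ring

lemma stage_eq_iUnion (n : ℕ) :
    cantorStage ξ n = ⋃ ε : Fin n → Bool,
      Icc (cS ξ (extb n ε) n) (cS ξ (extb n ε) n + cantorLen ξ n) := by
  ext x
  rw [mem_stage_iff hξ, mem_iUnion]
  constructor
  · rintro ⟨ε, hx⟩
    refine ⟨fun j => ε j, ?_⟩
    have : cS ξ (extb n (fun j : Fin n => ε j)) n = cS ξ ε n := by
      apply cS_congr
      intro j hj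
      simp [extb, hj]
    rw [this]
    exact hx
  · rintro ⟨ε, hx⟩
    exact ⟨extb n ε, hx⟩

lemma stage_measurable (n : ℕ) : MeasurableSet (cantorStage ξ n) := by
  rw [stage_eq_iUnion hξ]
  exact MeasurableSet.iUnion fun ε => measurableSet_Icc

omit hξ in
lemma cantor_measurable' (h : ∀ k, 0 < ξ k ∧ ξ k < 1/2) :
    MeasurableSet (symCantorSet ξ) :=
  MeasurableSet.iInter fun n => stage_measurable h n

lemma volume_stage (n : ℕ) :
    volume (cantorStage ξ n) = ENNReal.ofReal (2^n * cantorLen ξ n) := by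
  rw [stage_eq_iUnion hξ]
  rw [measure_iUnion ?_ fun ε => measurableSet_Icc]
  · have hvol : ∀ ε : Fin n → Bool,
        volume (Icc (cS ξ (extb n ε) n) (cS ξ (extb n ε) n + cantorLen ξ n))
          = ENNReal.ofReal (cantorLen ξ n) := by
      intro ε
      rw [Real.volume_Icc]
      congr 1
      ring
    simp only [hvol]
    rw [tsum_fintype]
    rw [Finset.sum_const, Finset.card_univ]
    have hcard : Fintype.card (Fin n → Bool) = 2^n := by
      rw [Fintype.card_fun]
      simp
    rw [hcard]
    rw [nsmul_eq_mul]
    rw [← ENNReal.ofReal_natCast (2^n), ← ENNReal.ofReal_mul (by positivity)]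
    congr 1
    simp
  · intro ε ε' hne
    have : ∃ j < n, extb n ε j ≠ extb n ε' j := by
      by_contra hcon
      push_neg at hcon
      apply hne
      funext j
      have := hcon j j.isLt
      simpa [extb, j.isLt] using this
    exact disjoint_Icc hξ this

lemma stage_piece (ε : ℕ → Bool) {n N : ℕ} (h : n ≤ N) :
    cantorStage ξ N ∩ Icc (cS ξ ε n) (cS ξ ε n + cantorLen ξ n)
      = {x | x - cS ξ ε n ∈ cantorStage ξ N ∩ Icc 0 (cantorLen ξ n)} := by
  ext x
  simp only [mem_inter_iff, mem_setOf_eq, Set.mem_Icc]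
  constructor
  · rintro ⟨hxN, hxI⟩
    rw [mem_stage_iff hξ] at hxN
    obtain ⟨ε', hx'⟩ := hxN
    have hx'n : x ∈ Icc (cS ξ ε' n) (cS ξ ε' n + cantorLen ξ n) := Icc_nested hξ ε' h hx'
    have hagree : ∀ j < n, ε j = ε' j := by
      by_contra hcon
      push_neg at hcon
      exact (disjoint_Icc hξ hcon).ne_of_mem (Set.mem_Icc.mpr hxI) hx'n rfl
    have hc : cS ξ ε n = cS ξ ε' n := cS_congr hagree
    have hsplit := cS_split (ξ := ξ) ε' h
    obtain ⟨h1, h2⟩ := Set.mem_Icc.mp hx'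
    have h0 : (0:ℝ) ≤ cS ξ (tailb n ε') N := cS_nonneg hξ _ _
    have hub : cS ξ (tailb n ε') N + cantorLen ξ N ≤ cantorLen ξ n :=
      cS_tail_le hξ h (fun j hj => by simp [tailb, hj])
    have hLN := L_pos hξ N
    constructor
    · rw [mem_stage_iff hξ]
      refine ⟨tailb n ε', Set.mem_Icc.mpr ⟨?_, ?_⟩⟩
      · rw [hc]; linarith
      · rw [hc]; linarith
    · constructor
      · rw [hc]; linarith
      · rw [hc]; linarith
  · rintro ⟨hxN, hxI⟩
    rw [mem_stage_iff hξ] at hxN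
    obtain ⟨ε', hx'⟩ := hxN
    obtain ⟨h1, h2⟩ := Set.mem_Icc.mp hx'
    have hfalse : ∀ j < n, ε' j = false := by
      intro j hj
      by_contra hcon
      have htrue : ε' j = true := Bool.not_eq_false _ |>.mp hcon
      have hge : cantorR ξ j ≤ cS ξ ε' N := cS_ge_r hξ (lt_of_lt_of_le hj h) htrue
      have hlt := L_lt_r hξ hj
      have := hxI.2
      linarith
    have hsplit : cS ξ (fun j => if j < n then ε j else ε' j) N
        = cS ξ ε n + cS ξ ε' N := by
      rw [cS_split (fun j => if j < n then ε j else ε' j) h]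
      congr 1
      · exact cS_congr (fun j hj => by simp [hj])
      · apply cS_congr
        intro j _
        by_cases hj : j < n
        · simp [tailb, hj, hfalse j hj]
        · simp [tailb, hj]
    constructor
    · rw [mem_stage_iff hξ]
      refine ⟨fun j => if j < n then ε j else ε' j, Set.mem_Icc.mpr ⟨?_, ?_⟩⟩
      · rw [hsplit]; linarith
      · rw [hsplit]; linarith
    · constructor
      · linarith [hxI.1]
      · linarith [hxI.2]

lemma piece_eq (ε : ℕ → Bool) (n : ℕ) :
    symCantorSet ξ ∩ Icc (cS ξ ε n) (cS ξ ε n + cantorLen ξ n)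
      = {x | x - cS ξ ε n ∈ symCantorSet ξ ∩ Icc 0 (cantorLen ξ n)} := by
  ext x
  simp only [symCantorSet, mem_inter_iff, mem_iInter, mem_setOf_eq]
  constructor
  · rintro ⟨hall, hI⟩
    have key : ∀ N, n ≤ N → x - cS ξ ε n ∈ cantorStage ξ N ∩ Icc 0 (cantorLen ξ n) := by
      intro N hN
      exact (Set.ext_iff.mp (stage_piece hξ ε hN) x).mp ⟨hall N, hI⟩
    refine ⟨fun N => ?_, (key n le_rfl).2⟩
    exact stage_antitone hξ (le_max_left N n) (key (max N n) (le_max_right _ _)).1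
  · rintro ⟨hall, hI⟩
    have key : ∀ N, n ≤ N →
        x ∈ cantorStage ξ N ∩ Icc (cS ξ ε n) (cS ξ ε n + cantorLen ξ n) := by
      intro N hN
      exact (Set.ext_iff.mp (stage_piece hξ ε hN) x).mpr ⟨hall N, hI⟩
    exact ⟨fun N => stage_antitone hξ (le_max_left N n)
      (key (max N n) (le_max_right _ _)).1, (key n le_rfl).2⟩

omit hξ in
lemma vol_shift (c : ℝ) (A : Set ℝ) : volume {x | x - c ∈ A} = volume A := by
  have h : {x : ℝ | x - c ∈ A} = (fun x => x + (-c)) ⁻¹' A := by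
    ext x; simp [sub_eq_add_neg]
  rw [h, measure_preimage_add_right]

omit hξ in
lemma cantor_subset_stage (n : ℕ) : symCantorSet ξ ⊆ cantorStage ξ n :=
  Set.iInter_subset (cantorStage ξ) n

lemma vol_decomp (n : ℕ) :
    volume (symCantorSet ξ) = 2^n * volume (symCantorSet ξ ∩ Icc 0 (cantorLen ξ n)) := by
  have hdecomp : symCantorSet ξ = ⋃ ε : Fin n → Bool,
      (symCantorSet ξ ∩
        Icc (cS ξ (extb n ε) n) (cS ξ (extb n ε) n + cantorLen ξ n)) := by
    rw [← Set.inter_iUnion, ← stage_eq_iUnion hξ]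
    exact (Set.inter_eq_self_of_subset_left (cantor_subset_stage n)).symm
  have hmeas : ∀ ε : Fin n → Bool, MeasurableSet (symCantorSet ξ ∩
      Icc (cS ξ (extb n ε) n) (cS ξ (extb n ε) n + cantorLen ξ n)) :=
    fun ε => (cantor_measurable' hξ).inter measurableSet_Icc
  have hdisj : Pairwise (Function.onFun Disjoint (fun ε : Fin n → Bool =>
      symCantorSet ξ ∩
        Icc (cS ξ (extb n ε) n) (cS ξ (extb n ε) n + cantorLen ξ n))) := by
    intro ε ε' hne
    have hex : ∃ j < n, extb n ε j ≠ extb n ε' j := by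
      by_contra hcon
      push_neg at hcon
      apply hne
      funext j
      simpa [extb, j.isLt] using hcon j j.isLt
    exact ((disjoint_Icc hξ hex).mono Set.inter_subset_right Set.inter_subset_right)
  conv_lhs => rw [hdecomp]
  rw [measure_iUnion hdisj hmeas]
  have hvol : ∀ ε : Fin n → Bool, volume (symCantorSet ξ ∩
      Icc (cS ξ (extb n ε) n) (cS ξ (extb n ε) n + cantorLen ξ n))
        = volume (symCantorSet ξ ∩ Icc 0 (cantorLen ξ n)) := by
    intro ε
    rw [piece_eq hξ, vol_shift]
  simp only [hvol]
  rw [tsum_fintype, Finset.sum_const, Finset.card_univ]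
  have hcard : Fintype.card (Fin n → Bool) = 2^n := by
    rw [Fintype.card_fun]; simp
  rw [hcard, nsmul_eq_mul]
  push_cast
  ring

lemma vol_fin : volume (symCantorSet ξ) ≠ ⊤ := by
  apply ne_top_of_le_ne_top _ (measure_mono (cantor_subset_stage 0))
  rw [volume_stage hξ 0]
  exact ENNReal.ofReal_ne_top

lemma vol_T (n : ℕ) :
    volume (symCantorSet ξ ∩ Icc 0 (cantorLen ξ n))
      = ENNReal.ofReal ((volume (symCantorSet ξ)).toReal / 2^n) := by
  have h2n : ((2:ENNReal)^n) ≠ 0 := pow_ne_zero n (by norm_num)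
  have h2t : ((2:ENNReal)^n) ≠ ⊤ := ENNReal.pow_ne_top (by norm_num)
  have hE : volume (symCantorSet ξ)
      = ENNReal.ofReal ((volume (symCantorSet ξ)).toReal) :=
    (ENNReal.ofReal_toReal (vol_fin hξ)).symm
  have key := vol_decomp hξ n
  have h2 : ENNReal.ofReal ((volume (symCantorSet ξ)).toReal)
      = 2^n * ENNReal.ofReal ((volume (symCantorSet ξ)).toReal / 2^n) := by
    have h2e : ((2:ENNReal)^n) = ENNReal.ofReal ((2:ℝ)^n) := by
      rw [ENNReal.ofReal_pow (by norm_num : (0:ℝ) ≤ 2)]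
      norm_num
    rw [h2e, ← ENNReal.ofReal_mul (by positivity)]
    congr 1
    field_simp
  apply (ENNReal.mul_right_inj h2n h2t).mp
  rw [← key, ← h2, ← hE]

/-- the right-translation step inside the Cantor set -/
lemma step_T {n : ℕ} {x : ℝ}
    (hx : x ∈ symCantorSet ξ ∩ Icc 0 (cantorLen ξ (n+1))) :
    x + cantorR ξ n ∈ symCantorSet ξ ∩ Icc 0 (cantorLen ξ n) := by
  have hδ : cS ξ (fun j => decide (j = n)) (n+1) = cantorR ξ n := by
    unfold cS
    have hcongr : ∀ j ∈ Finset.range (n+1),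
        (if (decide (j = n) : Bool) then cantorR ξ j else 0)
          = if j = n then cantorR ξ j else 0 := by
      intro j _; simp
    rw [Finset.sum_congr rfl hcongr, Finset.sum_ite_eq' (Finset.range (n+1)) n]
    simp
  have hpe := piece_eq hξ (fun j => decide (j = n)) (n+1)
  rw [hδ] at hpe
  have hmem : x + cantorR ξ n ∈ symCantorSet ξ ∩
      Icc (cantorR ξ n) (cantorR ξ n + cantorLen ξ (n+1)) := by
    rw [hpe]
    simp only [Set.mem_setOf_eq, add_sub_cancel_right]
    exact hx
  refine ⟨hmem.1, ?_⟩
  have h1 := hmem.2.1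
  have h2 := hmem.2.2
  have hr := r_eq (ξ := ξ) n
  have hrpos := r_pos hξ n
  constructor
  · linarith
  · linarith

/-- T (n+1) ⊆ T n -/
lemma T_mono (n : ℕ) :
    symCantorSet ξ ∩ Icc 0 (cantorLen ξ (n+1)) ⊆
      symCantorSet ξ ∩ Icc 0 (cantorLen ξ n) := by
  apply Set.inter_subset_inter_right
  exact Icc_subset_Icc le_rfl (L_anti hξ (Nat.le_succ n))

lemma direct_estimate {n : ℕ} {s : ℝ} (hs0 : 0 ≤ s)
    (hcond : cantorLen ξ n + s < 2 * ((volume (symCantorSet ξ)).toReal / 2^n)) :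
    0 < volume ((symCantorSet ξ ∩ Icc 0 (cantorLen ξ n)) ∩
      {x | x - s ∈ symCantorSet ξ ∩ Icc 0 (cantorLen ξ n)}) := by
  set M := (volume (symCantorSet ξ)).toReal with hMdef
  have hMnn : 0 ≤ M := ENNReal.toReal_nonneg
  set T := symCantorSet ξ ∩ Icc 0 (cantorLen ξ n) with hT
  set B := {x | x - s ∈ T} with hB
  have hTmeas : MeasurableSet T := (cantor_measurable' hξ).inter measurableSet_Icc
  have hBmeas : MeasurableSet B := by
    have h : B = (fun x => x + (-s)) ⁻¹' T := by ext x; simp [hB, sub_eq_add_neg]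
    rw [h]; exact hTmeas.preimage (measurable_add_const _)
  by_contra hcon
  push_neg at hcon
  have hzero : volume (T ∩ B) = 0 := le_antisymm hcon zero_le
  have hunion : T ∪ B ⊆ Icc 0 (cantorLen ξ n + s) := by
    intro x hx
    rcases hx with hx | hx
    · exact ⟨hx.2.1, le_trans hx.2.2 (by linarith)⟩
    · obtain ⟨-, h1, h2⟩ := hx
      exact ⟨by linarith, by linarith⟩
  have hsum := measure_union_add_inter (μ := volume) T hBmeas
  have hTv : volume T = ENNReal.ofReal (M/2^n) := vol_T hξ n
  have hBv : volume B = ENNReal.ofReal (M/2^n) := by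
    rw [hB, vol_shift, hTv]
  have hle : volume (T ∪ B) ≤ ENNReal.ofReal (cantorLen ξ n + s) := by
    refine le_trans (measure_mono hunion) ?_
    rw [Real.volume_Icc]
    simp
  rw [hzero, add_zero, hTv, hBv,
    ← ENNReal.ofReal_add (by positivity) (by positivity)] at hsum
  rw [hsum] at hle
  have hreal : M/2^n + M/2^n ≤ cantorLen ξ n + s :=
    (ENNReal.ofReal_le_ofReal_iff (by
      have := L_pos hξ n; linarith)).mp hle
  linarith

lemma lemA {k : ℕ}
    (hk : ∀ n, k ≤ n → 2 * cantorLen ξ n - cantorLen ξ (n+1)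
        < 2 * ((volume (symCantorSet ξ)).toReal / 2^n)) :
    ∀ d n s, k ≤ n → 0 ≤ s → s < cantorLen ξ n →
      2 * (cantorLen ξ (n+d) - (volume (symCantorSet ξ)).toReal / 2^(n+d))
        < cantorLen ξ n - s →
      0 < volume ((symCantorSet ξ ∩ Icc 0 (cantorLen ξ n)) ∩
        {x | x - s ∈ symCantorSet ξ ∩ Icc 0 (cantorLen ξ n)}) := by
  set M := (volume (symCantorSet ξ)).toReal with hMdef
  intro d
  induction d with
  | zero =>
      intro n s hkn hs0 hsL hcond
      simp only [Nat.add_zero] at hcond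
      exact direct_estimate hξ hs0 (by linarith)
  | succ d ih =>
      intro n s hkn hs0 hsL hcond
      by_cases hcase : cantorLen ξ n + s < 2 * (M / 2^n)
      · exact direct_estimate hξ hs0 hcase
      · push_neg at hcase
        have hkk := hk n hkn
        have hre := r_eq (ξ := ξ) n
        have hrs : cantorR ξ n < s := by linarith
        set s' := s - cantorR ξ n with hs'def
        have hs'0 : 0 ≤ s' := by simp [hs'def]; linarith
        have hs'L : s' < cantorLen ξ (n+1) := by
          rw [hs'def, hre]; linarith
        have hinv : cantorLen ξ (n+1) - s' = cantorLen ξ n - s := by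
          rw [hs'def, hre]; ring
        have heq : n + (d+1) = (n+1) + d := by omega
        rw [heq] at hcond
        have hIH := ih (n+1) s' (le_trans hkn (Nat.le_succ n)) hs'0 hs'L
          (by rw [hinv]; exact hcond)
        refine lt_of_lt_of_le hIH ?_
        rw [← vol_shift (cantorR ξ n) ((symCantorSet ξ ∩ Icc 0 (cantorLen ξ (n+1))) ∩
          {x | x - s' ∈ symCantorSet ξ ∩ Icc 0 (cantorLen ξ (n+1))})]
        apply measure_mono
        intro x hx
        simp only [Set.mem_setOf_eq, mem_inter_iff] at hx ⊢
        obtain ⟨hx1, hx2⟩ := hx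
        constructor
        · have := step_T hξ hx1
          have hxx : x - cantorR ξ n + cantorR ξ n = x := by ring
          rwa [hxx] at this
        · have hxs : x - s = (x - cantorR ξ n) - s' := by rw [hs'def]; ring
          rw [hxs]
          exact T_mono hξ n hx2

lemma overlap_pos {k : ℕ}
    (hk : ∀ n, k ≤ n → 2 * cantorLen ξ n - cantorLen ξ (n+1)
        < 2 * ((volume (symCantorSet ξ)).toReal / 2^n))
    {s : ℝ} (hs0 : 0 ≤ s) (hsL : s < cantorLen ξ k) :
    0 < volume ((symCantorSet ξ ∩ Icc 0 (cantorLen ξ k)) ∩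
      {x | x - s ∈ symCantorSet ξ ∩ Icc 0 (cantorLen ξ k)}) := by
  have hLk := L_pos hξ k
  have hdecay : ∀ d, cantorLen ξ (k+d) ≤ (1/2)^d * cantorLen ξ k := by
    intro d
    induction d with
    | zero => simp
    | succ d ih =>
        have h1 : cantorLen ξ (k+d+1) ≤ cantorLen ξ (k+d) / 2 := by
          rw [L_succ]
          have := (hξ (k+d)).2
          have := L_pos hξ (k+d)
          nlinarith
        have h2 : ((1:ℝ)/2)^(d+1) * cantorLen ξ k = ((1/2)^d * cantorLen ξ k) / 2 := by
          rw [pow_succ]; ring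
        calc cantorLen ξ (k+(d+1)) = cantorLen ξ (k+d+1) := by rw [← Nat.add_assoc]
          _ ≤ cantorLen ξ (k+d) / 2 := h1
          _ ≤ ((1/2)^d * cantorLen ξ k) / 2 := by linarith
          _ = (1/2)^(d+1) * cantorLen ξ k := h2.symm
  obtain ⟨d, hd⟩ := exists_pow_lt_of_lt_one
    (div_pos (by linarith : (0:ℝ) < cantorLen ξ k - s)
      (by linarith : (0:ℝ) < 2 * cantorLen ξ k))
    (by norm_num : (1:ℝ)/2 < 1)
  apply lemA hξ hk d k s le_rfl hs0 hsL
  have h1 := hdecay d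
  have h2 : (1/2:ℝ)^d * (2 * cantorLen ξ k) < cantorLen ξ k - s :=
    (lt_div_iff₀ (by linarith : (0:ℝ) < 2 * cantorLen ξ k)).mp hd
  have hMnn : 0 ≤ (volume (symCantorSet ξ)).toReal / 2^(k+d) := by positivity
  nlinarith

end SymCantorAux

open SymCantorAux

/-- A symmetric Cantor set of positive measure admits a packing region `D` (namely a
suitable stage set `E_k`) with `D ⊇ E` and `m(D) > m(E)`. -/
theorem symCantorSet_packing_region (ξ : ℕ → ℝ)
    (hξ : ∀ k, 0 < ξ k ∧ ξ k < 1 / 2)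
    (hpos : 0 < volume (symCantorSet ξ)) :
    ∃ k, essDiff (cantorStage ξ k) ⊆ essDiff (symCantorSet ξ) ∧
      symCantorSet ξ ⊆ cantorStage ξ k ∧
      volume (symCantorSet ξ) < volume (cantorStage ξ k) := by

  classical
  set M := (volume (symCantorSet ξ)).toReal with hMdef
  have hfin : volume (symCantorSet ξ) ≠ ⊤ := vol_fin hξ
  have hMpos : 0 < M := ENNReal.toReal_pos hpos.ne' hfin
  -- the measures of the stages tend to the measure of the Cantor set
  have htend : Filter.Tendsto (fun n => volume (cantorStage ξ n)) Filter.atTop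
      (nhds (volume (symCantorSet ξ))) := by
    have h := MeasureTheory.tendsto_measure_iInter_atTop (μ := volume)
      (s := cantorStage ξ)
      (fun n => (stage_measurable hξ n).nullMeasurableSet)
      (stage_antitone hξ)
      ⟨0, by rw [volume_stage hξ]; exact ENNReal.ofReal_ne_top⟩
    exact h
  have hlt : volume (symCantorSet ξ) < ENNReal.ofReal (5/4 * M) := by
    conv_lhs => rw [← ENNReal.ofReal_toReal hfin]
    exact (ENNReal.ofReal_lt_ofReal_iff (by linarith)).mpr (by rw [← hMdef]; linarith)
  obtain ⟨k, hk⟩ := (htend.eventually_lt_const hlt).exists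
  have hmk : (2:ℝ)^k * cantorLen ξ k < 5/4 * M := by
    rw [volume_stage hξ k] at hk
    exact (ENNReal.ofReal_lt_ofReal_iff (by linarith)).mp hk
  -- monotonicity of the stage measures
  have hmdec : ∀ n m : ℕ, n ≤ m →
      (2:ℝ)^m * cantorLen ξ m ≤ 2^n * cantorLen ξ n := by
    intro n m h
    induction m, h using Nat.le_induction with
    | base => exact le_refl _
    | succ m hnm ih =>
        have h1 := (hξ m).1
        have h2 := (hξ m).2
        have h3 := L_pos hξ m
        have h4 : (2:ℝ)^(m+1) * cantorLen ξ (m+1) ≤ 2^m * cantorLen ξ m := by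
          rw [L_succ (ξ := ξ), pow_succ]
          have h5 : (0:ℝ) < 2^m * cantorLen ξ m := by positivity
          have h6 : (2^m * cantorLen ξ m) * ξ m ≤ (2^m * cantorLen ξ m) * (1/2) :=
            mul_le_mul_of_nonneg_left h2.le h5.le
          nlinarith
        linarith
  have hMle : ∀ n, M ≤ (2:ℝ)^n * cantorLen ξ n := by
    intro n
    have h1 : volume (symCantorSet ξ) ≤ volume (cantorStage ξ n) :=
      measure_mono (cantor_subset_stage n)
    rw [volume_stage hξ n] at h1
    have h2 := ENNReal.toReal_mono ENNReal.ofReal_ne_top h1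
    rw [ENNReal.toReal_ofReal (le_of_lt (mul_pos (pow_pos (by norm_num : (0:ℝ) < 2) n) (L_pos hξ n)))] at h2
    exact h2
  -- the key quantitative condition at every level `n ≥ k`
  have hkcond : ∀ n, k ≤ n → 2 * cantorLen ξ n - cantorLen ξ (n+1)
      < 2 * ((volume (symCantorSet ξ)).toReal / 2^n) := by
    intro n hn
    have h1 := hmdec k n hn
    have h2 := hMle (n+1)
    have hP : (0:ℝ) < 2^n := by positivity
    rw [← hMdef, show 2 * (M / 2^n) = (2*M) / 2^n by ring, lt_div_iff₀ hP]
    have key2 : ((2:ℝ) * cantorLen ξ n - cantorLen ξ (n+1)) * 2^n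
        = 2*((2:ℝ)^n * cantorLen ξ n) - ((2:ℝ)^(n+1) * cantorLen ξ (n+1))/2 := by
      rw [pow_succ]; ring
    rw [key2]
    linarith
  refine ⟨k, ?_, Set.iInter_subset _ k, ?_⟩
  · -- packing region property
    intro t ht
    simp only [essDiff, Set.mem_setOf_eq] at ht ⊢
    -- find a pair of overlapping intervals
    have hex : ∃ ε ε' : Fin k → Bool, 0 < volume
        ((Icc (cS ξ (extb k ε) k) (cS ξ (extb k ε) k + cantorLen ξ k)) ∩
          {x | x - t ∈ Icc (cS ξ (extb k ε') k)
            (cS ξ (extb k ε') k + cantorLen ξ k)}) := by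
      by_contra hcon
      push_neg at hcon
      have hcover : cantorStage ξ k ∩ {x | x - t ∈ cantorStage ξ k} ⊆
          ⋃ (ε : Fin k → Bool) (ε' : Fin k → Bool),
            ((Icc (cS ξ (extb k ε) k) (cS ξ (extb k ε) k + cantorLen ξ k)) ∩
              {x | x - t ∈ Icc (cS ξ (extb k ε') k)
                (cS ξ (extb k ε') k + cantorLen ξ k)}) := by
        intro x hx
        obtain ⟨hx1, hx2⟩ := hx
        rw [stage_eq_iUnion hξ] at hx1
        obtain ⟨ε, hx1⟩ := mem_iUnion.mp hx1
        have hx2' : x - t ∈ ⋃ ε' : Fin k → Bool,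
            Icc (cS ξ (extb k ε') k) (cS ξ (extb k ε') k + cantorLen ξ k) := by
          rw [← stage_eq_iUnion hξ]; exact hx2
        obtain ⟨ε', hx2'⟩ := mem_iUnion.mp hx2'
        exact mem_iUnion.mpr ⟨ε, mem_iUnion.mpr ⟨ε', ⟨hx1, hx2'⟩⟩⟩
      have hzero : volume (⋃ (ε : Fin k → Bool) (ε' : Fin k → Bool),
          ((Icc (cS ξ (extb k ε) k) (cS ξ (extb k ε) k + cantorLen ξ k)) ∩
            {x | x - t ∈ Icc (cS ξ (extb k ε') k)
              (cS ξ (extb k ε') k + cantorLen ξ k)})) = 0 :=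
        measure_iUnion_null fun ε => measure_iUnion_null fun ε' =>
          le_antisymm (hcon ε ε') zero_le
      have hcontra := lt_of_lt_of_le ht
        (le_trans (measure_mono hcover) (le_of_eq hzero))
      exact lt_irrefl 0 hcontra
    obtain ⟨ε, ε', hpos2⟩ := hex
    set a := cS ξ (extb k ε) k with ha
    set b := cS ξ (extb k ε') k with hb
    have hIcc : {x | x - t ∈ Icc b (b + cantorLen ξ k)}
        = Icc (b + t) (b + t + cantorLen ξ k) := by
      ext x
      simp only [Set.mem_setOf_eq, Set.mem_Icc]
      constructor
      · rintro ⟨u, v⟩; constructor <;> linarith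
      · rintro ⟨u, v⟩; constructor <;> linarith
    rw [hIcc, Set.Icc_inter_Icc, Real.volume_Icc] at hpos2
    have hreal := ENNReal.ofReal_pos.mp hpos2
    have h1 : b + t < a + cantorLen ξ k := by
      by_contra h
      push_neg at h
      have hm1 : min (a + cantorLen ξ k) (b + t + cantorLen ξ k)
          ≤ a + cantorLen ξ k := min_le_left _ _
      have hm2 : b + t ≤ max a (b + t) := le_max_right _ _
      linarith
    have h2 : a < b + t + cantorLen ξ k := by
      by_contra h
      push_neg at h
      have hm1 : min (a + cantorLen ξ k) (b + t + cantorLen ξ k)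
          ≤ b + t + cantorLen ξ k := min_le_right _ _
      have hm2 : a ≤ max a (b + t) := le_max_left _ _
      linarith
    rcases le_or_gt a (b + t) with hab | hab
    · set s := b + t - a with hs
      have hpos3 := overlap_pos hξ hkcond (by linarith : (0:ℝ) ≤ s)
        (by rw [hs]; linarith : s < cantorLen ξ k)
      have hsub : {x | x - a ∈ ((symCantorSet ξ ∩ Icc 0 (cantorLen ξ k)) ∩
          {z | z - s ∈ symCantorSet ξ ∩ Icc 0 (cantorLen ξ k)})}
            ⊆ symCantorSet ξ ∩ {x | x - t ∈ symCantorSet ξ} := by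
        intro x hx
        simp only [Set.mem_setOf_eq, mem_inter_iff] at hx ⊢
        obtain ⟨hx1, hx2⟩ := hx
        constructor
        · exact ((Set.ext_iff.mp (piece_eq hξ (extb k ε) k) x).mpr hx1).1
        · have hxx : x - a - s = x - t - b := by rw [hs]; ring
          rw [hxx] at hx2
          exact ((Set.ext_iff.mp (piece_eq hξ (extb k ε') k) (x - t)).mpr hx2).1
      calc (0:ENNReal) < _ := hpos3
        _ = volume {x | x - a ∈ ((symCantorSet ξ ∩ Icc 0 (cantorLen ξ k)) ∩
            {z | z - s ∈ symCantorSet ξ ∩ Icc 0 (cantorLen ξ k)})} :=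
          (vol_shift a _).symm
        _ ≤ volume (symCantorSet ξ ∩ {x | x - t ∈ symCantorSet ξ}) :=
          measure_mono hsub
    · set s := a - (b + t) with hs
      have hpos3 := overlap_pos hξ hkcond (by linarith : (0:ℝ) ≤ s)
        (by rw [hs]; linarith : s < cantorLen ξ k)
      have hsub : {x | x - (b + t) ∈ ((symCantorSet ξ ∩ Icc 0 (cantorLen ξ k)) ∩
          {z | z - s ∈ symCantorSet ξ ∩ Icc 0 (cantorLen ξ k)})}
            ⊆ symCantorSet ξ ∩ {x | x - t ∈ symCantorSet ξ} := by
        intro x hx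
        simp only [Set.mem_setOf_eq, mem_inter_iff] at hx ⊢
        obtain ⟨hx1, hx2⟩ := hx
        constructor
        · have hxx : x - (b + t) - s = x - a := by rw [hs]; ring
          rw [hxx] at hx2
          exact ((Set.ext_iff.mp (piece_eq hξ (extb k ε) k) x).mpr hx2).1
        · have hxx : x - (b + t) = x - t - b := by ring
          rw [hxx] at hx1
          exact ((Set.ext_iff.mp (piece_eq hξ (extb k ε') k) (x - t)).mpr hx1).1
      calc (0:ENNReal) < _ := hpos3
        _ = volume {x | x - (b + t) ∈ ((symCantorSet ξ ∩ Icc 0 (cantorLen ξ k)) ∩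
            {z | z - s ∈ symCantorSet ξ ∩ Icc 0 (cantorLen ξ k)})} :=
          (vol_shift (b + t) _).symm
        _ ≤ volume (symCantorSet ξ ∩ {x | x - t ∈ symCantorSet ξ}) :=
          measure_mono hsub
  · -- strict measure inequality
    refine lt_of_le_of_lt (measure_mono (cantor_subset_stage (k+1))) ?_
    rw [volume_stage hξ (k+1), volume_stage hξ k]
    apply (ENNReal.ofReal_lt_ofReal_iff (mul_pos (pow_pos (by norm_num : (0:ℝ) < 2) k) (L_pos hξ k))).mpr
    have h1 := (hξ k).1
    have h2 := (hξ k).2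
    have h3 := L_pos hξ k
    rw [L_succ (ξ := ξ), pow_succ]
    have h5 : (0:ℝ) < 2^k * cantorLen ξ k := by positivity
    have h6 : (2^k * cantorLen ξ k) * ξ k < (2^k * cantorLen ξ k) * (1/2) :=
      mul_lt_mul_of_pos_left h2 h5
    nlinarith
end
end

section
/- Let A ⊂ ℝᵈ be a bounded measurable set admitting a packing region D with m(D) > m(A). Then A cannot tile ℝᵈ by translations: there is no countable set Λ ⊂ ℝᵈ such that the translates {A + λ : λ ∈ Λ} partition ℝᵈ up to measure zero. -/
open MeasureTheory Set
open scoped ENNReal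

open Metric Filter in
private lemma vol_preimage_sub' (d : ℕ) (l : Fin d → ℝ) (s : Set (Fin d → ℝ)) :
    volume ((fun x => x - l) ⁻¹' s) = volume s := by
  simp only [sub_eq_add_neg]
  exact measure_preimage_add_right volume (-l) s

noncomputable section

open Metric Filter in
theorem no_tiling_of_large_packing_region (d : ℕ) (A D : Set (Fin d → ℝ))
    (hAb : Bornology.IsBounded A) (hAm : MeasurableSet A)
    (hDb : Bornology.IsBounded D) (hDm : MeasurableSet D)
    (hpack : essDiff D ⊆ essDiff A) (hlarge : volume A < volume D) :
    ¬ ∃ Λ : Set (Fin d → ℝ), Λ.Countable ∧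
      ∀ᵐ x : Fin d → ℝ,
        (∑' l : Λ, Set.indicator A (fun _ => (1 : ℝ)) (x - (l : Fin d → ℝ))) = 1 := by
  classical
  rintro ⟨Λ, hΛc, htile⟩
  haveI : Countable ↥Λ := hΛc.to_subtype
  obtain ⟨rA, hrA⟩ := hAb.subset_closedBall 0
  obtain ⟨rD, hrD⟩ := hDb.subset_closedBall 0
  set cA : ℝ := max rA 0 with hcA
  set cD : ℝ := max rD 0 with hcD
  have hcA0 : 0 ≤ cA := le_max_right _ _
  have hcD0 : 0 ≤ cD := le_max_right _ _
  have hrA' : A ⊆ closedBall 0 cA := hrA.trans (closedBall_subset_closedBall (le_max_left _ _))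
  have hrD' : D ⊆ closedBall 0 cD := hrD.trans (closedBall_subset_closedBall (le_max_left _ _))
  set c : ℝ := cA + cD with hc
  have hc0 : 0 ≤ c := add_nonneg hcA0 hcD0
  -- volume is not the zero measure
  have hvol0 : (volume : Measure (Fin d → ℝ)) ≠ 0 := by
    intro h
    have h1 := measure_closedBall_pos (volume : Measure (Fin d → ℝ)) 0 one_pos
    rw [h] at h1
    simp at h1
  haveI : (MeasureTheory.ae (volume : Measure (Fin d → ℝ))).NeBot := ae_neBot.mpr hvol0
  -- volume A is positive
  have hA0 : volume A ≠ 0 := by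
    intro h0
    have hnull : volume (⋃ l : Λ, (fun x => x - (l : Fin d → ℝ)) ⁻¹' A) = 0 :=
      measure_iUnion_null fun l => by rw [vol_preimage_sub']; exact h0
    have hnm : ∀ᵐ x : Fin d → ℝ, x ∉ ⋃ l : Λ, (fun x => x - (l : Fin d → ℝ)) ⁻¹' A :=
      measure_eq_zero_iff_ae_notMem.mp hnull
    obtain ⟨x, hx1, hx2⟩ := (htile.and hnm).exists
    have hz : ∀ l : Λ, Set.indicator A (fun _ => (1 : ℝ)) (x - (l : Fin d → ℝ)) = 0 := by
      intro l
      apply Set.indicator_of_notMem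
      intro hmem
      exact hx2 (Set.mem_iUnion.mpr ⟨l, hmem⟩)
    rw [tsum_congr hz, tsum_zero] at hx1
    norm_num at hx1
  -- volume A is finite
  have hAtop : volume A ≠ ⊤ :=
    ((measure_mono hrA').trans_lt measure_closedBall_lt_top).ne
  have hDtop : volume D ≠ ⊤ :=
    ((measure_mono hrD').trans_lt measure_closedBall_lt_top).ne
  -- key disjointness of translates of D
  have hAE : ∀ l l' : ↥Λ, l ≠ l' →
      volume ({x | x - (l : Fin d → ℝ) ∈ D} ∩ {x | x - (l' : Fin d → ℝ) ∈ D}) = 0 := by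
    intro l l' hne
    have key : ∀ S : Set (Fin d → ℝ),
        {x | x - (l : Fin d → ℝ) ∈ S} ∩ {x | x - (l' : Fin d → ℝ) ∈ S}
          = (fun x => x - (l : Fin d → ℝ)) ⁻¹'
            (S ∩ {y | y - ((l' : Fin d → ℝ) - (l : Fin d → ℝ)) ∈ S}) := by
      intro S
      ext x
      have hx : x - (l : Fin d → ℝ) - ((l' : Fin d → ℝ) - (l : Fin d → ℝ))
          = x - (l' : Fin d → ℝ) := by abel
      simp only [mem_inter_iff, mem_preimage, mem_setOf_eq, hx]
    have hA : volume ({x | x - (l : Fin d → ℝ) ∈ A} ∩ {x | x - (l' : Fin d → ℝ) ∈ A}) = 0 := by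
      have hsub : {x | x - (l : Fin d → ℝ) ∈ A} ∩ {x | x - (l' : Fin d → ℝ) ∈ A} ⊆
          {x | ¬ (∑' m : Λ, Set.indicator A (fun _ => (1 : ℝ)) (x - (m : Fin d → ℝ))) = 1} := by
        rintro x ⟨hx1, hx2⟩ hx
        have hx1' : x - (l : Fin d → ℝ) ∈ A := hx1
        have hx2' : x - (l' : Fin d → ℝ) ∈ A := hx2
        have hs : Summable (fun m : Λ => Set.indicator A (fun _ => (1 : ℝ))
            (x - (m : Fin d → ℝ))) := by
          by_contra hns
          rw [tsum_eq_zero_of_not_summable hns] at hx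
          norm_num at hx
        have h2 := Summable.sum_le_tsum ({l, l'} : Finset ↥Λ)
          (fun m _ => Set.indicator_nonneg (fun _ _ => zero_le_one) _) hs
        rw [Finset.sum_pair hne, Set.indicator_of_mem hx1', Set.indicator_of_mem hx2', hx] at h2
        norm_num at h2
      exact measure_mono_null hsub (ae_iff.mp htile)
    have hnA : (l' : Fin d → ℝ) - (l : Fin d → ℝ) ∉ essDiff A := by
      simp only [essDiff, mem_setOf_eq, not_lt, le_zero_iff]
      rw [← vol_preimage_sub' d (l : Fin d → ℝ), ← key A]
      exact hA
    have hnD : (l' : Fin d → ℝ) - (l : Fin d → ℝ) ∉ essDiff D := fun h => hnA (hpack h)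
    have hD0 : volume (D ∩ {y | y - ((l' : Fin d → ℝ) - (l : Fin d → ℝ)) ∈ D}) = 0 := by
      simpa only [essDiff, mem_setOf_eq, not_lt, le_zero_iff] using hnD
    rw [key D, vol_preimage_sub']
    exact hD0
  -- the ℝ≥0∞-valued tiling identity
  have hae : ∀ᵐ x : Fin d → ℝ,
      (∑' l : Λ, Set.indicator A (fun _ => (1 : ℝ≥0∞)) (x - (l : Fin d → ℝ))) = 1 := by
    filter_upwards [htile] with x hx
    have hs : Summable (fun l : Λ => Set.indicator A (fun _ => (1 : ℝ))
        (x - (l : Fin d → ℝ))) := by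
      by_contra hns
      rw [tsum_eq_zero_of_not_summable hns] at hx
      norm_num at hx
    calc (∑' l : Λ, Set.indicator A (fun _ => (1 : ℝ≥0∞)) (x - (l : Fin d → ℝ)))
        = ∑' l : Λ, ENNReal.ofReal (Set.indicator A (fun _ => (1 : ℝ)) (x - (l : Fin d → ℝ))) := by
          refine tsum_congr fun l => ?_
          by_cases h : x - (l : Fin d → ℝ) ∈ A <;> simp [h]
      _ = ENNReal.ofReal (∑' l : Λ, Set.indicator A (fun _ => (1 : ℝ)) (x - (l : Fin d → ℝ))) :=
          (ENNReal.ofReal_tsum_of_nonneg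
            (fun l => Set.indicator_nonneg (fun _ _ => zero_le_one) _) hs).symm
      _ = 1 := by rw [hx, ENNReal.ofReal_one]
  -- the main counting inequality
  have main : ∀ R : ℝ, 0 ≤ R →
      volume (closedBall (0 : Fin d → ℝ) R) * volume D ≤
        volume (closedBall (0 : Fin d → ℝ) (R + c)) * volume A := by
    intro R hR
    set P : ↥Λ → Prop := fun l => ‖(l : Fin d → ℝ)‖ ≤ R + cA with hP
    set S : ℝ≥0∞ := ∑' l : ↥Λ, (if P l then (1 : ℝ≥0∞) else 0) with hS
    have hmeas : ∀ l : ↥Λ, Measurable fun x : Fin d → ℝ =>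
        Set.indicator A (fun _ => (1 : ℝ≥0∞)) (x - (l : Fin d → ℝ)) :=
      fun l => (measurable_const.indicator hAm).comp (measurable_id.sub measurable_const)
    have lower : volume (closedBall (0 : Fin d → ℝ) R) ≤ S * volume A := by
      have l1 : volume (closedBall (0 : Fin d → ℝ) R)
          = ∫⁻ x in closedBall (0 : Fin d → ℝ) R,
              (∑' l : Λ, Set.indicator A (fun _ => (1 : ℝ≥0∞)) (x - (l : Fin d → ℝ))) := by
        rw [← setLIntegral_one]
        exact lintegral_congr_ae (ae_restrict_of_ae (hae.mono fun x hx => hx.symm))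
      have l2 : (∫⁻ x in closedBall (0 : Fin d → ℝ) R,
            (∑' l : Λ, Set.indicator A (fun _ => (1 : ℝ≥0∞)) (x - (l : Fin d → ℝ))))
          = ∑' l : ↥Λ, ∫⁻ x in closedBall (0 : Fin d → ℝ) R,
              Set.indicator A (fun _ => (1 : ℝ≥0∞)) (x - (l : Fin d → ℝ)) :=
        lintegral_tsum fun l => (hmeas l).aemeasurable
      have l3 : ∀ l : ↥Λ, (∫⁻ x in closedBall (0 : Fin d → ℝ) R,
            Set.indicator A (fun _ => (1 : ℝ≥0∞)) (x - (l : Fin d → ℝ)))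
          ≤ (if P l then volume A else 0) := by
        intro l
        have hfs : MeasurableSet ((fun x : Fin d → ℝ => x - (l : Fin d → ℝ)) ⁻¹' A) :=
          hAm.preimage (measurable_id.sub measurable_const)
        have heq : (∫⁻ x in closedBall (0 : Fin d → ℝ) R,
            Set.indicator A (fun _ => (1 : ℝ≥0∞)) (x - (l : Fin d → ℝ)))
            = ∫⁻ x in closedBall (0 : Fin d → ℝ) R,
              Set.indicator ((fun x : Fin d → ℝ => x - (l : Fin d → ℝ)) ⁻¹' A)
                (fun _ => (1 : ℝ≥0∞)) x := by
          refine lintegral_congr fun x => ?_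
          by_cases h : x - (l : Fin d → ℝ) ∈ A <;> simp [h]
        rw [heq, lintegral_indicator hfs, setLIntegral_one, Measure.restrict_apply hfs]
        by_cases hPl : P l
        · rw [if_pos hPl]
          calc volume ((fun x : Fin d → ℝ => x - (l : Fin d → ℝ)) ⁻¹' A
                ∩ closedBall 0 R)
              ≤ volume ((fun x : Fin d → ℝ => x - (l : Fin d → ℝ)) ⁻¹' A) :=
                measure_mono inter_subset_left
            _ = volume A := vol_preimage_sub' d _ _
        · rw [if_neg hPl]
          have hempty : (fun x : Fin d → ℝ => x - (l : Fin d → ℝ)) ⁻¹' A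
              ∩ closedBall 0 R = ∅ := by
            ext x
            simp only [mem_inter_iff, mem_preimage, mem_closedBall_zero_iff, mem_empty_iff_false,
              iff_false, not_and]
            intro hx1 hx2
            apply hPl
            calc ‖(l : Fin d → ℝ)‖ = ‖x - (x - (l : Fin d → ℝ))‖ :=
                congrArg norm (by abel : (l : Fin d → ℝ) = x - (x - (l : Fin d → ℝ)))
              _ ≤ ‖x‖ + ‖x - (l : Fin d → ℝ)‖ := norm_sub_le _ _
              _ ≤ R + cA := add_le_add hx2 (mem_closedBall_zero_iff.mp (hrA' hx1))
          rw [hempty, measure_empty]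
      have l4 : (∑' l : ↥Λ, (if P l then volume A else 0)) = S * volume A := by
        rw [hS, ← ENNReal.tsum_mul_right]
        refine tsum_congr fun l => ?_
        by_cases hPl : P l <;> simp [hPl]
      calc volume (closedBall (0 : Fin d → ℝ) R)
          = ∑' l : ↥Λ, ∫⁻ x in closedBall (0 : Fin d → ℝ) R,
              Set.indicator A (fun _ => (1 : ℝ≥0∞)) (x - (l : Fin d → ℝ)) := l1.trans l2
        _ ≤ ∑' l : ↥Λ, (if P l then volume A else 0) := ENNReal.tsum_le_tsum l3
        _ = S * volume A := l4
    have upper : S * volume D ≤ volume (closedBall (0 : Fin d → ℝ) (R + c)) := by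
      set F : ↥Λ → Set (Fin d → ℝ) :=
        fun l => if P l then (fun x : Fin d → ℝ => x - (l : Fin d → ℝ)) ⁻¹' D else ∅ with hF
      have hFd : Pairwise (Function.onFun (AEDisjoint volume) F) := by
        intro l l' hne
        simp only [Function.onFun, hF]
        split_ifs with h1 h2 h2
        · exact hAE l l' hne
        all_goals simp [AEDisjoint]
      have hFm : ∀ l, NullMeasurableSet (F l) volume := by
        intro l
        simp only [hF]
        split_ifs
        · exact (hDm.preimage (measurable_id.sub measurable_const)).nullMeasurableSet
        · exact MeasurableSet.empty.nullMeasurableSet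
      have hU : volume (⋃ l, F l) = ∑' l, volume (F l) := measure_iUnion₀ hFd hFm
      have hUsub : (⋃ l : ↥Λ, F l) ⊆ closedBall (0 : Fin d → ℝ) (R + c) := by
        intro x hx
        obtain ⟨l, hl⟩ := mem_iUnion.mp hx
        revert hl
        simp only [hF]
        split_ifs with hPl
        · intro hl
          rw [mem_preimage] at hl
          rw [mem_closedBall_zero_iff]
          calc ‖x‖ = ‖(x - (l : Fin d → ℝ)) + (l : Fin d → ℝ)‖ :=
                congrArg norm (by abel : x = (x - (l : Fin d → ℝ)) + (l : Fin d → ℝ))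
            _ ≤ ‖x - (l : Fin d → ℝ)‖ + ‖(l : Fin d → ℝ)‖ := norm_add_le _ _
            _ ≤ cD + (R + cA) := add_le_add (mem_closedBall_zero_iff.mp (hrD' hl)) hPl
            _ = R + c := by rw [hc]; ring
        · intro hl
          exact absurd hl (notMem_empty x)
      have hvF : ∀ l, volume (F l) = (if P l then volume D else 0) := by
        intro l
        simp only [hF]
        split_ifs
        · exact vol_preimage_sub' d _ _
        · exact measure_empty
      calc S * volume D = ∑' l : ↥Λ, (if P l then volume D else 0) := by
            rw [hS, ← ENNReal.tsum_mul_right]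
            refine tsum_congr fun l => ?_
            by_cases hPl : P l <;> simp [hPl]
        _ = ∑' l, volume (F l) := (tsum_congr hvF).symm
        _ = volume (⋃ l, F l) := hU.symm
        _ ≤ volume (closedBall (0 : Fin d → ℝ) (R + c)) := measure_mono hUsub
    calc volume (closedBall (0 : Fin d → ℝ) R) * volume D
        ≤ (S * volume A) * volume D := mul_le_mul_left lower _
      _ = (S * volume D) * volume A := by ring
      _ ≤ volume (closedBall (0 : Fin d → ℝ) (R + c)) * volume A :=
          mul_le_mul_left upper _
  -- convert to a real inequality using the ball volume formula
  set κ := volume (closedBall (0 : Fin d → ℝ) 1) with hκ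
  have hκ0 : κ ≠ 0 := (measure_closedBall_pos volume 0 one_pos).ne'
  have hκt : κ ≠ ⊤ := measure_closedBall_lt_top.ne
  have form : ∀ r : ℝ, 0 ≤ r →
      volume (closedBall (0 : Fin d → ℝ) r) = ENNReal.ofReal (r ^ d) * κ := by
    intro r hr
    rw [Measure.addHaar_closedBall _ _ hr]
    simp [hκ]
  set a := (volume A).toReal with ha
  set b := (volume D).toReal with hb
  have hab : a < b := (ENNReal.toReal_lt_toReal hAtop hDtop).mpr hlarge
  have ha0 : 0 < a := ENNReal.toReal_pos hA0 hAtop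
  have ineq : ∀ R : ℝ, 0 ≤ R → R ^ d * b ≤ (R + c) ^ d * a := by
    intro R hR
    have h1 := main R hR
    rw [form R hR, form (R + c) (by positivity)] at h1
    have h2 : ENNReal.ofReal (R ^ d) * volume D ≤ ENNReal.ofReal ((R + c) ^ d) * volume A := by
      rw [mul_comm (ENNReal.ofReal (R ^ d)) κ, mul_assoc, mul_comm (ENNReal.ofReal ((R + c) ^ d)) κ,
        mul_assoc] at h1
      exact (ENNReal.mul_le_mul_iff_right hκ0 hκt).mp h1
    have h3 := ENNReal.toReal_mono
      (ENNReal.mul_ne_top ENNReal.ofReal_ne_top hAtop) h2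
    rw [ENNReal.toReal_mul, ENNReal.toReal_mul, ENNReal.toReal_ofReal (by positivity),
      ENNReal.toReal_ofReal (by positivity)] at h3
    exact h3
  -- take R large
  have hlim : Tendsto (fun R : ℝ => ((R + c) / R) ^ d) atTop (nhds 1) := by
    have h1 : Tendsto (fun R : ℝ => 1 + c / R) atTop (nhds 1) := by
      have h0 : Tendsto (fun R : ℝ => c / R) atTop (nhds 0) :=
        tendsto_const_nhds.div_atTop tendsto_id
      simpa using (tendsto_const_nhds (x := (1 : ℝ)) (f := atTop)).add h0
    have h2 := h1.pow d
    rw [one_pow] at h2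
    apply h2.congr'
    filter_upwards [eventually_gt_atTop (0 : ℝ)] with R hR
    have hRne : R ≠ 0 := hR.ne'
    rw [show (1 : ℝ) + c / R = (R + c) / R from by field_simp]
  have hev : ∀ᶠ R in atTop, ((R + c) / R) ^ d < b / a :=
    hlim.eventually_lt_const ((one_lt_div ha0).mpr hab)
  obtain ⟨R, hR1, hRlt⟩ := ((eventually_ge_atTop (1 : ℝ)).and hev).exists
  have hR0 : (0 : ℝ) < R := lt_of_lt_of_le one_pos hR1
  have hkey := ineq R hR0.le
  have hpow : (R + c) ^ d = ((R + c) / R) ^ d * R ^ d := by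
    rw [div_pow, div_mul_cancel₀]
    positivity
  rw [hpow] at hkey
  have hRd : (0 : ℝ) < R ^ d := by positivity
  have h5 : ((R + c) / R) ^ d * a < b := (lt_div_iff₀ ha0).mp hRlt
  nlinarith [mul_lt_mul_of_pos_right h5 hRd]
end
end

section
/- Let A ⊂ ℝᵈ be a bounded measurable set that admits a packing region D with D ⊇ A and m(D) > m(A), and suppose ν is a positive locally finite measure on ℝᵈ supported on the complement of Δ(A) such that 𝟙_A ∗ ν = 𝟙_{Aᶜ} a.e. Then a contradiction follows; i.e., no such ν exists, so A cannot weakly tile its complement by a measure supported on Δ(A)ᶜ. -/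
open MeasureTheory Set
open scoped ENNReal

noncomputable section

/-- If `A` has a packing region `D ⊇ A` with `m(D) > m(A)`, then `A` cannot weakly tile
its complement by a measure supported on `Δ(A)ᶜ`. -/
theorem no_weak_tiling_of_large_containing_packing_region
    (d : ℕ) (A D : Set (Fin d → ℝ))
    (hAb : Bornology.IsBounded A) (hAm : MeasurableSet A)
    (hDb : Bornology.IsBounded D) (hDm : MeasurableSet D)
    (hpack : essDiff D ⊆ essDiff A) (hsub : A ⊆ D)
    (hlarge : volume A < volume D)
    (ν : Measure (Fin d → ℝ)) (hν : IsLocallyFiniteMeasure ν)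
    (hsupp : ν (essDiff A) = 0)
    (hwt : ∀ᵐ x : Fin d → ℝ,
      (∫ t, Set.indicator A (fun _ => (1 : ℝ)) (x - t) ∂ν)
        = Set.indicator Aᶜ (fun _ => (1 : ℝ)) x) :
    False := by
  classical
  haveI := hν
  have hADm : MeasurableSet (D \ A) := hDm.diff hAm
  set μ : Measure (Fin d → ℝ) := volume.restrict (D \ A) with hμ
  set f : (Fin d → ℝ) → (Fin d → ℝ) → ℝ≥0∞ :=
    fun x t => A.indicator (fun _ => (1 : ℝ≥0∞)) (x - t) with hf
  -- Step A: for μ-a.e. x, the inner lintegral is 1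
  have key : ∀ᵐ x ∂μ, (∫⁻ t, f x t ∂ν) = 1 := by
    filter_upwards [ae_restrict_of_ae hwt, ae_restrict_mem hADm] with x hx hmem
    have hxc : x ∈ Aᶜ := fun h => hmem.2 h
    rw [Set.indicator_of_mem hxc] at hx
    set g : (Fin d → ℝ) → ℝ := fun t => A.indicator (fun _ => (1 : ℝ)) (x - t) with hg
    have hgint : Integrable g ν := by
      by_contra h
      rw [integral_undef h] at hx
      exact one_ne_zero hx.symm
    have hnn : 0 ≤ᵐ[ν] g :=
      Filter.Eventually.of_forall fun t =>
        Set.indicator_nonneg (fun _ _ => zero_le_one) _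
    have h1 : ENNReal.ofReal (∫ t, g t ∂ν) = ∫⁻ t, ENNReal.ofReal (g t) ∂ν :=
      ofReal_integral_eq_lintegral_ofReal hgint hnn
    rw [hx, ENNReal.ofReal_one] at h1
    rw [h1]
    apply lintegral_congr fun t => ?_
    by_cases h : x - t ∈ A <;> simp [f, g, Set.indicator_apply, h]
  -- Step B: so ∫⁻ x, ∫⁻ t = vol (D\A)
  have hB : (∫⁻ x, ∫⁻ t, f x t ∂ν ∂μ) = volume (D \ A) := by
    rw [lintegral_congr_ae key, hμ, setLIntegral_one]
  -- Step C: swap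
  have hmeas : Measurable fun p : (Fin d → ℝ) × (Fin d → ℝ) =>
      A.indicator (fun _ => (1 : ℝ≥0∞)) (p.1 - p.2) :=
    (measurable_const.indicator hAm).comp (measurable_fst.sub measurable_snd)
  have hswap : (∫⁻ x, ∫⁻ t, f x t ∂ν ∂μ) = ∫⁻ t, ∫⁻ x, f x t ∂μ ∂ν :=
    lintegral_lintegral_swap hmeas.aemeasurable
  -- Step D: the swapped integral is zero
  have hν0 : ∀ᵐ t ∂ν, t ∉ essDiff A := by
    rw [ae_iff]
    simpa only [not_not, Set.setOf_mem_eq] using hsupp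
  have hD : (∫⁻ t, ∫⁻ x, f x t ∂μ ∂ν) = 0 := by
    have : ∀ᵐ t ∂ν, (∫⁻ x, f x t ∂μ) = 0 := by
      filter_upwards [hν0] with t ht
      have htD : t ∉ essDiff D := fun h => ht (hpack h)
      have hD0 : volume (D ∩ {x | x - t ∈ D}) = 0 := by
        simpa [essDiff, not_lt, le_zero_iff] using htD
      have hSm : MeasurableSet {x : Fin d → ℝ | x - t ∈ A} :=
        (measurable_id.sub measurable_const) hAm
      have : (∫⁻ x, f x t ∂μ) = μ {x | x - t ∈ A} := by
        rw [show (fun x => f x t)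
            = {x : Fin d → ℝ | x - t ∈ A}.indicator (fun _ => (1 : ℝ≥0∞)) from ?_]
        · rw [lintegral_indicator hSm, setLIntegral_one]
        · funext x
          by_cases h : x - t ∈ A <;> simp [f, Set.indicator_apply, h]
      rw [this, hμ, Measure.restrict_apply hSm]
      refine measure_mono_null ?_ hD0
      rintro x ⟨hxA, hxD, -⟩
      exact ⟨hxD, hsub hxA⟩
    rw [lintegral_congr_ae this, lintegral_zero]
  have hz : volume (D \ A) = 0 := by rw [← hB, hswap, hD]
  have : volume D ≤ volume A := by
    calc volume D ≤ volume (A ∪ (D \ A)) := by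
          apply measure_mono
          intro x hx
          by_cases h : x ∈ A
          · exact Or.inl h
          · exact Or.inr ⟨hx, h⟩
      _ ≤ volume A + volume (D \ A) := measure_union_le _ _
      _ = volume A := by rw [hz, add_zero]
  exact hlarge.not_ge this
end
end

section
/- Let Ω ⊂ ℝᵈ be a bounded, nowhere dense measurable set of positive measure. Then Ω cannot tile ℝᵈ by translations: there is no countable Λ ⊂ ℝᵈ such that Σ_{λ∈Λ} 𝟙_Ω(x − λ) = 1 for almost every x. -/
open MeasureTheory Set
open scoped ENNReal Pointwise

lemma dense_biInter_compl_closure_of_nowhereDense {X ι : Type*} [TopologicalSpace X]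
    (s : Finset ι) (f : ι → Set X) :
    (∀ i ∈ s, IsNowhereDense (f i)) → Dense (⋂ i ∈ s, (closure (f i))ᶜ) := by
  classical
  induction s using Finset.induction_on with
  | empty => intro _; simp
  | @insert a t _ ih =>
    intro h
    rw [Finset.set_biInter_insert]
    have h1 : Dense (closure (f a))ᶜ := by
      have := h a (Finset.mem_insert_self _ _)
      rw [IsNowhereDense] at this
      exact interior_eq_empty_iff_dense_compl.mp this
    have h2 : Dense (⋂ i ∈ t, (closure (f i))ᶜ) :=
      ih fun i hi => h i (Finset.mem_insert_of_mem hi)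
    exact h1.inter_of_isOpen_left h2 isClosed_closure.isOpen_compl

/-- A bounded, nowhere dense measurable set of positive measure cannot tile `ℝᵈ`
by translations. -/
theorem nowhere_dense_cannot_tile (d : ℕ) (Ω : Set (Fin d → ℝ))
    (hb : Bornology.IsBounded Ω) (hm : MeasurableSet Ω)
    (hnd : IsNowhereDense Ω) (hpos : 0 < volume Ω) :
    ¬ ∃ Λ : Set (Fin d → ℝ), Λ.Countable ∧
      ∀ᵐ x : Fin d → ℝ,
        (∑' l : Λ, Set.indicator Ω (fun _ => (1 : ℝ)) (x - (l : Fin d → ℝ))) = 1 := by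
  classical
  rintro ⟨Λ, hΛc, hae⟩
  set g : (Fin d → ℝ) → ℝ := fun y => Set.indicator Ω (fun _ => (1 : ℝ)) y with hg_def
  have hg0 : ∀ y, 0 ≤ g y := fun y => Set.indicator_nonneg (fun _ _ => zero_le_one) y
  have hg_mem : ∀ y, y ∈ Ω → g y = 1 := fun y hy => Set.indicator_of_mem hy _
  have hg_nmem : ∀ y, y ∉ Ω → g y = 0 := fun y hy => Set.indicator_of_notMem hy _
  -- radius bound for Ω
  obtain ⟨r₀, hΩr₀⟩ := hb.subset_closedBall 0
  set r := max r₀ 0 with hr_def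
  have hr0 : 0 ≤ r := le_max_right _ _
  have hΩr : Ω ⊆ Metric.closedBall 0 r :=
    hΩr₀.trans (Metric.closedBall_subset_closedBall (le_max_left _ _))
  have hΩfin : volume Ω < ∞ :=
    lt_of_le_of_lt (measure_mono hΩr) (measure_closedBall_lt_top)
  -- the translates
  set T : (Fin d → ℝ) → Set (Fin d → ℝ) := fun l => (fun x => x - l) ⁻¹' Ω with hT_def
  have hT_meas : ∀ l, MeasurableSet (T l) := fun l =>
    hm.preimage (measurable_id.sub_const l)
  have hT_vol : ∀ l, volume (T l) = volume Ω := by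
    intro l
    have : T l = (fun x => x + (-l)) ⁻¹' Ω := by
      ext x; simp [hT_def, sub_eq_add_neg]
    rw [this, measure_preimage_add_right]
  have hT_sub : ∀ l : Fin d → ℝ, T l ⊆ Metric.closedBall 0 (‖l‖ + r) := by
    intro l x hx
    have h1 : ‖x - l‖ ≤ r := by
      have := hΩr hx
      rwa [Metric.mem_closedBall, dist_zero_right] at this
    rw [Metric.mem_closedBall, dist_zero_right]
    calc ‖x‖ = ‖x - l + l‖ := by ring_nf
      _ ≤ ‖x - l‖ + ‖l‖ := norm_add_le _ _
      _ ≤ r + ‖l‖ := by linarith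
      _ = ‖l‖ + r := by ring
  -- summability on the good set
  have hsummable : ∀ x : Fin d → ℝ, (∑' l : Λ, g (x - (l : Fin d → ℝ))) = 1 →
      Summable (fun l : Λ => g (x - (l : Fin d → ℝ))) := by
    intro x hx
    by_contra h
    rw [tsum_eq_zero_of_not_summable h] at hx
    exact zero_ne_one hx
  have hfinsum : ∀ x : Fin d → ℝ, (∑' l : Λ, g (x - (l : Fin d → ℝ))) = 1 →
      ∀ t : Finset Λ, (∑ l ∈ t, g (x - (l : Fin d → ℝ))) ≤ 1 := by
    intro x hx t
    calc (∑ l ∈ t, g (x - (l : Fin d → ℝ))) ≤ ∑' l : Λ, g (x - (l : Fin d → ℝ)) :=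
          Summable.sum_le_tsum t (fun i _ => hg0 _) (hsummable x hx)
      _ = 1 := hx
  -- a.e. disjointness of distinct translates
  have hdisj : ∀ l ∈ Λ, ∀ l' ∈ Λ, l ≠ l' → volume (T l ∩ T l') = 0 := by
    intro l hl l' hl' hne
    have hsub : T l ∩ T l' ⊆
        {x : Fin d → ℝ | ¬ (∑' m : Λ, g (x - (m : Fin d → ℝ))) = 1} := by
      rintro x ⟨hx1, hx2⟩ hx
      have ht := hfinsum x hx {⟨l, hl⟩, ⟨l', hl'⟩}
      have hne' : (⟨l, hl⟩ : Λ) ≠ ⟨l', hl'⟩ := by simpa using hne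
      rw [Finset.sum_pair hne'] at ht
      rw [hg_mem _ hx1, hg_mem _ hx2] at ht
      norm_num at ht
    exact measure_mono_null hsub hae
  -- local finiteness
  have hfin : ∀ R : ℝ, (Λ ∩ Metric.closedBall 0 R).Finite := by
    intro R
    by_contra hinf
    have hinf : (Λ ∩ Metric.closedBall 0 R).Infinite := hinf
    set B := Metric.closedBall (0 : Fin d → ℝ) (R + r) with hB_def
    have hBfin : volume B < ∞ := measure_closedBall_lt_top
    have hΩ0 : volume Ω ≠ 0 := hpos.ne'
    have hΩtop : volume Ω ≠ ∞ := hΩfin.ne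
    obtain ⟨n, hn⟩ := ENNReal.exists_nat_gt
      (r := volume B / volume Ω) (ENNReal.div_lt_top hBfin.ne hΩ0).ne
    have hnB : volume B < n * volume Ω := by
      rwa [ENNReal.div_lt_iff (Or.inl hΩ0) (Or.inl hΩtop)] at hn
    obtain ⟨s, hsub, hsfin, hscard⟩ := hinf.exists_subset_ncard_eq n
    have hvol : volume (⋃ l ∈ hsfin.toFinset, T l)
        = ∑ l ∈ hsfin.toFinset, volume (T l) := by
      apply measure_biUnion_finset₀
      · intro a ha b hb hab
        simp only [Set.Finite.coe_toFinset] at ha hb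
        exact hdisj a (hsub ha).1 b (hsub hb).1 hab
      · intro l _
        exact (hT_meas l).nullMeasurableSet
    have hUsub : (⋃ l ∈ hsfin.toFinset, T l) ⊆ B := by
      intro x hx
      simp only [Set.mem_iUnion] at hx
      obtain ⟨l, hl, hxl⟩ := hx
      rw [Set.Finite.mem_toFinset] at hl
      have hlR : ‖l‖ ≤ R := by
        have := (hsub hl).2
        rwa [Metric.mem_closedBall, dist_zero_right] at this
      have := hT_sub l hxl
      exact Metric.closedBall_subset_closedBall (by linarith) this
    have hsum : ∑ l ∈ hsfin.toFinset, volume (T l) = n * volume Ω := by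
      rw [Finset.sum_congr rfl (fun l _ => hT_vol l), Finset.sum_const,
        nsmul_eq_mul]
      congr 1
      rw [← hscard, Set.ncard_eq_toFinset_card s hsfin]
    have : (n : ℝ≥0∞) * volume Ω ≤ volume B := by
      rw [← hsum, ← hvol]
      exact measure_mono hUsub
    exact absurd this (not_le.mpr hnB)
  -- the finite relevant set near the unit ball
  set S := Λ ∩ Metric.closedBall (0 : Fin d → ℝ) (1 + r) with hS_def
  have hSfin : S.Finite := hfin (1 + r)
  set Sf := hSfin.toFinset with hSf_def
  -- translates are nowhere dense
  have hTnd : ∀ l : Fin d → ℝ, IsNowhereDense (T l) := by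
    intro l
    have hTl : T l = l +ᵥ Ω := by
      ext x
      rw [Set.mem_vadd_set_iff_neg_vadd_mem]
      simp [hT_def, sub_eq_neg_add, add_comm]
    rw [hTl, IsNowhereDense, closure_vadd, interior_vadd,
      show interior (closure Ω) = ∅ from hnd]
    simp
  -- the dense open complement
  have hdense : Dense (⋂ l ∈ Sf, (closure (T l))ᶜ) :=
    dense_biInter_compl_closure_of_nowhereDense Sf T (fun l _ => hTnd l)
  have hopen : IsOpen (⋂ l ∈ Sf, (closure (T l))ᶜ) :=
    isOpen_biInter_finset (fun l _ => isClosed_closure.isOpen_compl)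
  set D := Metric.ball (0 : Fin d → ℝ) 1 ∩ ⋂ l ∈ Sf, (closure (T l))ᶜ with hD_def
  have hDopen : IsOpen D := Metric.isOpen_ball.inter hopen
  have hDne : D.Nonempty :=
    hdense.inter_open_nonempty _ Metric.isOpen_ball
      ⟨0, Metric.mem_ball_self one_pos⟩
  have hDpos : 0 < volume D := hDopen.measure_pos volume hDne
  -- find a good point in D
  have hDG : (D ∩ {x : Fin d → ℝ | (∑' l : Λ, g (x - (l : Fin d → ℝ))) = 1}).Nonempty := by
    by_contra h
    rw [Set.not_nonempty_iff_eq_empty] at h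
    have hsub : D ⊆ {x : Fin d → ℝ | ¬ (∑' l : Λ, g (x - (l : Fin d → ℝ))) = 1} := by
      intro x hx hx1
      exact Set.eq_empty_iff_forall_notMem.mp h x ⟨hx, hx1⟩
    have : volume D = 0 := measure_mono_null hsub hae
    exact absurd this hDpos.ne'
  obtain ⟨y, hyD, hy1⟩ := hDG
  have hy1' : (∑' l : Λ, g (y - (l : Fin d → ℝ))) = 1 := hy1
  -- every term vanishes at y
  have hzero : ∀ l : Λ, g (y - (l : Fin d → ℝ)) = 0 := by
    rintro ⟨l, hl⟩
    by_cases hcase : ‖l‖ ≤ 1 + r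
    · -- l ∈ S, so y avoids closure (T l)
      have hlS : l ∈ Sf := by
        rw [hSf_def, Set.Finite.mem_toFinset]
        exact ⟨hl, by rwa [Metric.mem_closedBall, dist_zero_right]⟩
      have hy2 := hyD.2
      rw [Set.mem_iInter₂] at hy2
      have := hy2 l hlS
      have hyT : y ∉ T l := fun hT => this (subset_closure hT)
      exact hg_nmem _ (fun hmem => hyT hmem)
    · -- l is far away
      push_neg at hcase
      have hy_norm : ‖y‖ < 1 := by
        have := hyD.1
        rwa [Metric.mem_ball, dist_zero_right] at this
      have hfar : r < ‖y - l‖ := by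
        have h1 : ‖l‖ - ‖y‖ ≤ ‖y - l‖ := by
          calc ‖l‖ - ‖y‖ ≤ ‖l - y‖ := norm_sub_norm_le l y
            _ = ‖y - l‖ := norm_sub_rev l y
        linarith
      apply hg_nmem
      intro hmem
      have := hΩr hmem
      rw [Metric.mem_closedBall, dist_zero_right] at this
      linarith
  have hz : (∑' l : Λ, g (y - (l : Fin d → ℝ))) = 0 := by
    have heq : (fun l : Λ => g (y - (l : Fin d → ℝ))) = fun _ => 0 := funext hzero
    rw [heq]
    exact tsum_zero
  rw [hz] at hy1'
  exact zero_ne_one hy1'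
end

section
/- Let E ⊂ ℝ be the symmetric Cantor set E = ⋂ₙ Eₙ, where Eₙ is a finite union of closed intervals of length ℓₙ obtained from E_{n−1} by removing an open middle interval of length dₙ from each interval, and write Aₙ for the union of the removed intervals at step n. Then m(Aₙ) = (dₙ / (2ℓₙ)) · m(Eₙ), and for every t ∈ ℝ with dₙ < ℓₙ, ((ℓₙ − dₙ)/dₙ) · m((Eₙ + t) ∩ Aₙ) ≤ m((Eₙ + t) ∩ Eₙ). -/
open MeasureTheory Set

noncomputable section

/-- Lengths of the intervals in the Cantor-type construction: starting from `[0,1]`,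
at step `n+1` an open middle interval of length `d n` is removed from each interval
of length `lenSeq d n`, producing intervals of length `lenSeq d (n+1)`. -/
def lenSeq (d : ℕ → ℝ) : ℕ → ℝ
  | 0 => 1
  | n + 1 => (lenSeq d n - d n) / 2

/-- Left endpoints of the intervals of the `n`-th stage set. -/
def ctrs (d : ℕ → ℝ) : ℕ → Finset ℝ
  | 0 => {0}
  | n + 1 => ctrs d n ∪ (ctrs d n).image (· + (lenSeq d (n + 1) + d n))

/-- The `n`-th stage set `Eₙ`: a finite union of closed intervals of length `lenSeq d n`. -/
def stageE (d : ℕ → ℝ) (n : ℕ) : Set ℝ :=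
  ⋃ c ∈ ctrs d n, Set.Icc (c : ℝ) (c + lenSeq d n)

/-- `A_{n+1}`: the union of open middle intervals (of length `d n`) removed from the
intervals of `Eₙ` to form `E_{n+1}`. -/
def removedA (d : ℕ → ℝ) (n : ℕ) : Set ℝ :=
  ⋃ c ∈ ctrs d n, Set.Ioo (c + lenSeq d (n + 1)) (c + lenSeq d (n + 1) + d n)

lemma lenSeq_eq (d : ℕ → ℝ) (n : ℕ) :
    lenSeq d n = 2 * lenSeq d (n + 1) + d n := by
  show lenSeq d n = 2 * ((lenSeq d n - d n) / 2) + d n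
  ring

lemma lenSeq_pos (d : ℕ → ℝ) (hd : ∀ n, 0 < d n ∧ d n < lenSeq d n) :
    ∀ n, 0 < lenSeq d n := by
  intro n
  cases n with
  | zero => norm_num [lenSeq]
  | succ m =>
    have h1 := (hd m).2
    show 0 < (lenSeq d m - d m) / 2
    linarith

lemma ctrs_sep (d : ℕ → ℝ) (hd : ∀ n, 0 < d n ∧ d n < lenSeq d n) :
    ∀ n, ∀ c ∈ ctrs d n, ∀ c' ∈ ctrs d n, c ≠ c' → lenSeq d n ≤ |c - c'| := by
  intro n
  induction n with
  | zero =>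
    intro c hc c' hc' hne
    simp only [ctrs, Finset.mem_singleton] at hc hc'
    subst hc; subst hc'; exact absurd rfl hne
  | succ m ih =>
    have hk := (hd m).1
    have hl' := lenSeq_pos d hd (m + 1)
    have he := lenSeq_eq d m
    have hpos : (0:ℝ) < lenSeq d (m+1) + d m := by linarith
    have key : ∀ a ∈ ctrs d m, ∀ b ∈ ctrs d m,
        a ≠ b + (lenSeq d (m+1) + d m) → lenSeq d (m+1) ≤ |a - (b + (lenSeq d (m+1) + d m))| := by
      intro a ha b hb hne
      by_cases hab : a = b
      · subst hab
        have h3 : a - (a + (lenSeq d (m+1) + d m)) = -(lenSeq d (m+1) + d m) := by ring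
        rw [h3, abs_neg, abs_of_pos hpos]
        linarith
      · have h1 := ih a ha b hb hab
        have h2 : |a - b| - |a - (b + (lenSeq d (m+1) + d m))| ≤
            |(a - b) - (a - (b + (lenSeq d (m+1) + d m)))| := abs_sub_abs_le_abs_sub _ _
        have h3 : (a - b) - (a - (b + (lenSeq d (m+1) + d m))) = lenSeq d (m+1) + d m := by ring
        rw [h3, abs_of_pos hpos] at h2
        linarith
    intro c hc c' hc' hne
    simp only [ctrs, Finset.mem_union, Finset.mem_image] at hc hc'
    rcases hc with hc | ⟨a, ha, rfl⟩ <;> rcases hc' with hc' | ⟨b, hb, rfl⟩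
    · have := ih c hc c' hc' hne
      linarith
    · exact key c hc b hb hne
    · have := key c' hc' a ha (Ne.symm hne)
      rwa [abs_sub_comm] at this
    · by_cases hab : a = b
      · subst hab; exact absurd rfl hne
      · have := ih a ha b hb hab
        have h4 : a + (lenSeq d (m+1) + d m) - (b + (lenSeq d (m+1) + d m)) = a - b := by ring
        rw [h4]
        linarith

lemma aedisjoint_Icc_of_le {a b a' b' : ℝ} (h : b ≤ a') :
    AEDisjoint volume (Icc a b) (Icc a' b') := by
  have hs : Icc a b ∩ Icc a' b' ⊆ Icc a' b := fun x hx => ⟨hx.2.1, hx.1.2⟩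
  refine measure_mono_null hs ?_
  rw [Real.volume_Icc]
  exact ENNReal.ofReal_eq_zero.mpr (by linarith)

lemma pairwise_aedisjoint_Icc (d : ℕ → ℝ) (hd : ∀ n, 0 < d n ∧ d n < lenSeq d n)
    (n : ℕ) (t : ℝ) :
    (↑(ctrs d n) : Set ℝ).Pairwise
      (Function.onFun (AEDisjoint volume) fun c => Icc (c + t) (c + t + lenSeq d n)) := by
  intro c hc c' hc' hne
  have h := ctrs_sep d hd n c (by simpa using hc) c' (by simpa using hc') hne
  rcases abs_cases (c - c') with ⟨h1, _⟩ | ⟨h1, _⟩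
  · rw [h1] at h
    exact (aedisjoint_Icc_of_le (a := c' + t) (by linarith)).symm
  · rw [h1] at h
    exact aedisjoint_Icc_of_le (by linarith)

lemma vol_Icc_inter_Ioo (a b g h : ℝ) :
    volume (Icc a b ∩ Ioo g h) = ENNReal.ofReal (min b h - max a g) := by
  apply le_antisymm
  · have hs : Icc a b ∩ Ioo g h ⊆ Icc (max a g) (min b h) := by
      rintro x ⟨⟨h1, h2⟩, h3, h4⟩
      exact ⟨max_le h1 h3.le, le_min h2 h4.le⟩
    calc volume (Icc a b ∩ Ioo g h) ≤ volume (Icc (max a g) (min b h)) := measure_mono hs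
      _ = ENNReal.ofReal (min b h - max a g) := Real.volume_Icc
  · have hs : Ioo (max a g) (min b h) ⊆ Icc a b ∩ Ioo g h := by
      rintro x ⟨h1, h2⟩
      have h5 := le_max_left a g
      have h6 := le_max_right a g
      have h7 := min_le_left b h
      have h8 := min_le_right b h
      exact ⟨⟨by linarith, by linarith⟩, by linarith, by linarith⟩
    calc ENNReal.ofReal (min b h - max a g) = volume (Ioo (max a g) (min b h)) :=
          Real.volume_Ioo.symm
      _ ≤ volume (Icc a b ∩ Ioo g h) := measure_mono hs

lemma ofReal_max_zero (x : ℝ) : ENNReal.ofReal (max x 0) = ENNReal.ofReal x := by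
  rcases le_total x 0 with h | h
  · rw [max_eq_right h, ENNReal.ofReal_zero, Eq.comm, ENNReal.ofReal_eq_zero]
    exact h
  · rw [max_eq_left h]

lemma core_real (l k a g : ℝ) (h0 : 0 < k) (h1 : k < l) :
    ((l - k) / k) * (min (a + l) (g + k) - max a g) ≤
      max (min (a + l) g - max a (g - l)) 0 +
        max (min (a + l) (g + k + l) - max a (g + k)) 0 := by
  have hL := le_max_right (min (a + l) g - max a (g - l)) (0:ℝ)
  have hR := le_max_right (min (a + l) (g + k + l) - max a (g + k)) (0:ℝ)
  rcases le_or_gt (min (a + l) (g + k) - max a g) 0 with h | h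
  · have hnn : (0:ℝ) ≤ (l - k)/k := div_nonneg (by linarith) h0.le
    nlinarith [mul_nonpos_of_nonneg_of_nonpos hnn h]
  · rw [div_mul_eq_mul_div, div_le_iff₀ h0]
    rcases le_total a g with hag | hag
    · rw [max_eq_right hag] at h ⊢
      have hal : g < a + l := by
        have := min_le_left (a + l) (g + k); linarith
      rw [min_eq_right hal.le, max_eq_left (by linarith : g - l ≤ a),
        max_eq_left (by linarith : (0:ℝ) ≤ g - a)]
      rcases le_total (a + l) (g + k) with h2 | h2
      · rw [min_eq_left h2] at h ⊢
        nlinarith [mul_nonneg (by linarith : (0:ℝ) ≤ k - (a + l - g))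
          (by linarith : (0:ℝ) ≤ l)]
      · rw [min_eq_right h2] at h ⊢
        rw [max_eq_right (by linarith : a ≤ g + k),
          min_eq_left (by linarith : a + l ≤ g + k + l),
          max_eq_left (by linarith : (0:ℝ) ≤ a + l - (g + k))]
        nlinarith
    · rw [max_eq_left hag] at h ⊢
      have hak : a < g + k := by
        have := min_le_right (a + l) (g + k); linarith
      have h2 : g + k ≤ a + l := by linarith
      rw [min_eq_right h2] at h ⊢
      rw [max_eq_right hak.le, min_eq_left (by linarith : a + l ≤ g + k + l),
        max_eq_left (by linarith : (0:ℝ) ≤ a + l - (g + k))]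
      nlinarith [mul_nonneg (by linarith : (0:ℝ) ≤ k - (g + k - a))
        (by linarith : (0:ℝ) ≤ l)]

lemma core_enn (l k a g : ℝ) (h0 : 0 < k) (h1 : k < l) :
    ENNReal.ofReal ((l - k) / k) * volume (Icc a (a + l) ∩ Ioo g (g + k)) ≤
      volume (Icc a (a + l) ∩ Icc (g - l) g) +
        volume (Icc a (a + l) ∩ Icc (g + k) (g + k + l)) := by
  rw [vol_Icc_inter_Ioo, Set.Icc_inter_Icc, Set.Icc_inter_Icc, Real.volume_Icc,
    Real.volume_Icc]
  have hp : (0:ℝ) ≤ (l - k) / k := div_nonneg (by linarith) h0.le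
  rw [← ENNReal.ofReal_mul hp]
  have h2 := core_real l k a g h0 h1
  calc ENNReal.ofReal ((l - k) / k * (min (a + l) (g + k) - max a g))
      ≤ ENNReal.ofReal (max (min (a + l) g - max a (g - l)) 0 +
          max (min (a + l) (g + k + l) - max a (g + k)) 0) := ENNReal.ofReal_le_ofReal h2
    _ = ENNReal.ofReal (max (min (a + l) g - max a (g - l)) 0) +
          ENNReal.ofReal (max (min (a + l) (g + k + l) - max a (g + k)) 0) :=
        ENNReal.ofReal_add (le_max_right _ _) (le_max_right _ _)
    _ = ENNReal.ofReal ((a + l) ⊓ g - a ⊔ (g - l)) +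
          ENNReal.ofReal ((a + l) ⊓ (g + k + l) - a ⊔ (g + k)) := by
        rw [ofReal_max_zero, ofReal_max_zero]

lemma stageE_succ (d : ℕ → ℝ) (n : ℕ) :
    stageE d (n + 1) = ⋃ c ∈ ctrs d n,
      (Icc c (c + lenSeq d (n + 1)) ∪
        Icc (c + lenSeq d (n + 1) + d n)
          (c + lenSeq d (n + 1) + d n + lenSeq d (n + 1))) := by
  have he := lenSeq_eq d n
  ext x
  simp only [stageE, ctrs, Finset.mem_union, Finset.mem_image, mem_iUnion, mem_Icc,
    mem_union, exists_prop]
  constructor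
  · rintro ⟨c, hc | ⟨b, hb, rfl⟩, h1, h2⟩
    · exact ⟨c, hc, Or.inl ⟨h1, h2⟩⟩
    · exact ⟨b, hb, Or.inr ⟨by linarith, by linarith⟩⟩
  · rintro ⟨c, hc, ⟨h1, h2⟩ | ⟨h1, h2⟩⟩
    · exact ⟨c, Or.inl hc, h1, h2⟩
    · exact ⟨c + (lenSeq d (n + 1) + d n), Or.inr ⟨c, hc, rfl⟩, by linarith, by linarith⟩

theorem removed_measure_and_crucial_inequality (d : ℕ → ℝ)
    (hd : ∀ n, 0 < d n ∧ d n < lenSeq d n) (n : ℕ) :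
    volume (removedA d n)
        = ENNReal.ofReal (d n / (2 * lenSeq d (n + 1))) * volume (stageE d (n + 1)) ∧
      (d n < lenSeq d (n + 1) → ∀ t : ℝ,
        ENNReal.ofReal ((lenSeq d (n + 1) - d n) / d n)
            * volume ({x | x - t ∈ stageE d (n + 1)} ∩ removedA d n)
          ≤ volume ({x | x - t ∈ stageE d (n + 1)} ∩ stageE d (n + 1))) := by
  have hk := (hd n).1
  have hl := lenSeq_pos d hd (n + 1)
  have hln := lenSeq_pos d hd n
  have he := lenSeq_eq d n
  set l := lenSeq d (n + 1) with hldef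
  set k := d n with hkdef
  have hbig : (↑(ctrs d n) : Set ℝ).Pairwise
      (Function.onFun (AEDisjoint volume) fun c => Icc c (c + lenSeq d n)) := by
    have := pairwise_aedisjoint_Icc d hd n 0
    simpa using this
  set N : ℝ → Set ℝ := fun c => Icc c (c + l) ∪ Icc (c + l + k) (c + l + k + l) with hN
  have hNsub : ∀ c, N c ⊆ Icc c (c + lenSeq d n) := by
    intro c x hx
    rcases hx with hx | hx
    · exact ⟨hx.1, by linarith [hx.2]⟩
    · exact ⟨by linarith [hx.1], by linarith [hx.2]⟩
  have hNpair : (↑(ctrs d n) : Set ℝ).Pairwise (Function.onFun (AEDisjoint volume) N) :=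
    hbig.imp fun c c' h => h.mono (hNsub c) (hNsub c')
  have hNmeas : ∀ c, MeasurableSet (N c) :=
    fun c => (measurableSet_Icc.union measurableSet_Icc)
  have hNvol : ∀ c, volume (N c) = ENNReal.ofReal (2 * l) := by
    intro c
    have hdisj : Disjoint (Icc c (c + l)) (Icc (c + l + k) (c + l + k + l)) := by
      rw [Set.disjoint_left]
      rintro x ⟨_, h2⟩ ⟨h3, _⟩
      linarith
    rw [hN]
    simp only
    rw [measure_union hdisj measurableSet_Icc, Real.volume_Icc, Real.volume_Icc,
      ← ENNReal.ofReal_add (by linarith) (by linarith)]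
    congr 1
    ring
  have hEvol : volume (stageE d (n + 1)) = ∑ c ∈ ctrs d n, ENNReal.ofReal (2 * l) := by
    rw [stageE_succ d n,
      measure_biUnion_finset₀ hNpair (fun c _ => (hNmeas c).nullMeasurableSet)]
    exact Finset.sum_congr rfl fun c _ => hNvol c
  have hApair : (↑(ctrs d n) : Set ℝ).Pairwise
      (Function.onFun (AEDisjoint volume) fun c => Ioo (c + l) (c + l + k)) := by
    refine hbig.imp fun c c' h => h.mono ?_ ?_ <;>
    · rintro x ⟨h1, h2⟩
      exact ⟨by linarith, by linarith⟩
  have hAvol : volume (removedA d n) = ∑ c ∈ ctrs d n, ENNReal.ofReal k := by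
    rw [removedA, measure_biUnion_finset₀ hApair
      (fun c _ => measurableSet_Ioo.nullMeasurableSet)]
    exact Finset.sum_congr rfl fun c _ => by rw [Real.volume_Ioo]; congr 1; ring
  constructor
  · rw [hAvol, hEvol, Finset.mul_sum]
    refine Finset.sum_congr rfl fun c _ => ?_
    rw [← ENNReal.ofReal_mul (by positivity)]
    congr 1
    field_simp
  · intro hkl t
    set F := {x : ℝ | x - t ∈ stageE d (n + 1)} with hF
    have hFrep : F = ⋃ c ∈ ctrs d (n + 1), Icc (c + t) (c + t + l) := by
      ext x
      simp only [hF, stageE, mem_setOf_eq, mem_iUnion, mem_Icc, exists_prop]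
      constructor
      · rintro ⟨c, hc, h1, h2⟩; exact ⟨c, hc, by linarith, by linarith⟩
      · rintro ⟨c, hc, h1, h2⟩; exact ⟨c, hc, by linarith, by linarith⟩
    have hEmeas : MeasurableSet (stageE d (n + 1)) :=
      MeasurableSet.biUnion (Finset.countable_toSet _) fun c _ => measurableSet_Icc
    have hJpair := pairwise_aedisjoint_Icc d hd (n + 1) t
    have hFE : volume (F ∩ stageE d (n + 1)) =
        ∑ c ∈ ctrs d (n + 1), volume (Icc (c + t) (c + t + l) ∩ stageE d (n + 1)) := by
      rw [hFrep, Set.iUnion₂_inter]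
      exact measure_biUnion_finset₀
        (hJpair.imp fun c c' h => h.mono inter_subset_left inter_subset_left)
        (fun c _ => (measurableSet_Icc.inter hEmeas).nullMeasurableSet)
    have hFA : volume (F ∩ removedA d n) ≤
        ∑ c' ∈ ctrs d (n + 1), ∑ c ∈ ctrs d n,
          volume (Icc (c' + t) (c' + t + l) ∩ Ioo (c + l) (c + l + k)) := by
      rw [hFrep, Set.iUnion₂_inter]
      refine le_trans (measure_biUnion_finset_le _ _) (Finset.sum_le_sum fun c' _ => ?_)
      rw [removedA, Set.inter_iUnion₂]
      exact measure_biUnion_finset_le _ _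
    have hperJ : ∀ t' : ℝ,
        ∑ c ∈ ctrs d n, (volume (Icc t' (t' + l) ∩ Icc c (c + l)) +
          volume (Icc t' (t' + l) ∩ Icc (c + l + k) (c + l + k + l))) ≤
        volume (Icc t' (t' + l) ∩ stageE d (n + 1)) := by
      intro t'
      have hsum : ∑ c ∈ ctrs d n, (volume (Icc t' (t' + l) ∩ Icc c (c + l)) +
          volume (Icc t' (t' + l) ∩ Icc (c + l + k) (c + l + k + l))) =
          ∑ c ∈ ctrs d n, volume (Icc t' (t' + l) ∩ N c) := by
        refine Finset.sum_congr rfl fun c _ => ?_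
        have hdisj : Disjoint (Icc t' (t' + l) ∩ Icc c (c + l))
            (Icc t' (t' + l) ∩ Icc (c + l + k) (c + l + k + l)) := by
          rw [Set.disjoint_left]
          rintro x ⟨_, _, h2⟩ ⟨_, h3, _⟩
          linarith
        have hNc : Icc t' (t' + l) ∩ N c =
            (Icc t' (t' + l) ∩ Icc c (c + l)) ∪
              (Icc t' (t' + l) ∩ Icc (c + l + k) (c + l + k + l)) := by
          rw [hN]
          simp only
          rw [Set.inter_union_distrib_left]
        rw [hNc, measure_union hdisj (measurableSet_Icc.inter measurableSet_Icc)]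
      rw [hsum]
      have heq : (⋃ c ∈ ctrs d n, Icc t' (t' + l) ∩ N c) ⊆
          Icc t' (t' + l) ∩ stageE d (n + 1) := by
        rw [stageE_succ d n, Set.inter_iUnion₂]
      calc ∑ c ∈ ctrs d n, volume (Icc t' (t' + l) ∩ N c)
          = volume (⋃ c ∈ ctrs d n, Icc t' (t' + l) ∩ N c) :=
            (measure_biUnion_finset₀
              (hNpair.imp fun c c' h => h.mono inter_subset_right inter_subset_right)
              (fun c _ => (measurableSet_Icc.inter (hNmeas c)).nullMeasurableSet)).symm
        _ ≤ volume (Icc t' (t' + l) ∩ stageE d (n + 1)) := measure_mono heq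
    calc ENNReal.ofReal ((l - k) / k) * volume (F ∩ removedA d n)
        ≤ ENNReal.ofReal ((l - k) / k) * ∑ c' ∈ ctrs d (n + 1), ∑ c ∈ ctrs d n,
            volume (Icc (c' + t) (c' + t + l) ∩ Ioo (c + l) (c + l + k)) :=
          mul_le_mul_right hFA _
      _ = ∑ c' ∈ ctrs d (n + 1), ∑ c ∈ ctrs d n,
            ENNReal.ofReal ((l - k) / k) *
              volume (Icc (c' + t) (c' + t + l) ∩ Ioo (c + l) (c + l + k)) := by
          rw [Finset.mul_sum]
          exact Finset.sum_congr rfl fun c' _ => Finset.mul_sum _ _ _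
      _ ≤ ∑ c' ∈ ctrs d (n + 1), ∑ c ∈ ctrs d n,
            (volume (Icc (c' + t) (c' + t + l) ∩ Icc c (c + l)) +
              volume (Icc (c' + t) (c' + t + l) ∩ Icc (c + l + k) (c + l + k + l))) := by
          refine Finset.sum_le_sum fun c' _ => Finset.sum_le_sum fun c _ => ?_
          have hco := core_enn l k (c' + t) (c + l) hk hkl
          have hgl : c + l - l = c := by ring
          rw [hgl] at hco
          exact hco
      _ ≤ ∑ c' ∈ ctrs d (n + 1),
            volume (Icc (c' + t) (c' + t + l) ∩ stageE d (n + 1)) :=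
          Finset.sum_le_sum fun c' _ => hperJ (c' + t)
      _ = volume (F ∩ stageE d (n + 1)) := hFE.symm
end
end
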